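/- arXiv:2105.08434 — 6 statements merged into one kernel-verified Lean document; each statement's English description precedes it below -/
import Mathlib

section
/- There exists exactly one function w ∈ C²(ℝ) satisfying −w''(z) + f'(w(z)) = 0 for all z ∈ ℝ, w(0) = 0, lim_{z→+∞} w(z) = 1 and lim_{z→−∞} w(z) = −1. -/
open Filter Topology Set

section Aux

lemma ode2_unique {f w₁ w₂ : ℝ → ℝ} (hdf : ContDiff ℝ 1 (deriv f))
    (h₁ : ContDiff ℝ 2 w₁) (h₂ : ContDiff ℝ 2 w₂)
    (o₁ : ∀ z, deriv (deriv w₁) z = deriv f (w₁ z))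
    (o₂ : ∀ z, deriv (deriv w₂) z = deriv f (w₂ z))
    {z₀ : ℝ} (e0 : w₁ z₀ = w₂ z₀) (e1 : deriv w₁ z₀ = deriv w₂ z₀) :
    w₁ = w₂ := by
  have two_eq : (2 : WithTop ℕ∞) = 1 + 1 := by norm_num
  have hd₁ : Differentiable ℝ w₁ := h₁.differentiable (by norm_num)
  have hd₂ : Differentiable ℝ w₂ := h₂.differentiable (by norm_num)
  have h₁' : ContDiff ℝ 1 (deriv w₁) := (contDiff_succ_iff_deriv.mp (two_eq ▸ h₁)).2.2
  have h₂' : ContDiff ℝ 1 (deriv w₂) := (contDiff_succ_iff_deriv.mp (two_eq ▸ h₂)).2.2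
  have hd₁' : Differentiable ℝ (deriv w₁) := h₁'.differentiable (by norm_num)
  have hd₂' : Differentiable ℝ (deriv w₂) := h₂'.differentiable (by norm_num)
  set G : ℝ × ℝ → ℝ × ℝ := fun p => (p.2, deriv f p.1) with hGdef
  have hG : ContDiff ℝ 1 G := contDiff_snd.prodMk (hdf.comp contDiff_fst)
  set v₁ : ℝ → ℝ × ℝ := fun z => (w₁ z, deriv w₁ z) with hv₁def
  set v₂ : ℝ → ℝ × ℝ := fun z => (w₂ z, deriv w₂ z) with hv₂def
  have hc₁ : Continuous v₁ := hd₁.continuous.prodMk hd₁'.continuous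
  have hc₂ : Continuous v₂ := hd₂.continuous.prodMk hd₂'.continuous
  have hv₁ : ∀ t, HasDerivAt v₁ (G (v₁ t)) t := by
    intro t
    have := ((hd₁ t).hasDerivAt.prodMk (hd₁' t).hasDerivAt)
    simpa [hGdef, o₁ t] using this
  have hv₂ : ∀ t, HasDerivAt v₂ (G (v₂ t)) t := by
    intro t
    have := ((hd₂ t).hasDerivAt.prodMk (hd₂' t).hasDerivAt)
    simpa [hGdef, o₂ t] using this
  have hS : {z | v₁ z = v₂ z} = univ := by
    apply IsClopen.eq_univ
    · constructor
      · exact isClosed_eq hc₁ hc₂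
      · rw [isOpen_iff_mem_nhds]
        intro z hz
        obtain ⟨K, t, ht, hlip⟩ := (hG.contDiffAt (x := v₁ z)).exists_lipschitzOnWith
        have hmem₁ : ∀ᶠ τ in 𝓝 z, v₁ τ ∈ t := hc₁.continuousAt.preimage_mem_nhds ht
        have hmem₂ : ∀ᶠ τ in 𝓝 z, v₂ τ ∈ t := by
          apply hc₂.continuousAt.preimage_mem_nhds
          rw [show v₂ z = v₁ z from hz.symm]; exact ht
        have := ODE_solution_unique_of_eventually
          (v := fun _ : ℝ => G) (s := fun _ : ℝ => t) (Eventually.of_forall fun _ => hlip)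
          (hmem₁.mono fun τ hτ => ⟨hv₁ τ, hτ⟩)
          (hmem₂.mono fun τ hτ => ⟨hv₂ τ, hτ⟩) hz
        exact this
    · exact ⟨z₀, by simp only [hv₁def, hv₂def, mem_setOf_eq]; rw [e0, e1]⟩
  funext z
  have : z ∈ {z | v₁ z = v₂ z} := hS ▸ mem_univ z
  exact congrArg Prod.fst this

end Aux

/-- There exists exactly one function `w ∈ C²(ℝ)` satisfying
`−w'' + f'(w) = 0` on `ℝ`, `w 0 = 0`, `w → 1` at `+∞` and `w → −1` at `−∞`,
where `f` is a smooth double-well potential. -/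
theorem optimal_profile_exists_unique
    (f : ℝ → ℝ) (hf : ContDiff ℝ (⊤ : ℕ∞) f)
    (hf'm : deriv f (-1) = 0) (hf'p : deriv f 1 = 0)
    (hf''m : 0 < deriv (deriv f) (-1)) (hf''p : 0 < deriv (deriv f) 1)
    (hfeq : f (-1) = f 1)
    (hfgt : ∀ r ∈ Set.Ioo (-1 : ℝ) 1, f 1 < f r) :
    ∃! w : ℝ → ℝ, ContDiff ℝ 2 w ∧
      (∀ z : ℝ, -deriv (deriv w) z + deriv f (w z) = 0) ∧
      w 0 = 0 ∧
      Tendsto w atTop (nhds 1) ∧ Tendsto w atBot (nhds (-1)) := by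
  -- ## Basic smoothness facts
  have two_eq : (2 : WithTop ℕ∞) = 1 + 1 := by norm_num
  have hfi : ContDiff ℝ (⊤ : ℕ∞) f := hf.of_le (by simp)
  have hfd : Differentiable ℝ f := hfi.differentiable (by simp)
  have hdf : ContDiff ℝ (⊤ : ℕ∞) (deriv f) := (contDiff_infty_iff_deriv.mp hfi).2
  have hdf1 : ContDiff ℝ 1 (deriv f) := hdf.of_le (by exact_mod_cast le_top)
  have hdfc : Continuous (deriv f) := hdf1.continuous
  have hddfc : Continuous (deriv (deriv f)) :=
    ((contDiff_infty_iff_deriv.mp hdf).2).continuous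
  have hdfd : Differentiable ℝ (deriv f) := hdf.differentiable (by simp)
  -- ## A bound on the second derivative on [-1,1]
  obtain ⟨M, hM, hMb⟩ : ∃ M : ℝ, 0 < M ∧ ∀ t ∈ Icc (-1:ℝ) 1, deriv (deriv f) t ≤ M := by
    obtain ⟨x, -, hx⟩ := isCompact_Icc.exists_isMaxOn (⟨0, by norm_num⟩ : (Icc (-1:ℝ) 1).Nonempty)
      hddfc.continuousOn
    exact ⟨max (deriv (deriv f) x) 1, lt_of_lt_of_le one_pos (le_max_right _ _),
      fun t ht => (hx ht).trans (le_max_left _ _)⟩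
  -- ## Quadratic upper bounds near the wells
  have keyp : ∀ t ∈ Icc (-1:ℝ) 1, f t - f 1 ≤ M/2 * (1-t)^2 := by
    set p : ℝ → ℝ := fun t => -(M*(1-t)) - deriv f t with hpdef
    have hp : ∀ t, HasDerivAt p (M - deriv (deriv f) t) t := by
      intro t
      have h1 : HasDerivAt (fun t : ℝ => -(M*(1-t))) M t := by
        have := (((hasDerivAt_id t).const_sub 1).const_mul M).neg
        exact this.congr_deriv (by ring)
      exact h1.sub (hdfd t).hasDerivAt
    have hpmono : MonotoneOn p (Icc (-1:ℝ) 1) := by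
      apply monotoneOn_of_deriv_nonneg (convex_Icc _ _)
      · exact fun t _ => (hp t).continuousAt.continuousWithinAt
      · exact fun t _ => (hp t).differentiableAt.differentiableWithinAt
      · intro t ht
        rw [interior_Icc] at ht
        rw [(hp t).deriv]
        have := hMb t (Ioo_subset_Icc_self ht)
        linarith
    have hple : ∀ t ∈ Icc (-1:ℝ) 1, p t ≤ 0 := by
      intro t ht
      have := hpmono ht (right_mem_Icc.mpr (by norm_num)) ht.2
      simpa [hpdef, hf'p] using this
    have hh : ∀ t, HasDerivAt (fun t => M/2*(1-t)^2 - (f t - f 1)) (p t) t := by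
      intro t
      have h1 := (((hasDerivAt_id t).const_sub 1).pow 2).const_mul (M/2)
      have h2 := ((hfd t).hasDerivAt).sub_const (f 1)
      have := h1.sub h2
      exact this.congr_deriv (by simp [hpdef]; ring)
    have hanti : AntitoneOn (fun t => M/2*(1-t)^2 - (f t - f 1)) (Icc (-1:ℝ) 1) := by
      apply antitoneOn_of_deriv_nonpos (convex_Icc _ _)
      · exact fun t _ => (hh t).continuousAt.continuousWithinAt
      · exact fun t _ => (hh t).differentiableAt.differentiableWithinAt
      · intro t ht
        rw [interior_Icc] at ht
        rw [(hh t).deriv]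
        exact hple t (Ioo_subset_Icc_self ht)
    intro t ht
    have := hanti ht (right_mem_Icc.mpr (by norm_num)) ht.2
    simp only [sub_self] at this
    nlinarith [this]
  have keym : ∀ t ∈ Icc (-1:ℝ) 1, f t - f 1 ≤ M/2 * (1+t)^2 := by
    set p : ℝ → ℝ := fun t => M*(1+t) - deriv f t with hpdef
    have hp : ∀ t, HasDerivAt p (M - deriv (deriv f) t) t := by
      intro t
      have h1 : HasDerivAt (fun t : ℝ => M*(1+t)) M t := by
        have := ((hasDerivAt_id t).const_add 1).const_mul M
        exact this.congr_deriv (by ring)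
      exact h1.sub (hdfd t).hasDerivAt
    have hpmono : MonotoneOn p (Icc (-1:ℝ) 1) := by
      apply monotoneOn_of_deriv_nonneg (convex_Icc _ _)
      · exact fun t _ => (hp t).continuousAt.continuousWithinAt
      · exact fun t _ => (hp t).differentiableAt.differentiableWithinAt
      · intro t ht
        rw [interior_Icc] at ht
        rw [(hp t).deriv]
        have := hMb t (Ioo_subset_Icc_self ht)
        linarith
    have hple : ∀ t ∈ Icc (-1:ℝ) 1, 0 ≤ p t := by
      intro t ht
      have := hpmono (left_mem_Icc.mpr (by norm_num)) ht ht.1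
      simpa [hpdef, hf'm] using this
    have hh : ∀ t, HasDerivAt (fun t => M/2*(1+t)^2 - (f t - f 1)) (p t) t := by
      intro t
      have h1 := (((hasDerivAt_id t).const_add 1).pow 2).const_mul (M/2)
      have h2 := ((hfd t).hasDerivAt).sub_const (f 1)
      have := h1.sub h2
      exact this.congr_deriv (by simp [hpdef]; ring)
    have hmono2 : MonotoneOn (fun t => M/2*(1+t)^2 - (f t - f 1)) (Icc (-1:ℝ) 1) := by
      apply monotoneOn_of_deriv_nonneg (convex_Icc _ _)
      · exact fun t _ => (hh t).continuousAt.continuousWithinAt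
      · exact fun t _ => (hh t).differentiableAt.differentiableWithinAt
      · intro t ht
        rw [interior_Icc] at ht
        rw [(hh t).deriv]
        exact hple t (Ioo_subset_Icc_self ht)
    intro t ht
    have := hmono2 (left_mem_Icc.mpr (by norm_num)) ht ht.1
    simp only [hfeq, sub_self] at this
    nlinarith [this]
  -- ## The function φ
  set φ : ℝ → ℝ := fun r => Real.sqrt (2 * (f r - f 1)) with hφdef
  have hφc : Continuous φ := Real.continuous_sqrt.comp
    (continuous_const.mul (hfd.continuous.sub continuous_const))
  have hφpos : ∀ r ∈ Ioo (-1:ℝ) 1, 0 < φ r := fun r hr =>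
    Real.sqrt_pos.mpr (by have := hfgt r hr; linarith)
  have hsM : 0 < Real.sqrt M := Real.sqrt_pos.mpr hM
  have hφboundp : ∀ t ∈ Icc (-1:ℝ) 1, φ t ≤ Real.sqrt M * (1 - t) := by
    intro t ht
    have h1 : φ t ≤ Real.sqrt (2 * (M/2 * (1-t)^2)) :=
      Real.sqrt_le_sqrt (by have := keyp t ht; linarith)
    have h2 : 2 * (M/2 * (1-t)^2) = M * (1-t)^2 := by ring
    calc φ t ≤ Real.sqrt (M * (1-t)^2) := by rwa [h2] at h1
      _ = Real.sqrt M * (1 - t) := by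
          rw [Real.sqrt_mul hM.le, Real.sqrt_sq (by linarith [ht.2] : (0:ℝ) ≤ 1 - t)]
  have hφboundm : ∀ t ∈ Icc (-1:ℝ) 1, φ t ≤ Real.sqrt M * (1 + t) := by
    intro t ht
    have h1 : φ t ≤ Real.sqrt (2 * (M/2 * (1+t)^2)) :=
      Real.sqrt_le_sqrt (by have := keym t ht; linarith)
    have h2 : 2 * (M/2 * (1+t)^2) = M * (1+t)^2 := by ring
    calc φ t ≤ Real.sqrt (M * (1+t)^2) := by rwa [h2] at h1
      _ = Real.sqrt M * (1 + t) := by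
          rw [Real.sqrt_mul hM.le, Real.sqrt_sq (by linarith [ht.1] : (0:ℝ) ≤ 1 + t)]
  -- ## The inverse profile g
  set ψ : ℝ → ℝ := fun t => (φ t)⁻¹ with hψdef
  set g : ℝ → ℝ := fun s => ∫ t in (0:ℝ)..s, ψ t with hgdef
  have hsub : ∀ {s : ℝ}, s ∈ Ioo (-1:ℝ) 1 → uIcc 0 s ⊆ Ioo (-1:ℝ) 1 := by
    intro s hs
    exact (Set.ordConnected_Ioo).uIcc_subset (by norm_num) hs
  have hψcont : ContinuousOn ψ (Ioo (-1:ℝ) 1) :=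
    hφc.continuousOn.inv₀ (fun r hr => (hφpos r hr).ne')
  have hgderiv : ∀ s ∈ Ioo (-1:ℝ) 1, HasDerivAt g ((φ s)⁻¹) s := by
    intro s hs
    have hint : IntervalIntegrable ψ MeasureTheory.volume 0 s :=
      (hψcont.mono (hsub hs)).intervalIntegrable
    exact intervalIntegral.integral_hasDerivAt_right hint
      (hψcont.stronglyMeasurableAtFilter isOpen_Ioo s hs)
      (hψcont.continuousAt (isOpen_Ioo.mem_nhds hs))
  have hgcont : ContinuousOn g (Ioo (-1:ℝ) 1) :=
    fun s hs => ((hgderiv s hs).continuousAt).continuousWithinAt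
  have hgmono : StrictMonoOn g (Ioo (-1:ℝ) 1) := by
    apply strictMonoOn_of_deriv_pos (convex_Ioo _ _) hgcont
    intro s hs
    rw [interior_Ioo] at hs
    rw [(hgderiv s hs).deriv]
    exact inv_pos.mpr (hφpos s hs)
  have hg0 : g 0 = 0 := intervalIntegral.integral_same
  -- ## divergence of g at the endpoints
  have hgtop : Tendsto g (nhdsWithin 1 (Iio 1)) atTop := by
    have key : ∀ s ∈ Ico (0:ℝ) 1,
        (Real.sqrt M)⁻¹ * (-Real.log (1 - s)) ≤ ∫ t in (0:ℝ)..s, (φ t)⁻¹ := by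
      intro s hs
      obtain ⟨hs1, hs2⟩ := hs
      have hIccsub : Icc (0:ℝ) s ⊆ Ioo (-1:ℝ) 1 :=
        fun x hx => ⟨by linarith [hx.1], lt_of_le_of_lt hx.2 hs2⟩
      have hint2 : ∀ t ∈ uIcc (0:ℝ) s,
          HasDerivAt (fun t => -((Real.sqrt M)⁻¹ * Real.log (1-t))) ((Real.sqrt M)⁻¹ * (1-t)⁻¹) t := by
        intro t ht
        rw [uIcc_of_le hs1] at ht
        have h1t : (0:ℝ) < 1 - t := by linarith [lt_of_le_of_lt ht.2 hs2]
        have h1 : HasDerivAt (fun t : ℝ => 1 - t) (-1) t := (hasDerivAt_id t).const_sub 1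
        have h2 := (Real.hasDerivAt_log h1t.ne').comp t h1
        have h3 := (h2.const_mul ((Real.sqrt M)⁻¹)).neg
        exact h3.congr_deriv (by ring)
      have hcont : ContinuousOn (fun t : ℝ => (Real.sqrt M)⁻¹ * (1-t)⁻¹) (uIcc (0:ℝ) s) := by
        apply ContinuousOn.mul continuousOn_const
        apply ContinuousOn.inv₀ ((continuous_const.sub continuous_id).continuousOn)
        intro t ht
        rw [uIcc_of_le hs1] at ht
        have : (0:ℝ) < 1 - t := by linarith [lt_of_le_of_lt ht.2 hs2]
        exact this.ne'
      have hintegrable : IntervalIntegrable (fun t : ℝ => (Real.sqrt M)⁻¹ * (1-t)⁻¹) MeasureTheory.volume 0 s :=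
        hcont.intervalIntegrable
      have hψint : IntervalIntegrable (fun t => (φ t)⁻¹) MeasureTheory.volume 0 s := by
        apply ContinuousOn.intervalIntegrable
        apply ContinuousOn.inv₀ hφc.continuousOn
        intro t ht
        rw [uIcc_of_le hs1] at ht
        exact (hφpos t (hIccsub ht)).ne'
      have heq : ∫ t in (0:ℝ)..s, (Real.sqrt M)⁻¹ * (1-t)⁻¹
          = (Real.sqrt M)⁻¹ * (-Real.log (1-s)) := by
        rw [intervalIntegral.integral_eq_sub_of_hasDerivAt hint2 hintegrable]
        simp
      have hmono : ∫ t in (0:ℝ)..s, (Real.sqrt M)⁻¹ * (1-t)⁻¹ ≤ ∫ t in (0:ℝ)..s, (φ t)⁻¹ := by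
        apply intervalIntegral.integral_mono_on hs1 hintegrable hψint
        intro t ht
        have hpos := hφpos t (hIccsub ht)
        have hb := hφboundp t ⟨by linarith [ht.1], by linarith [ht.2, hs2.le]⟩
        rw [← mul_inv]
        exact inv_anti₀ hpos hb
      linarith [heq ▸ hmono]
    have h1 : Tendsto (fun s : ℝ => 1 - s) (nhdsWithin 1 (Iio 1)) (nhdsWithin 0 (Ioi 0)) := by
      apply tendsto_nhdsWithin_of_tendsto_nhds_of_eventually_within
      · exact ((continuous_const.sub continuous_id).tendsto' 1 0 (by norm_num)).mono_left
          nhdsWithin_le_nhds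
      · filter_upwards [self_mem_nhdsWithin] with s hs
        exact mem_Ioi.mpr (sub_pos.mpr (mem_Iio.mp hs))
    have h2 : Tendsto (fun s : ℝ => Real.log (1 - s)) (nhdsWithin 1 (Iio 1)) atBot :=
      Real.tendsto_log_nhdsGT_zero.comp h1
    have h3 : Tendsto (fun s => (Real.sqrt M)⁻¹ * (-Real.log (1-s))) (nhdsWithin 1 (Iio 1)) atTop := by
      apply Tendsto.const_mul_atTop (inv_pos.mpr hsM)
      exact tendsto_neg_atBot_atTop.comp h2
    apply tendsto_atTop_mono' _ _ h3
    filter_upwards [Ioo_mem_nhdsLT_of_mem (show (1:ℝ) ∈ Ioc (0:ℝ) 1 by norm_num)] with s hs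
    exact key s (Ioo_subset_Ico_self hs)
  have hgbot : Tendsto g (nhdsWithin (-1) (Ioi (-1))) atBot := by
    have key : ∀ s ∈ Ioc (-1:ℝ) 0,
        (∫ t in (0:ℝ)..s, (φ t)⁻¹) ≤ (Real.sqrt M)⁻¹ * Real.log (1 + s) := by
      intro s hs
      obtain ⟨hs1, hs2⟩ := hs
      have hIccsub : Icc s (0:ℝ) ⊆ Ioo (-1:ℝ) 1 :=
        fun x hx => ⟨lt_of_lt_of_le hs1 hx.1, by linarith [hx.2]⟩
      have hint2 : ∀ t ∈ uIcc s (0:ℝ),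
          HasDerivAt (fun t => (Real.sqrt M)⁻¹ * Real.log (1+t)) ((Real.sqrt M)⁻¹ * (1+t)⁻¹) t := by
        intro t ht
        rw [uIcc_of_le hs2] at ht
        have h1t : (0:ℝ) < 1 + t := by linarith [lt_of_lt_of_le hs1 ht.1]
        have h1 : HasDerivAt (fun t : ℝ => 1 + t) 1 t := (hasDerivAt_id t).const_add 1
        have h2 := (Real.hasDerivAt_log h1t.ne').comp t h1
        have h3 := h2.const_mul ((Real.sqrt M)⁻¹)
        exact h3.congr_deriv (by ring)
      have hcont : ContinuousOn (fun t : ℝ => (Real.sqrt M)⁻¹ * (1+t)⁻¹) (uIcc s (0:ℝ)) := by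
        apply ContinuousOn.mul continuousOn_const
        apply ContinuousOn.inv₀ ((continuous_const.add continuous_id).continuousOn)
        intro t ht
        rw [uIcc_of_le hs2] at ht
        have : (0:ℝ) < 1 + t := by linarith [lt_of_lt_of_le hs1 ht.1]
        exact this.ne'
      have hintegrable : IntervalIntegrable (fun t : ℝ => (Real.sqrt M)⁻¹ * (1+t)⁻¹) MeasureTheory.volume s 0 :=
        hcont.intervalIntegrable
      have hψint : IntervalIntegrable (fun t => (φ t)⁻¹) MeasureTheory.volume s 0 := by
        apply ContinuousOn.intervalIntegrable
        apply ContinuousOn.inv₀ hφc.continuousOn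
        intro t ht
        rw [uIcc_of_le hs2] at ht
        exact (hφpos t (hIccsub ht)).ne'
      have heq : ∫ t in s..(0:ℝ), (Real.sqrt M)⁻¹ * (1+t)⁻¹
          = -((Real.sqrt M)⁻¹ * Real.log (1+s)) := by
        rw [intervalIntegral.integral_eq_sub_of_hasDerivAt hint2 hintegrable]
        simp
      have hmono : ∫ t in s..(0:ℝ), (Real.sqrt M)⁻¹ * (1+t)⁻¹ ≤ ∫ t in s..(0:ℝ), (φ t)⁻¹ := by
        apply intervalIntegral.integral_mono_on hs2 hintegrable hψint
        intro t ht
        have hpos := hφpos t (hIccsub ht)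
        have hb := hφboundm t ⟨by linarith [ht.1, hs1.le], by linarith [ht.2]⟩
        rw [← mul_inv]
        exact inv_anti₀ hpos hb
      rw [intervalIntegral.integral_symm s 0]
      linarith [heq ▸ hmono]
    have h1 : Tendsto (fun s : ℝ => 1 + s) (nhdsWithin (-1) (Ioi (-1))) (nhdsWithin 0 (Ioi 0)) := by
      apply tendsto_nhdsWithin_of_tendsto_nhds_of_eventually_within
      · exact ((continuous_const.add continuous_id).tendsto' (-1) 0 (by norm_num)).mono_left
          nhdsWithin_le_nhds
      · filter_upwards [self_mem_nhdsWithin] with s hs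
        exact mem_Ioi.mpr (by linarith [mem_Ioi.mp hs])
    have h2 : Tendsto (fun s : ℝ => Real.log (1 + s)) (nhdsWithin (-1) (Ioi (-1))) atBot :=
      Real.tendsto_log_nhdsGT_zero.comp h1
    have h3 : Tendsto (fun s => (Real.sqrt M)⁻¹ * Real.log (1+s)) (nhdsWithin (-1) (Ioi (-1))) atBot :=
      h2.const_mul_atBot (inv_pos.mpr hsM)
    apply tendsto_atBot_mono' _ _ h3
    filter_upwards [Ioo_mem_nhdsGT_of_mem (show (-1:ℝ) ∈ Ico (-1:ℝ) (0:ℝ) by norm_num)] with s hs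
    exact key s ⟨hs.1, hs.2.le⟩
  -- ## surjectivity and the inverse W
  have hsurj : ∀ y : ℝ, ∃ s ∈ Ioo (-1:ℝ) 1, g s = y := by
    intro y
    have h1 : ∀ᶠ s in nhdsWithin 1 (Iio 1), y < g s ∧ s ∈ Ioo (-1:ℝ) 1 := by
      filter_upwards [hgtop.eventually_gt_atTop y,
        Ioo_mem_nhdsLT_of_mem (show (1:ℝ) ∈ Ioc (-1:ℝ) 1 by norm_num)] with s h h' using ⟨h, h'⟩
    have h2 : ∀ᶠ s in nhdsWithin (-1) (Ioi (-1)), g s < y ∧ s ∈ Ioo (-1:ℝ) 1 := by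
      filter_upwards [hgbot.eventually_lt_atBot y,
        Ioo_mem_nhdsGT_of_mem (show (-1:ℝ) ∈ Ico (-1:ℝ) 1 by norm_num)] with s h h' using ⟨h, h'⟩
    obtain ⟨b, hyb, hb⟩ := h1.exists
    obtain ⟨a, hay, ha⟩ := h2.exists
    have hab : a < b := by
      by_contra hcon
      push_neg at hcon
      rcases eq_or_lt_of_le hcon with h | h
      · rw [← h] at hay; linarith
      · have := hgmono hb ha h; linarith
    have hIccsub : Icc a b ⊆ Ioo (-1:ℝ) 1 :=
      fun x hx => ⟨lt_of_lt_of_le ha.1 hx.1, lt_of_le_of_lt hx.2 hb.2⟩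
    have := intermediate_value_Icc hab.le (hgcont.mono hIccsub)
    obtain ⟨c, hc, hgc⟩ := this ⟨hay.le, hyb.le⟩
    exact ⟨c, hIccsub hc, hgc⟩
  set W : ℝ → ℝ := fun z => Function.invFunOn g (Ioo (-1:ℝ) 1) z with hWdef
  have hWmem : ∀ z, W z ∈ Ioo (-1:ℝ) 1 := fun z => Function.invFunOn_mem (hsurj z)
  have hgW : ∀ z, g (W z) = z := fun z => Function.invFunOn_eq (hsurj z)
  have hinj : InjOn g (Ioo (-1:ℝ) 1) := hgmono.injOn
  have hWg : ∀ s ∈ Ioo (-1:ℝ) 1, W (g s) = s := fun s hs => hinj (hWmem _) hs (hgW _)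
  have hW0 : W 0 = 0 := by
    have := hWg 0 (by norm_num)
    rwa [hg0] at this
  have hWmono : Monotone W := by
    intro z₁ z₂ h
    by_contra hcon
    push_neg at hcon
    have := hgmono (hWmem z₂) (hWmem z₁) hcon
    rw [hgW, hgW] at this
    linarith
  have hrange : range W = Ioo (-1:ℝ) 1 := by
    apply Subset.antisymm
    · rintro y ⟨z, rfl⟩; exact hWmem z
    · exact fun s hs => ⟨g s, hWg s hs⟩
  have hWcont : Continuous W := by
    rw [continuous_iff_continuousAt]
    intro z
    apply continuousAt_of_monotoneOn_of_image_mem_nhds (hWmono.monotoneOn univ) univ_mem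
    rw [image_univ, hrange]
    exact isOpen_Ioo.mem_nhds (hWmem z)
  have hWderiv : ∀ z, HasDerivAt W (φ (W z)) z := by
    intro z
    have h2 := (hgderiv (W z) (hWmem z)).of_local_left_inverse hWcont.continuousAt
      (inv_ne_zero (hφpos _ (hWmem z)).ne') (Eventually.of_forall hgW)
    simpa [inv_inv] using h2
  have hWd : Differentiable ℝ W := fun z => (hWderiv z).differentiableAt
  have hderivW : deriv W = fun z => φ (W z) := funext fun z => (hWderiv z).deriv
  have hφderiv : ∀ r ∈ Ioo (-1:ℝ) 1, HasDerivAt φ (deriv f r / φ r) r := by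
    intro r hr
    have h2F : HasDerivAt (fun r => 2 * (f r - f 1)) (2 * deriv f r) r :=
      (((hfd r).hasDerivAt).sub_const _).const_mul 2
    have hne : 2 * (f r - f 1) ≠ 0 := by have := hfgt r hr; intro h; nlinarith
    have hsq := (Real.hasDerivAt_sqrt hne).comp r h2F
    refine hsq.congr_deriv (Eq.symm ?_)
    rw [hφdef]
    field_simp
  have hW2deriv : ∀ z, HasDerivAt (deriv W) (deriv f (W z)) z := by
    intro z
    have h := (hφderiv (W z) (hWmem z)).comp z (hWderiv z)
    rw [hderivW]
    have h2 : deriv f (W z) / φ (W z) * φ (W z) = deriv f (W z) :=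
      div_mul_cancel₀ _ (hφpos _ (hWmem z)).ne'
    rw [← h2]
    exact h
  have hodeW : ∀ z, deriv (deriv W) z = deriv f (W z) := fun z => (hW2deriv z).deriv
  have hWC2 : ContDiff ℝ 2 W := by
    rw [two_eq, contDiff_succ_iff_deriv]
    refine ⟨hWd, by simp, ?_⟩
    rw [contDiff_one_iff_deriv]
    refine ⟨fun z => (hW2deriv z).differentiableAt, ?_⟩
    have h3 : deriv (deriv W) = fun z => deriv f (W z) := funext hodeW
    rw [h3]
    exact hdfc.comp hWcont
  have hWtop : Tendsto W atTop (nhds 1) := by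
    have hb : BddAbove (range W) := ⟨1, by rintro y ⟨z, rfl⟩; exact (hWmem z).2.le⟩
    have h := tendsto_atTop_ciSup hWmono hb
    have h2 : ⨆ z, W z = 1 := by
      rw [← csSup_Ioo (show (-1:ℝ) < 1 by norm_num), ← hrange]
      rfl
    rwa [h2] at h
  have hWbot : Tendsto W atBot (nhds (-1)) := by
    have hb : BddBelow (range W) := ⟨-1, by rintro y ⟨z, rfl⟩; exact (hWmem z).1.le⟩
    have h := tendsto_atBot_ciInf hWmono hb
    have h2 : ⨅ z, W z = -1 := by
      rw [← csInf_Ioo (show (-1:ℝ) < 1 by norm_num), ← hrange]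
      rfl
    rwa [h2] at h
  -- ## Conclusion
  refine ⟨W, ⟨hWC2, fun z => by rw [hodeW z]; ring, hW0, hWtop, hWbot⟩, ?_⟩
  rintro w ⟨hw2, hwode, hw0, hwtop, hwbot⟩
  have ode : ∀ z, deriv (deriv w) z = deriv f (w z) := fun z => by linarith [hwode z]
  have hwd : Differentiable ℝ w := hw2.differentiable (by norm_num)
  have hw1 : ContDiff ℝ 1 (deriv w) := (contDiff_succ_iff_deriv.mp (two_eq ▸ hw2)).2.2
  have hwd' : Differentiable ℝ (deriv w) := hw1.differentiable (by norm_num)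
  have hwc' : Continuous (deriv w) := hw1.continuous
  -- energy is constant
  have hE : ∀ z, (deriv w z)^2 - 2 * f (w z) = (deriv w 0)^2 - 2 * f (w 0) := by
    have hdiff : Differentiable ℝ (fun z => (deriv w z)^2 - 2 * f (w z)) :=
      (hwd'.pow 2).sub ((hfd.comp hwd).const_mul 2)
    have hzero : ∀ x, deriv (fun z => (deriv w z)^2 - 2 * f (w z)) x = 0 := by
      intro x
      have h1 : HasDerivAt (fun z => (deriv w z)^2) (2 * deriv w x ^ 1 * deriv (deriv w) x) x := by
        exact_mod_cast (hwd' x).hasDerivAt.pow 2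
      have h2 : HasDerivAt (fun z => 2 * f (w z)) (2 * (deriv f (w x) * deriv w x)) x := by
        exact ((hfd (w x)).hasDerivAt.comp x (hwd x).hasDerivAt).const_mul 2
      rw [show deriv (fun z => deriv w z ^ 2 - 2 * f (w z)) x = _ from (h1.sub h2).deriv, ode x]
      ring
    intro z
    exact is_const_of_deriv_eq_zero hdiff hzero z 0
  set c : ℝ := (deriv w 0)^2 - 2 * f (w 0) + 2 * f 1 with hcdef
  have hEc : ∀ z, (deriv w z)^2 = c + 2*(f (w z) - f 1) := by
    intro z
    have := hE z
    rw [hcdef]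
    linarith
  have hfw : Tendsto (fun z => f (w z)) atTop (nhds (f 1)) :=
    (hfd.continuous.tendsto 1).comp hwtop
  have htend : Tendsto (fun z => (deriv w z)^2) atTop (nhds c) := by
    have h : Tendsto (fun z => c + 2*(f (w z) - f 1)) atTop (nhds (c + 2*(f 1 - f 1))) :=
      tendsto_const_nhds.add ((hfw.sub_const (f 1)).const_mul 2)
    refine (tendsto_congr hEc).mpr ?_
    simpa using h
  have hc_nonneg : 0 ≤ c := ge_of_tendsto' htend (fun z => sq_nonneg _)
  have hc0 : c = 0 := by
    by_contra hne
    have hcpos : 0 < c := lt_of_le_of_ne hc_nonneg (Ne.symm hne)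
    set δ := Real.sqrt (c/2) with hδdef
    have hδ : 0 < δ := Real.sqrt_pos.mpr (by linarith)
    have h1 : ∀ᶠ z in atTop, c/2 < (deriv w z)^2 :=
      htend.eventually (eventually_gt_nhds (by linarith))
    have h2 : ∀ᶠ z in atTop, w z ∈ Ioo (0:ℝ) 2 :=
      hwtop.eventually (isOpen_Ioo.eventually_mem (by norm_num : (1:ℝ) ∈ Ioo 0 2))
    obtain ⟨Z, hZ⟩ := eventually_atTop.mp (h1.and h2)
    have hne0 : ∀ z, Z ≤ z → deriv w z ≠ 0 := by
      intro z hz h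
      have := (hZ z hz).1
      rw [h] at this
      norm_num at this
      linarith
    set z1 := Z + 2/δ with hz1def
    have hZz1 : Z < z1 := by
      have : 0 < 2/δ := by positivity
      rw [hz1def]; linarith
    obtain ⟨ξ, hξ, hslope⟩ := exists_hasDerivAt_eq_slope w (deriv w) hZz1
      (hwd.continuous.continuousOn) (fun x _ => (hwd x).hasDerivAt)
    have hξZ : Z ≤ ξ := hξ.1.le
    have hne' : z1 - Z ≠ 0 := by linarith
    have h5 : w z1 - w Z = deriv w ξ * (z1 - Z) := by
      field_simp at hslope
      linarith [hslope]
    have h6 : z1 - Z = 2/δ := by rw [hz1def]; ring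
    have hwZ := (hZ Z le_rfl).2
    have hwz1 := (hZ z1 hZz1.le).2
    have hmul : δ * (2/δ) = 2 := by field_simp
    rcases lt_or_gt_of_ne (hne0 Z le_rfl) with hneg | hpos
    · -- derivative negative on [Z, ∞)
      have hsign : ∀ z, Z ≤ z → deriv w z < 0 := by
        intro z hz
        rcases lt_or_gt_of_ne (hne0 z hz) with h | h
        · exact h
        · exfalso
          have h0mem : (0:ℝ) ∈ uIcc (deriv w Z) (deriv w z) :=
            mem_uIcc.mpr (Or.inl ⟨hneg.le, h.le⟩)
          obtain ⟨ζ, hζmem, hζ⟩ := intermediate_value_uIcc (hwc'.continuousOn) h0mem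
          rw [uIcc_of_le hz] at hζmem
          exact hne0 ζ hζmem.1 hζ
      have hle : deriv w ξ ≤ -δ := by
        have h := (hZ ξ hξZ).1
        have h7 : δ ≤ |deriv w ξ| := by
          rw [← Real.sqrt_sq_eq_abs]
          exact Real.sqrt_le_sqrt h.le
        rw [abs_of_neg (hsign ξ hξZ)] at h7
        linarith
      have hstep : deriv w ξ * (2/δ) ≤ -δ * (2/δ) :=
        mul_le_mul_of_nonneg_right hle (by positivity)
      have hval : -δ * (2/δ) = -2 := by field_simp
      have h5' : w z1 - w Z = deriv w ξ * (2/δ) := by rw [h5, h6]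
      linarith [hwz1.1, hwZ.2, h5', hstep, hval.le, hval.ge]
    · -- derivative positive on [Z, ∞)
      have hsign : ∀ z, Z ≤ z → 0 < deriv w z := by
        intro z hz
        rcases lt_or_gt_of_ne (hne0 z hz) with h | h
        · exfalso
          have h0mem : (0:ℝ) ∈ uIcc (deriv w Z) (deriv w z) :=
            mem_uIcc.mpr (Or.inr ⟨h.le, hpos.le⟩)
          obtain ⟨ζ, hζmem, hζ⟩ := intermediate_value_uIcc (hwc'.continuousOn) h0mem
          rw [uIcc_of_le hz] at hζmem
          exact hne0 ζ hζmem.1 hζ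
        · exact h
      have hge : δ ≤ deriv w ξ := by
        have h := (hZ ξ hξZ).1
        have h7 : δ ≤ |deriv w ξ| := by
          rw [← Real.sqrt_sq_eq_abs]
          exact Real.sqrt_le_sqrt h.le
        rwa [abs_of_pos (hsign ξ hξZ)] at h7
      have hstep : δ * (2/δ) ≤ deriv w ξ * (2/δ) :=
        mul_le_mul_of_nonneg_right hge (by positivity)
      have h5' : w z1 - w Z = deriv w ξ * (2/δ) := by rw [h5, h6]
      linarith [hwZ.1, hwz1.2, h5', hstep, hmul.le, hmul.ge]
  have Eid : ∀ z, (deriv w z)^2 = 2 * (f (w z) - f 1) := by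
    intro z
    have := hEc z
    rw [hc0] at this
    linarith
  -- w never touches ±1
  have hnot1 : ∀ z, w z ≠ 1 := by
    intro z h
    have h2 : (deriv w z)^2 = 0 := by rw [Eid z, h]; ring
    have hd0 : deriv w z = 0 := by
      exact sq_eq_zero_iff.mp h2
    have heq := ode2_unique hdf1 hw2 (contDiff_const (c := (1:ℝ))) ode
      (fun z' => by simp [hf'p]) (z₀ := z) (by simpa using h) (by simpa using hd0)
    have h0 := congrFun heq 0
    rw [hw0] at h0
    norm_num at h0
  have hnotm1 : ∀ z, w z ≠ -1 := by
    intro z h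
    have h2 : (deriv w z)^2 = 0 := by rw [Eid z, h, hfeq]; ring
    have hd0 : deriv w z = 0 := by
      exact sq_eq_zero_iff.mp h2
    have heq := ode2_unique hdf1 hw2 (contDiff_const (c := (-1:ℝ))) ode
      (fun z' => by simp [hf'm]) (z₀ := z) (by simpa using h) (by simpa using hd0)
    have h0 := congrFun heq 0
    rw [hw0] at h0
    norm_num at h0
  -- hence w stays in (-1, 1)
  have hmemIoo : ∀ z, w z ∈ Ioo (-1:ℝ) 1 := by
    intro z
    constructor
    · by_contra hcon
      push_neg at hcon
      have hlt : w z < -1 := lt_of_le_of_ne hcon (hnotm1 z)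
      have hmem : (-1:ℝ) ∈ uIcc (w 0) (w z) := by
        rw [hw0]
        exact mem_uIcc.mpr (Or.inr ⟨hlt.le, by norm_num⟩)
      obtain ⟨ζ, -, hζ⟩ := intermediate_value_uIcc (hwd.continuous.continuousOn) hmem
      exact hnotm1 ζ hζ
    · by_contra hcon
      push_neg at hcon
      have hgt : 1 < w z := lt_of_le_of_ne' hcon (hnot1 z)
      have hmem : (1:ℝ) ∈ uIcc (w 0) (w z) := by
        rw [hw0]
        exact mem_uIcc.mpr (Or.inl ⟨by norm_num, hgt.le⟩)
      obtain ⟨ζ, -, hζ⟩ := intermediate_value_uIcc (hwd.continuous.continuousOn) hmem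
      exact hnot1 ζ hζ
  -- the derivative of w never vanishes
  have hne0' : ∀ z, deriv w z ≠ 0 := by
    intro z h
    have := Eid z
    rw [h] at this
    have hgt := hfgt _ (hmemIoo z)
    nlinarith
  have hpos_some : ∃ ξ, 0 < deriv w ξ := by
    have h2 : ∀ᶠ z in atTop, 1/2 < w z := hwtop.eventually (eventually_gt_nhds (by norm_num))
    obtain ⟨Z, hZhalf, hZpos⟩ := (h2.and (eventually_gt_atTop 0)).exists
    obtain ⟨ξ, hξ, hslope⟩ := exists_hasDerivAt_eq_slope w (deriv w) hZpos
      (hwd.continuous.continuousOn) (fun x _ => (hwd x).hasDerivAt)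
    refine ⟨ξ, ?_⟩
    rw [hslope, hw0]
    apply div_pos <;> linarith
  have hderivpos : ∀ z, 0 < deriv w z := by
    obtain ⟨ξ₀, hξ₀⟩ := hpos_some
    intro z
    rcases lt_or_gt_of_ne (hne0' z) with h | h
    · exfalso
      have h0mem : (0:ℝ) ∈ uIcc (deriv w ξ₀) (deriv w z) :=
        mem_uIcc.mpr (Or.inr ⟨h.le, hξ₀.le⟩)
      obtain ⟨ζ, -, hζ⟩ := intermediate_value_uIcc (hwc'.continuousOn) h0mem
      exact hne0' ζ hζ
    · exact h
  -- matching initial data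
  have hw'0 : deriv w 0 = Real.sqrt (2 * (f 0 - f 1)) := by
    rw [← Real.sqrt_sq (hderivpos 0).le, Eid 0, hw0]
  have hW'0 : deriv W 0 = Real.sqrt (2 * (f 0 - f 1)) := by
    rw [hderivW]
    simp only [hW0]
    rfl
  exact ode2_unique hdf1 hw2 hWC2 ode hodeW (hw0.trans hW0.symm) (hw'0.trans hW'0.symm)
end

section
/- The unique C² solution θ₀ of −θ₀'' + f'(θ₀) = 0 on ℝ with θ₀(0) = 0 and lim_{z→±∞} θ₀(z) = ±1 is infinitely differentiable and satisfies θ₀'(z) = √(2(f(θ₀(z)) − f(−1))) and θ₀'(z) > 0 for all z ∈ ℝ. -/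
open Filter Topology
open scoped NNReal ENNReal

/-- The unique `C²` solution `θ₀` of `−θ₀'' + f'(θ₀) = 0` on `ℝ` with
`θ₀ 0 = 0` and `θ₀ → ±1` at `±∞` is smooth and satisfies
`θ₀' = √(2(f(θ₀) − f(−1)))` and `θ₀' > 0` everywhere. -/
theorem optimal_profile_properties
    (f : ℝ → ℝ) (hf : ContDiff ℝ (⊤ : ℕ∞) f)
    (hf'm : deriv f (-1) = 0) (hf'p : deriv f 1 = 0)
    (hf''m : 0 < deriv (deriv f) (-1)) (hf''p : 0 < deriv (deriv f) 1)
    (hfeq : f (-1) = f 1)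
    (hfgt : ∀ r ∈ Set.Ioo (-1 : ℝ) 1, f 1 < f r)
    (θ₀ : ℝ → ℝ) (hθ : ContDiff ℝ 2 θ₀)
    (hode : ∀ z : ℝ, -deriv (deriv θ₀) z + deriv f (θ₀ z) = 0)
    (hzero : θ₀ 0 = 0)
    (htop : Tendsto θ₀ atTop (nhds 1)) (hbot : Tendsto θ₀ atBot (nhds (-1))) :
    ContDiff ℝ (⊤ : ℕ∞) θ₀ ∧
    (∀ z : ℝ, deriv θ₀ z = Real.sqrt (2 * (f (θ₀ z) - f (-1)))) ∧
    (∀ z : ℝ, 0 < deriv θ₀ z) := by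
  -- basic differentiability facts
  have hθdiff : Differentiable ℝ θ₀ := hθ.differentiable (by norm_num)
  have hθ2 : ContDiff ℝ ((1 : ℕ) + 1) θ₀ := by exact_mod_cast hθ
  have hθ'cd : ContDiff ℝ (1 : ℕ) (deriv θ₀) := (contDiff_succ_iff_deriv.mp hθ2).2.2
  have hθ'diff : Differentiable ℝ (deriv θ₀) := hθ'cd.differentiable (by norm_num)
  have hθ'cont : Continuous (deriv θ₀) := hθ'diff.continuous
  have hfdiff : Differentiable ℝ f := hf.differentiable (by simp)
  have hfc : Continuous f := hfdiff.continuous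
  have hd2 : ∀ z, deriv (deriv θ₀) z = deriv f (θ₀ z) := fun z => by linarith [hode z]
  have hDθ : ∀ z, HasDerivAt θ₀ (deriv θ₀ z) z := fun z => (hθdiff z).hasDerivAt
  have hDθ' : ∀ z, HasDerivAt (deriv θ₀) (deriv f (θ₀ z)) z := fun z =>
    hd2 z ▸ (hθ'diff z).hasDerivAt
  -- energy conservation
  have hEd : ∀ z, HasDerivAt (fun w => (deriv θ₀ w)^2 - 2 * f (θ₀ w)) 0 z := by
    intro z
    have h1 : HasDerivAt (fun w => (deriv θ₀ w)^2)
        (2 * deriv θ₀ z * deriv f (θ₀ z)) z := by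
      have := (hDθ' z).pow 2
      norm_num at this
      exact this.congr_deriv (by ring)
    have h2 : HasDerivAt (fun w => f (θ₀ w)) (deriv f (θ₀ z) * deriv θ₀ z) z :=
      ((hfdiff (θ₀ z)).hasDerivAt).comp z (hDθ z)
    have h3 := h1.sub (h2.const_mul 2)
    exact h3.congr_deriv (by ring)
  have hEconst : ∀ x y : ℝ, (deriv θ₀ x)^2 - 2 * f (θ₀ x) = (deriv θ₀ y)^2 - 2 * f (θ₀ y) :=
    is_const_of_deriv_eq_zero (fun z => (hEd z).differentiableAt) (fun z => (hEd z).deriv)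
  have hsq : ∀ z, (deriv θ₀ z)^2 = 2 * f (θ₀ z) + ((deriv θ₀ 0)^2 - 2 * f (θ₀ 0)) := by
    intro z
    have := hEconst z 0
    linarith
  -- the energy constant is -2 f(1)
  have hKzero : 2 * f 1 + ((deriv θ₀ 0)^2 - 2 * f (θ₀ 0)) = 0 := by
    set Kc := (deriv θ₀ 0)^2 - 2 * f (θ₀ 0) with hKc
    by_contra hne
    have htend : Tendsto (fun z => (deriv θ₀ z)^2) atTop (𝓝 (2 * f 1 + Kc)) := by
      have h1 : Tendsto (fun z => 2 * f (θ₀ z) + Kc) atTop (𝓝 (2 * f 1 + Kc)) :=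
        (((hfc.tendsto 1).comp htop).const_mul 2).add_const Kc
      exact h1.congr fun z => (hsq z).symm
    have hc0 : 0 ≤ 2 * f 1 + Kc := ge_of_tendsto' htend fun z => sq_nonneg _
    have hcpos : 0 < 2 * f 1 + Kc := lt_of_le_of_ne hc0 (Ne.symm hne)
    have hev1 : ∀ᶠ w in atTop, (2 * f 1 + Kc)/2 < (deriv θ₀ w)^2 :=
      htend.eventually (eventually_gt_nhds (by linarith))
    obtain ⟨Z₁, hZ₁⟩ := eventually_atTop.mp hev1
    have hdiff0 : Tendsto (fun z => θ₀ (z+1) - θ₀ z) atTop (𝓝 0) := by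
      have h1 : Tendsto (fun z => θ₀ (z+1)) atTop (𝓝 1) :=
        htop.comp (tendsto_atTop_add_const_right _ 1 tendsto_id)
      simpa using h1.sub htop
    have hev2 : ∀ᶠ z in atTop, (θ₀ (z+1) - θ₀ z)^2 < (2 * f 1 + Kc)/2 := by
      have h2 : Tendsto (fun z => (θ₀ (z+1) - θ₀ z)^2) atTop (𝓝 0) := by
        have := hdiff0.pow 2
        simpa using this
      exact h2.eventually (eventually_lt_nhds (by linarith))
    obtain ⟨Z₂, hZ₂⟩ := eventually_atTop.mp hev2
    set z := max Z₁ Z₂ with hz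
    obtain ⟨ξ, hξmem, hξ⟩ := exists_deriv_eq_slope θ₀ (by linarith : z < z + 1)
      (hθdiff.continuous.continuousOn) (hθdiff.differentiableOn)
    have h3 : deriv θ₀ ξ = θ₀ (z+1) - θ₀ z := by
      rw [hξ]
      simp
    have h4 := hZ₁ ξ (le_of_lt (lt_of_le_of_lt (le_max_left _ _) hξmem.1))
    have h5 := hZ₂ z (le_max_right _ _)
    rw [h3] at h4
    linarith
  have hsq' : ∀ z, (deriv θ₀ z)^2 = 2 * (f (θ₀ z) - f (-1)) := by
    intro z
    have h1 := hsq z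
    rw [hfeq]
    linarith
  -- the derivative never vanishes: reflection + uniqueness argument
  have hne : ∀ z₀ : ℝ, deriv θ₀ z₀ ≠ 0 := by
    intro z₀ h0
    -- the vector field
    set V : ℝ × ℝ → ℝ × ℝ := fun p => (p.2, deriv f p.1) with hV
    have hf'inf : ContDiff ℝ (⊤ : ℕ∞) (deriv f) := (contDiff_infty_iff_deriv.mp hf).2
    have hf'cd : ContDiff ℝ (1 : ℕ) (deriv f) := hf'inf.of_le (by exact_mod_cast le_top)
    have hVcd : ContDiff ℝ (1 : ℕ) V := ContDiff.prodMk contDiff_snd (hf'cd.comp contDiff_fst)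
    have key : ∀ w, θ₀ w = θ₀ (2*z₀ - w) := by
      intro w
      set T : ℝ := |w - z₀| + 1 with hT
      have hT1 : 1 ≤ T := by linarith [abs_nonneg (w - z₀)]
      set a : ℝ := z₀ - T with ha
      set b : ℝ := z₀ + T with hb
      have hwmem : w ∈ Set.Icc a b := by
        constructor
        · linarith [neg_abs_le (w - z₀)]
        · linarith [le_abs_self (w - z₀)]
      set X : ℝ → ℝ × ℝ := fun z => (θ₀ z, deriv θ₀ z) with hX
      set Y : ℝ → ℝ × ℝ := fun z => (θ₀ (2*z₀ - z), -deriv θ₀ (2*z₀ - z)) with hY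
      have hXc : Continuous X := (hθdiff.continuous).prodMk hθ'cont
      have hrefl : Continuous (fun z : ℝ => 2*z₀ - z) := continuous_const.sub continuous_id
      have hYc : Continuous Y :=
        ((hθdiff.continuous.comp hrefl)).prodMk ((hθ'cont.comp hrefl).neg)
      obtain ⟨R, hR⟩ := (isCompact_Icc (a := a) (b := b)).exists_bound_of_continuousOn
        hXc.continuousOn
      have hreflmem : ∀ t ∈ Set.Icc a b, 2*z₀ - t ∈ Set.Icc a b := by
        intro t ht
        constructor
        · rw [ha]; linarith [ht.2, hb ▸ ht.2]
        · rw [hb]; linarith [ht.1, ha ▸ ht.1]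
      have hYbound : ∀ t ∈ Set.Icc a b, ‖Y t‖ ≤ R := by
        intro t ht
        have h1 : ‖Y t‖ = ‖X (2*z₀ - t)‖ := by
          simp [hY, hX, Prod.norm_def, norm_neg]
        rw [h1]
        exact hR _ (hreflmem t ht)
      set s : Set (ℝ × ℝ) := Metric.closedBall 0 R with hs
      have hfdC : Continuous (fderiv ℝ V) := hVcd.continuous_fderiv (by norm_num)
      obtain ⟨L, hL⟩ := (isCompact_closedBall (0 : ℝ × ℝ) R).exists_bound_of_continuousOn
        (hfdC.continuousOn)
      have hlip : LipschitzOnWith L.toNNReal V s := by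
        apply (convex_closedBall _ _).lipschitzOnWith_of_nnnorm_fderiv_le
          (fun x _ => (hVcd.differentiable (by norm_num)).differentiableAt)
        intro x hx
        rw [← norm_toNNReal]
        exact Real.toNNReal_le_toNNReal (hL x hx)
      have hXd : ∀ t ∈ Set.Ioo a b, HasDerivAt X (V (X t)) t := fun t _ =>
        (hDθ t).prodMk (hDθ' t)
      have hYd : ∀ t ∈ Set.Ioo a b, HasDerivAt Y (V (Y t)) t := by
        intro t _
        have i1 : HasDerivAt (fun z : ℝ => 2*z₀ - z) (-1) t := by
          simpa using (hasDerivAt_id t).const_sub (2*z₀)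
        have i2 : HasDerivAt (fun z => θ₀ (2*z₀ - z)) (deriv θ₀ (2*z₀ - t) * (-1)) t :=
          (hDθ (2*z₀ - t)).comp t i1
        have i3 : HasDerivAt (fun z => deriv θ₀ (2*z₀ - z))
            (deriv f (θ₀ (2*z₀ - t)) * (-1)) t :=
          (hDθ' (2*z₀ - t)).comp t i1
        have i4 := i3.neg
        rw [mul_neg_one] at i2
        rw [mul_neg_one, neg_neg] at i4
        exact i2.prodMk i4
      have hXs : ∀ t ∈ Set.Ioo a b, X t ∈ s := by
        intro t ht
        rw [hs, Metric.mem_closedBall, dist_zero_right]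
        exact hR t (Set.Ioo_subset_Icc_self ht)
      have hYs : ∀ t ∈ Set.Ioo a b, Y t ∈ s := by
        intro t ht
        rw [hs, Metric.mem_closedBall, dist_zero_right]
        exact hYbound t (Set.Ioo_subset_Icc_self ht)
      have hinit : X z₀ = Y z₀ := by
        have h1 : 2*z₀ - z₀ = z₀ := by ring
        rw [hX, hY]
        simp only [h1, h0, neg_zero]
      have heqon := ODE_solution_unique_of_mem_Icc (v := fun _ p => V p)
        (s := fun _ => s) (K := L.toNNReal) (fun _ _ => hlip)
        (⟨by rw [ha]; linarith, by rw [hb]; linarith⟩ : z₀ ∈ Set.Ioo a b)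
        hXc.continuousOn hXd hXs hYc.continuousOn hYd hYs hinit
      have := heqon hwmem
      exact congrArg Prod.fst this
    have hbot' : Tendsto θ₀ atBot (𝓝 1) := by
      have h1 : Tendsto (fun z : ℝ => 2*z₀ - z) atBot atTop := by
        have h2 : Tendsto (fun z : ℝ => 2*z₀ + -z) atBot atTop :=
          tendsto_atTop_add_const_left _ (2*z₀) tendsto_neg_atBot_atTop
        simpa [sub_eq_add_neg] using h2
      have h2 := htop.comp h1
      exact h2.congr fun z => (key z).symm
    have h12 : (1 : ℝ) = -1 := tendsto_nhds_unique hbot' hbot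
    norm_num at h12
  -- positivity of the derivative
  have hpos : ∀ z, 0 < deriv θ₀ z := by
    have hex : ∃ ξ, 0 < deriv θ₀ ξ := by
      obtain ⟨Z, hZ1, hZ2⟩ :=
        ((htop.eventually (eventually_gt_nhds (by norm_num : (1:ℝ)/2 < 1))).and
          (eventually_ge_atTop (1:ℝ))).exists
      obtain ⟨ξ, hξmem, hξ⟩ := exists_deriv_eq_slope θ₀ (by linarith : (0:ℝ) < Z)
        (hθdiff.continuous.continuousOn) (hθdiff.differentiableOn)
      refine ⟨ξ, ?_⟩
      rw [hξ, hzero, sub_zero, sub_zero]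
      positivity
    obtain ⟨ξ, hξ⟩ := hex
    intro z
    rcases lt_trichotomy 0 (deriv θ₀ z) with h | h | h
    · exact h
    · exact absurd h.symm (hne z)
    · exfalso
      have hmem : (0:ℝ) ∈ Set.uIcc (deriv θ₀ z) (deriv θ₀ ξ) :=
        Set.mem_uIcc.mpr (Or.inl ⟨h.le, hξ.le⟩)
      have hsub := intermediate_value_uIcc (f := deriv θ₀) (a := z) (b := ξ)
        (hθ'cont.continuousOn)
      obtain ⟨w, _, hw⟩ := hsub hmem
      exact hne w hw
  -- value of the derivative
  have hval : ∀ z, deriv θ₀ z = Real.sqrt (2 * (f (θ₀ z) - f (-1))) := by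
    intro z
    rw [← hsq' z, Real.sqrt_sq (hpos z).le]
  -- range of θ₀
  have hmono : StrictMono θ₀ := strictMono_of_deriv_pos hpos
  have hrange : ∀ z, θ₀ z ∈ Set.Ioo (-1:ℝ) 1 := by
    intro z
    constructor
    · have h1 : θ₀ (z-1) < θ₀ z := hmono (by linarith)
      have h2 : -1 ≤ θ₀ (z-1) := by
        apply le_of_tendsto hbot
        filter_upwards [eventually_le_atBot (z-1)] with w hw using hmono.monotone hw
      linarith
    · have h1 : θ₀ z < θ₀ (z+1) := hmono (by linarith)
      have h2 : θ₀ (z+1) ≤ 1 := by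
        apply ge_of_tendsto htop
        filter_upwards [eventually_ge_atTop (z+1)] with w hw using hmono.monotone hw
      linarith
  -- smoothness
  have hsmooth : ContDiff ℝ (⊤ : ℕ∞) θ₀ := by
    have hf'inf : ContDiff ℝ (⊤ : ℕ∞) (deriv f) := (contDiff_infty_iff_deriv.mp hf).2
    have hdd : deriv (deriv θ₀) = fun z => deriv f (θ₀ z) := funext hd2
    have key : ∀ n : ℕ, ContDiff ℝ n θ₀ ∧ ContDiff ℝ n (deriv θ₀) := by
      intro n
      induction n with
      | zero => exact ⟨contDiff_zero.mpr hθdiff.continuous, contDiff_zero.mpr hθ'cont⟩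
      | succ k ih =>
        refine ⟨?_, ?_⟩
        · rw [Nat.cast_succ]
          exact contDiff_succ_iff_deriv.mpr ⟨hθdiff, by simp, ih.2⟩
        · rw [Nat.cast_succ]
          refine contDiff_succ_iff_deriv.mpr ⟨hθ'diff, by simp, ?_⟩
          rw [hdd]
          exact (hf'inf.of_le (by exact_mod_cast le_top)).comp ih.1
    exact contDiff_infty.mpr fun n => (key n).1
  exact ⟨hsmooth, hval, hpos⟩
end

section
/- For every k ∈ ℕ₀ and every β with 0 < β < √(min{f''(−1), f''(1)}) there exists C > 0 such that |(d/dz)^k(θ₀(z) − 1)| ≤ C e^{−βz} for all z ≥ 0 and |(d/dz)^k(θ₀(z) + 1)| ≤ C e^{βz} for all z ≤ 0. -/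
open Filter Topology
open scoped ContDiff

/-- If `p' ≤ 0` on `[c,1]` and `p 1 = 0` then `p ≥ 0` on `[c,1]`. -/
lemma aux_nonneg_of_deriv_nonpos (p p' : ℝ → ℝ) (c : ℝ) (hc : c ≤ 1)
    (hp : ∀ u, HasDerivAt p (p' u) u)
    (hp' : ∀ u ∈ Set.Icc c 1, p' u ≤ 0)
    (hp1 : p 1 = 0) :
    ∀ u ∈ Set.Icc c 1, 0 ≤ p u := by
  have hanti : AntitoneOn p (Set.Icc c 1) := by
    apply antitoneOn_of_deriv_nonpos (convex_Icc c 1)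
    · exact fun x _ => (hp x).differentiableAt.continuousAt.continuousWithinAt
    · exact fun x hx => ((hp x).differentiableAt).differentiableWithinAt
    · intro x hx
      rw [(hp x).deriv]
      exact hp' x (interior_subset hx)
  intro u hu
  have := hanti hu (Set.right_mem_Icc.mpr hc) hu.2
  rw [hp1] at this
  exact this

/-- If `p'' ≥ 0` on `[c,1]` and `p' 1 = 0` then `p' ≤ 0` on `[c,1]`. -/
lemma aux_nonpos_of_deriv_nonneg (p p' : ℝ → ℝ) (c : ℝ) (hc : c ≤ 1)
    (hp : ∀ u, HasDerivAt p (p' u) u)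
    (hp' : ∀ u ∈ Set.Icc c 1, 0 ≤ p' u)
    (hp1 : p 1 = 0) :
    ∀ u ∈ Set.Icc c 1, p u ≤ 0 := by
  have hmono : MonotoneOn p (Set.Icc c 1) := by
    apply monotoneOn_of_deriv_nonneg (convex_Icc c 1)
    · exact fun x _ => (hp x).differentiableAt.continuousAt.continuousWithinAt
    · exact fun x hx => ((hp x).differentiableAt).differentiableWithinAt
    · intro x hx
      rw [(hp x).deriv]
      exact hp' x (interior_subset hx)
  intro u hu
  have := hmono hu (Set.right_mem_Icc.mpr hc) hu.2
  rw [hp1] at this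
  exact this

set_option maxHeartbeats 1000000 in
/-- One-sided decay statement: everything at `+∞`. -/
lemma one_side_decay
    (f : ℝ → ℝ) (hf : ContDiff ℝ ∞ f)
    (hf'p : deriv f 1 = 0)
    (hfeq : f (-1) = f 1)
    (θ₀ : ℝ → ℝ) (hθsm : ContDiff ℝ ∞ θ₀)
    (hode : ∀ z : ℝ, -deriv (deriv θ₀) z + deriv f (θ₀ z) = 0)
    (hzero : θ₀ 0 = 0)
    (htop : Tendsto θ₀ atTop (nhds 1)) (hbot : Tendsto θ₀ atBot (nhds (-1)))
    (hθ' : ∀ z : ℝ, deriv θ₀ z = Real.sqrt (2 * (f (θ₀ z) - f (-1))))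
    (hθ'pos : ∀ z : ℝ, 0 < deriv θ₀ z)
    (k : ℕ) (β : ℝ) (hβ : 0 < β) (hβ2 : β ^ 2 < deriv (deriv f) 1) :
    ∃ C > (0:ℝ), ∀ z : ℝ, 0 ≤ z →
      |iteratedDeriv k (fun y => θ₀ y - 1) z| ≤ C * Real.exp (-β * z) := by
  -- basic smoothness
  have hfd : Differentiable ℝ f := hf.differentiable (by norm_num)
  have hf' : ContDiff ℝ ∞ (deriv f) := (contDiff_infty_iff_deriv.mp hf).2
  have hf'd : Differentiable ℝ (deriv f) := hf'.differentiable (by norm_num)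
  have hf'' : ContDiff ℝ ∞ (deriv (deriv f)) := (contDiff_infty_iff_deriv.mp hf').2
  have hθd : Differentiable ℝ θ₀ := hθsm.differentiable (by norm_num)
  -- monotonicity and range facts
  have hmono : StrictMono θ₀ := strictMono_of_deriv_pos hθ'pos
  have hlt1 : ∀ z, θ₀ z < 1 := by
    intro z
    have h1 : θ₀ (z + 1) ≤ 1 := hmono.monotone.ge_of_tendsto htop (z + 1)
    have := hmono (lt_add_one z)
    linarith
  have hgtm1 : ∀ z, -1 < θ₀ z := by
    intro z
    have h1 : -1 ≤ θ₀ (z - 1) := hmono.monotone.le_of_tendsto hbot (z - 1)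
    have := hmono (sub_one_lt z)
    linarith
  have hmem : ∀ z, θ₀ z ∈ Set.Icc (-1 : ℝ) 1 := fun z => ⟨(hgtm1 z).le, (hlt1 z).le⟩
  have hθnn : ∀ z, 0 ≤ z → 0 ≤ θ₀ z := by
    intro z hz
    rw [← hzero]
    exact hmono.monotone hz
  -- rewrite θ₀' using f 1
  have hθ'1 : ∀ z, deriv θ₀ z = Real.sqrt (2 * (f (θ₀ z) - f 1)) := by
    intro z; rw [hθ' z, hfeq]
  have hlin : ∀ u : ℝ, HasDerivAt (fun u : ℝ => 1 - u) (-1) u := by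
    intro u; simpa using (hasDerivAt_id u).const_sub 1
  -- Taylor-type inequality near 1
  have hq2cont : Continuous (fun u => 2 * deriv (deriv f) u - 2 * β ^ 2) := by
    exact (hf''.continuous.const_smul (2:ℝ)).sub continuous_const
  have hq2pos : (0:ℝ) < 2 * deriv (deriv f) 1 - 2 * β ^ 2 := by linarith
  have hev : ∀ᶠ u in 𝓝 (1:ℝ), 0 < 2 * deriv (deriv f) u - 2 * β ^ 2 :=
    (hq2cont.continuousAt).eventually_const_lt hq2pos
  obtain ⟨δ, hδpos, hball⟩ := Metric.eventually_nhds_iff.mp hev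
  set c : ℝ := max (1 - δ / 2) 0 with hc
  have hc0 : 0 ≤ c := le_max_right _ _
  have hclt1 : c < 1 := by
    apply max_lt _ one_pos
    linarith
  have hcmem : ∀ u ∈ Set.Icc c 1, 0 < 2 * deriv (deriv f) u - 2 * β ^ 2 := by
    intro u hu
    apply hball
    rw [Real.dist_eq, abs_sub_lt_iff]
    constructor
    · linarith [hu.2]
    · have : 1 - δ / 2 ≤ c := le_max_left _ _
      have := hu.1
      linarith
  have hdq1 : ∀ u, HasDerivAt (fun u => 2 * deriv f u + 2 * β ^ 2 * (1 - u))
      (2 * deriv (deriv f) u - 2 * β ^ 2) u := by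
    intro u
    have h1 := ((hf'd u).hasDerivAt.const_mul (2:ℝ)).add ((hlin u).const_mul (2 * β ^ 2))
    exact h1.congr_deriv (by ring)
  have hq1np : ∀ u ∈ Set.Icc c 1, 2 * deriv f u + 2 * β ^ 2 * (1 - u) ≤ 0 := by
    apply aux_nonpos_of_deriv_nonneg _ (fun u => 2 * deriv (deriv f) u - 2 * β ^ 2) c hclt1.le hdq1
    · exact fun u hu => (hcmem u hu).le
    · simp [hf'p]
  have hdq : ∀ u, HasDerivAt (fun u => 2 * (f u - f 1) - β ^ 2 * (1 - u) ^ 2)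
      (2 * deriv f u + 2 * β ^ 2 * (1 - u)) u := by
    intro u
    have h1 := (((hfd u).hasDerivAt.sub_const (f 1)).const_mul (2:ℝ)).sub
      (((hlin u).pow 2).const_mul (β ^ 2))
    exact h1.congr_deriv (by push_cast; ring)
  have hqpos : ∀ u ∈ Set.Icc c 1, β ^ 2 * (1 - u) ^ 2 ≤ 2 * (f u - f 1) := by
    intro u hu
    have h0 := aux_nonneg_of_deriv_nonpos _ _ c hclt1.le hdq hq1np (by simp) u hu
    linarith
  -- pick z₀ beyond which θ₀ ≥ c
  have hev2 : ∀ᶠ z in atTop, c < θ₀ z := htop.eventually_const_lt hclt1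
  obtain ⟨z₀', hz₀'⟩ := eventually_atTop.mp hev2
  set z₀ : ℝ := max z₀' 0 with hz₀def
  have hz₀0 : 0 ≤ z₀ := le_max_right _ _
  -- differential inequality
  have hlow : ∀ z, z₀ ≤ z → β * (1 - θ₀ z) ≤ deriv θ₀ z := by
    intro z hz
    have hcz : c ≤ θ₀ z := (hz₀' z (le_trans (le_max_left _ _) hz)).le
    have hq := hqpos (θ₀ z) ⟨hcz, (hlt1 z).le⟩
    rw [hθ'1 z]
    have h1 : β * (1 - θ₀ z) = Real.sqrt ((β * (1 - θ₀ z)) ^ 2) := by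
      rw [Real.sqrt_sq (by nlinarith [hlt1 z])]
    rw [h1]
    apply Real.sqrt_le_sqrt
    nlinarith
  -- the function e^{βz}(1-θ₀ z) is antitone on [z₀, ∞)
  have hGd : ∀ z, HasDerivAt (fun z => Real.exp (β * z) * (1 - θ₀ z))
      (Real.exp (β * z) * (β * (1 - θ₀ z) - deriv θ₀ z)) z := by
    intro z
    have he : HasDerivAt (fun z : ℝ => Real.exp (β * z)) (Real.exp (β * z) * β) z := by
      simpa using ((hasDerivAt_id z).const_mul β).exp
    have hθz : HasDerivAt (fun z => 1 - θ₀ z) (-(deriv θ₀ z)) z := (hθd z).hasDerivAt.const_sub 1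
    exact (he.mul hθz).congr_deriv (by ring)
  have hanti : AntitoneOn (fun z => Real.exp (β * z) * (1 - θ₀ z)) (Set.Ici z₀) := by
    apply antitoneOn_of_deriv_nonpos (convex_Ici z₀)
    · exact fun x _ => (hGd x).differentiableAt.continuousAt.continuousWithinAt
    · exact fun x _ => (hGd x).differentiableAt.differentiableWithinAt
    · intro x hx
      rw [interior_Ici] at hx
      rw [(hGd x).deriv]
      have := hlow x (le_of_lt hx)
      have hexp := Real.exp_pos (β * x)
      nlinarith
  set C₀ : ℝ := Real.exp (β * z₀) with hC₀def
  have hC₀pos : 0 < C₀ := Real.exp_pos _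
  have hbase : ∀ z, 0 ≤ z → 1 - θ₀ z ≤ C₀ * Real.exp (-β * z) := by
    intro z hz
    have hexpz := Real.exp_pos (β * z)
    have hkey : Real.exp (β * z) * (1 - θ₀ z) ≤ C₀ := by
      rcases le_or_gt z₀ z with h | h
      · have h1 := hanti (Set.self_mem_Ici) (Set.mem_Ici.mpr h) h
        have h2 : 1 - θ₀ z₀ ≤ 1 := by linarith [hθnn z₀ hz₀0]
        have h3 := Real.exp_pos (β * z₀)
        calc Real.exp (β * z) * (1 - θ₀ z) ≤ Real.exp (β * z₀) * (1 - θ₀ z₀) := h1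
          _ ≤ C₀ := by nlinarith
      · have h2 : 1 - θ₀ z ≤ 1 := by linarith [hθnn z hz]
        have h3 : Real.exp (β * z) ≤ C₀ := by
          apply Real.exp_le_exp.mpr
          nlinarith
        nlinarith [(Real.exp_pos (β * z)).le, hlt1 z]
    have : Real.exp (-β * z) = (Real.exp (β * z))⁻¹ := by
      rw [← Real.exp_neg]; ring_nf
    rw [this]
    calc 1 - θ₀ z = Real.exp (β * z) * (1 - θ₀ z) * (Real.exp (β * z))⁻¹ := by
          field_simp
      _ ≤ C₀ * (Real.exp (β * z))⁻¹ :=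
          mul_le_mul_of_nonneg_right hkey (inv_pos.mpr hexpz).le
  -- bound on f'' over [-1,1]
  obtain ⟨K, hK⟩ := isCompact_Icc.exists_bound_of_continuousOn
    (hf''.continuous.continuousOn (s := Set.Icc (-1:ℝ) 1))
  set K' : ℝ := max K 1 with hK'def
  have hK'1 : (1:ℝ) ≤ K' := le_max_right _ _
  have hK'pos : (0:ℝ) < K' := lt_of_lt_of_le one_pos hK'1
  have hKK : ∀ u ∈ Set.Icc (-1:ℝ) 1, |deriv (deriv f) u| ≤ K' := by
    intro u hu
    exact le_trans (hK u hu) (le_max_left _ _)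
  -- |f'(u)| ≤ K'(1-u) on [-1,1]
  have hf'ub : ∀ u ∈ Set.Icc (-1:ℝ) 1, |deriv f u| ≤ K' * (1 - u) := by
    have hs : ∀ u ∈ Set.Icc (-1:ℝ) 1, 0 ≤ K' * (1 - u) - deriv f u := by
      apply aux_nonneg_of_deriv_nonpos _ (fun u => -K' - deriv (deriv f) u) (-1) (by norm_num)
      · intro u
        have h1 := ((hlin u).const_mul K').sub (hf'd u).hasDerivAt
        exact h1.congr_deriv (by ring)
      · intro u hu
        have := (abs_le.mp (hKK u hu)).1
        linarith
      · simp [hf'p]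
    have ht : ∀ u ∈ Set.Icc (-1:ℝ) 1, 0 ≤ K' * (1 - u) + deriv f u := by
      apply aux_nonneg_of_deriv_nonpos _ (fun u => -K' + deriv (deriv f) u) (-1) (by norm_num)
      · intro u
        have h1 := ((hlin u).const_mul K').add (hf'd u).hasDerivAt
        exact h1.congr_deriv (by ring)
      · intro u hu
        have := (abs_le.mp (hKK u hu)).2
        linarith
      · simp [hf'p]
    intro u hu
    rw [abs_le]
    constructor
    · linarith [ht u hu]
    · linarith [hs u hu]
  -- 2(f u - f 1) ≤ K'(1-u)² on [-1,1]
  have h2f : ∀ u ∈ Set.Icc (-1:ℝ) 1, 2 * (f u - f 1) ≤ K' * (1 - u) ^ 2 := by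
    have hp : ∀ u ∈ Set.Icc (-1:ℝ) 1, 0 ≤ K' * (1 - u) ^ 2 - 2 * (f u - f 1) := by
      apply aux_nonneg_of_deriv_nonpos _
        (fun u => -(2 * K') * (1 - u) - 2 * deriv f u) (-1) (by norm_num)
      · intro u
        have h1 := (((hlin u).pow 2).const_mul K').sub
          (((hfd u).hasDerivAt.sub_const (f 1)).const_mul (2:ℝ))
        exact h1.congr_deriv (by push_cast; ring)
      · intro u hu
        have h2 := (abs_le.mp (hf'ub u hu)).1
        have h3 : (0:ℝ) ≤ 1 - u := by linarith [hu.2]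
        nlinarith
      · simp
    intro u hu
    linarith [hp u hu]
  -- order-1 bound
  have hord1 : ∀ z, 0 ≤ z → |deriv θ₀ z| ≤ Real.sqrt K' * C₀ * Real.exp (-β * z) := by
    intro z hz
    have h1 : (0:ℝ) ≤ 1 - θ₀ z := by linarith [hlt1 z]
    have h2 : deriv θ₀ z ≤ Real.sqrt K' * (1 - θ₀ z) := by
      rw [hθ'1 z]
      have h3 : Real.sqrt K' * (1 - θ₀ z) = Real.sqrt (K' * (1 - θ₀ z) ^ 2) := by
        rw [Real.sqrt_mul hK'pos.le, Real.sqrt_sq h1]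
      rw [h3]
      exact Real.sqrt_le_sqrt (h2f (θ₀ z) (hmem z))
    rw [abs_of_pos (hθ'pos z)]
    have h4 := hbase z hz
    have h5 : Real.sqrt K' ≥ 1 := by
      rw [show (1:ℝ) = Real.sqrt 1 by simp]
      exact Real.sqrt_le_sqrt hK'1
    nlinarith
  -- order-2 bound
  have hdd : deriv (deriv θ₀) = fun w => deriv f (θ₀ w) := by
    funext w
    have := hode w
    linarith
  have hord2 : ∀ z, 0 ≤ z → |deriv (deriv θ₀) z| ≤ K' * C₀ * Real.exp (-β * z) := by
    intro z hz
    rw [hdd]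
    have h1 := hf'ub (θ₀ z) (hmem z)
    have h2 := hbase z hz
    have h3 : (0:ℝ) ≤ 1 - θ₀ z := by linarith [hlt1 z]
    calc |deriv f (θ₀ z)| ≤ K' * (1 - θ₀ z) := h1
      _ ≤ K' * (C₀ * Real.exp (-β * z)) := by nlinarith
      _ = K' * C₀ * Real.exp (-β * z) := by ring
  -- smoothness of deriv θ₀ etc.
  have hθinf : ContDiff ℝ ∞ θ₀ := hθsm
  -- main induction: all orders 1..n bounded
  have main : ∀ n : ℕ, ∃ C, 0 < C ∧ ∀ i, 1 ≤ i → i ≤ n → ∀ z, 0 ≤ z →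
      |iteratedDeriv i θ₀ z| ≤ C * Real.exp (-β * z) := by
    intro n
    induction n with
    | zero => exact ⟨1, one_pos, fun i h1 h0 => by omega⟩
    | succ n ih =>
      obtain ⟨C, hCpos, hC⟩ := ih
      have hnew : ∃ C' > (0:ℝ), ∀ z, 0 ≤ z →
          |iteratedDeriv (n + 1) θ₀ z| ≤ C' * Real.exp (-β * z) := by
        match n with
        | 0 =>
          refine ⟨Real.sqrt K' * C₀, by positivity, fun z hz => ?_⟩
          rw [iteratedDeriv_one]
          exact hord1 z hz
        | 1 =>
          refine ⟨K' * C₀, by positivity, fun z hz => ?_⟩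
          have h2 : iteratedDeriv 2 θ₀ = deriv (deriv θ₀) := by
            rw [show (2:ℕ) = 1 + 1 from rfl, iteratedDeriv_succ', iteratedDeriv_one]
          rw [h2]
          exact hord2 z hz
        | (m + 2) =>
          -- order m+3 = (m+1)+2 : iteratedDeriv (m+1) of f' ∘ θ₀
          set m' : ℕ := m + 1 with hm'def
          have hm'1 : 1 ≤ m' := Nat.le_add_left 1 m
          have hiter : iteratedDeriv (m + 3) θ₀ = iteratedDeriv m' (deriv f ∘ θ₀) := by
            rw [show m + 3 = (m' + 1) + 1 from rfl, iteratedDeriv_succ', iteratedDeriv_succ', hdd]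
            rfl
          -- uniform bound on derivatives of deriv f over [-1,1]
          have hCi : ∀ i : ℕ, ∃ Ci : ℝ, ∀ u ∈ Set.Icc (-1:ℝ) 1,
              ‖iteratedFDeriv ℝ i (deriv f) u‖ ≤ Ci := by
            intro i
            exact isCompact_Icc.exists_bound_of_continuousOn
              ((hf'.continuous_iteratedFDeriv (by exact_mod_cast le_top)).continuousOn)
          choose Ci hCi using hCi
          have hne : (Finset.range (m' + 1)).Nonempty := Finset.nonempty_range_iff.mpr (by omega)
          set Cg : ℝ := (Finset.range (m' + 1)).sup' hne Ci with hCgdef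
          have hCg : ∀ i, i ≤ m' → Ci i ≤ Cg := fun i hi =>
            Finset.le_sup' Ci (Finset.mem_range.mpr (by omega))
          have hCg0 : 0 ≤ Cg :=
            le_trans (norm_nonneg (iteratedFDeriv ℝ 0 (deriv f) (θ₀ 0)))
              (le_trans (hCi 0 (θ₀ 0) (hmem 0)) (hCg 0 (by omega)))
          refine ⟨((Nat.factorial m' : ℕ) : ℝ) * Cg * (max C 1) ^ m' + 1, by positivity, fun z hz => ?_⟩
          rw [hiter]
          have hm'pos : (0:ℝ) < (m' : ℝ) := by exact_mod_cast Nat.lt_of_lt_of_le Nat.zero_lt_one hm'1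
          set D : ℝ := max C 1 * Real.exp (-β * z / m') with hDdef
          have hDbound : ∀ i, 1 ≤ i → i ≤ m' → ‖iteratedFDeriv ℝ i θ₀ z‖ ≤ D ^ i := by
            intro i hi1 him
            rw [norm_iteratedFDeriv_eq_norm_iteratedDeriv, Real.norm_eq_abs]
            have h1 := hC i hi1 (by omega) z hz
            have h2 : D ^ i = (max C 1) ^ i * Real.exp ((i : ℝ) * (-β * z / m')) := by
              rw [hDdef, mul_pow, ← Real.exp_nat_mul]
            rw [h2]
            have h3 : C ≤ (max C 1) ^ i := by
              calc C ≤ max C 1 := le_max_left _ _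
                _ ≤ (max C 1) ^ i := le_self_pow₀ (le_max_right _ _) (by omega)
            have h4 : Real.exp (-β * z) ≤ Real.exp ((i : ℝ) * (-β * z / m')) := by
              rw [Real.exp_le_exp]
              have hi' : (i : ℝ) ≤ (m' : ℝ) := by exact_mod_cast him
              have heq : (i : ℝ) * (-β * z / m') = -((i / m') * (β * z)) := by
                field_simp
              rw [heq]
              have h5 : (i / (m':ℝ)) * (β * z) ≤ 1 * (β * z) :=
                mul_le_mul_of_nonneg_right ((div_le_one hm'pos).mpr hi') (by positivity)
              linarith
            calc |iteratedDeriv i θ₀ z| ≤ C * Real.exp (-β * z) := h1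
              _ ≤ (max C 1) ^ i * Real.exp ((i : ℝ) * (-β * z / m')) := by
                  apply mul_le_mul h3 h4 (Real.exp_pos _).le
                  positivity
          have hCbound : ∀ i, i ≤ m' → ‖iteratedFDeriv ℝ i (deriv f) (θ₀ z)‖ ≤ Cg :=
            fun i hi => le_trans (hCi i (θ₀ z) (hmem z)) (hCg i hi)
          have hcomp := norm_iteratedFDeriv_comp_le (𝕜 := ℝ) (n := m') (N := (⊤:ℕ∞))
            hf' hθinf (by exact_mod_cast le_top) z hCbound hDbound
          have hDm : D ^ m' = (max C 1) ^ m' * Real.exp (-β * z) := by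
            rw [hDdef, mul_pow, ← Real.exp_nat_mul]
            congr 1
            field_simp
          rw [hDm] at hcomp
          rw [← Real.norm_eq_abs, ← norm_iteratedFDeriv_eq_norm_iteratedDeriv]
          calc ‖iteratedFDeriv ℝ m' (deriv f ∘ θ₀) z‖
              ≤ ((Nat.factorial m' : ℕ) : ℝ) * Cg * ((max C 1) ^ m' * Real.exp (-β * z)) := hcomp
            _ = ((Nat.factorial m' : ℕ) : ℝ) * Cg * (max C 1) ^ m' * Real.exp (-β * z) := by ring
            _ ≤ (((Nat.factorial m' : ℕ) : ℝ) * Cg * (max C 1) ^ m' + 1) * Real.exp (-β * z) := by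
                have := Real.exp_pos (-β * z)
                nlinarith
      obtain ⟨C', hC'pos, hC'⟩ := hnew
      refine ⟨C + C', by positivity, fun i hi1 hin z hz => ?_⟩
      have hexp := Real.exp_pos (-β * z)
      rcases Nat.lt_or_ge i (n + 1) with h | h
      · have := hC i hi1 (by omega) z hz
        nlinarith
      · have hieq : i = n + 1 := by omega
        subst hieq
        have := hC' z hz
        nlinarith
  -- conclude
  obtain ⟨C, hCpos, hCmain⟩ := main k
  match k with
  | 0 =>
    refine ⟨C₀, hC₀pos, fun z hz => ?_⟩
    simp only [iteratedDeriv_zero]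
    rw [abs_of_nonpos (by linarith [hlt1 z])]
    have := hbase z hz
    linarith
  | (j + 1) =>
    refine ⟨C, hCpos, fun z hz => ?_⟩
    have hder : (deriv fun y => θ₀ y - 1) = deriv θ₀ := by
      funext y
      exact deriv_sub_const 1
    have heq : iteratedDeriv (j + 1) (fun y => θ₀ y - 1) = iteratedDeriv (j + 1) θ₀ := by
      rw [iteratedDeriv_succ', hder, ← iteratedDeriv_succ']
    rw [heq]
    exact hCmain (j + 1) (by omega) (le_refl _) z hz

/-- Exponential decay of all derivatives of the optimal profile `θ₀`:
for every `k ∈ ℕ₀` and every `β ∈ (0, √(min{f''(−1), f''(1)}))` there is `C > 0` with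
`|(d/dz)^k (θ₀(z) − 1)| ≤ C e^{−βz}` for `z ≥ 0` and
`|(d/dz)^k (θ₀(z) + 1)| ≤ C e^{βz}` for `z ≤ 0`. -/
theorem optimal_profile_decay
    (f : ℝ → ℝ) (hf : ContDiff ℝ (⊤ : ℕ∞) f)
    (hf'm : deriv f (-1) = 0) (hf'p : deriv f 1 = 0)
    (hf''m : 0 < deriv (deriv f) (-1)) (hf''p : 0 < deriv (deriv f) 1)
    (hfeq : f (-1) = f 1)
    (hfgt : ∀ r ∈ Set.Ioo (-1 : ℝ) 1, f 1 < f r)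
    (θ₀ : ℝ → ℝ) (hθsm : ContDiff ℝ (⊤ : ℕ∞) θ₀)
    (hode : ∀ z : ℝ, -deriv (deriv θ₀) z + deriv f (θ₀ z) = 0)
    (hzero : θ₀ 0 = 0)
    (htop : Tendsto θ₀ atTop (nhds 1)) (hbot : Tendsto θ₀ atBot (nhds (-1)))
    (hθ' : ∀ z : ℝ, deriv θ₀ z = Real.sqrt (2 * (f (θ₀ z) - f (-1))))
    (hθ'pos : ∀ z : ℝ, 0 < deriv θ₀ z) :
    ∀ k : ℕ, ∀ β : ℝ, 0 < β →
      β < Real.sqrt (min (deriv (deriv f) (-1)) (deriv (deriv f) 1)) →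
      ∃ C > (0:ℝ),
        (∀ z : ℝ, 0 ≤ z →
          |iteratedDeriv k (fun y => θ₀ y - 1) z| ≤ C * Real.exp (-β * z)) ∧
        (∀ z : ℝ, z ≤ 0 →
          |iteratedDeriv k (fun y => θ₀ y + 1) z| ≤ C * Real.exp (β * z)) := by
  intro k β hβ hβlt
  have h0min : 0 ≤ min (deriv (deriv f) (-1)) (deriv (deriv f) 1) := le_min hf''m.le hf''p.le
  have hmin : β ^ 2 < min (deriv (deriv f) (-1)) (deriv (deriv f) 1) := by
    have := pow_lt_pow_left₀ hβlt hβ.le (n := 2) (by norm_num)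
    rwa [Real.sq_sqrt h0min] at this
  have hβ2p : β ^ 2 < deriv (deriv f) 1 := lt_of_lt_of_le hmin (min_le_right _ _)
  have hβ2m : β ^ 2 < deriv (deriv f) (-1) := lt_of_lt_of_le hmin (min_le_left _ _)
  -- right side
  obtain ⟨C₁, hC₁, h₁⟩ := one_side_decay f (hf.of_le (by simp)) hf'p hfeq θ₀ (hθsm.of_le (by simp))
    hode hzero htop hbot hθ' hθ'pos k β hβ hβ2p
  -- left side via reflection
  set g : ℝ → ℝ := fun r => f (-r) with hgdef
  set ψ : ℝ → ℝ := fun z => -θ₀ (-z) with hψdef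
  have hg : ContDiff ℝ ∞ g := (hf.of_le (by simp)).comp contDiff_neg
  have hψsm : ContDiff ℝ ∞ ψ := ((hθsm.of_le (by simp)).comp contDiff_neg).neg
  have hdg : ∀ x, deriv g x = -deriv f (-x) := by
    intro x
    rw [hgdef]
    exact deriv_comp_neg f x
  have hdgfun : deriv g = fun x => -deriv f (-x) := funext hdg
  have hdψ : ∀ z, deriv ψ z = deriv θ₀ (-z) := by
    intro z
    rw [hψdef]
    simp only [deriv.fun_neg, deriv_comp_neg, neg_neg]
  have hdψfun : deriv ψ = fun z => deriv θ₀ (-z) := funext hdψ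
  have hg''1 : deriv (deriv g) 1 = deriv (deriv f) (-1) := by
    rw [hdgfun]
    simp only [deriv.fun_neg, deriv_comp_neg, neg_neg]
  have hg'1 : deriv g 1 = 0 := by rw [hdg]; rw [hf'm]; ring
  have hgeq : g (-1) = g 1 := by
    show f (- -1) = f (-1)
    rw [neg_neg, hfeq.symm]
  have hodeψ : ∀ z, -deriv (deriv ψ) z + deriv g (ψ z) = 0 := by
    intro z
    have h1 : deriv (deriv ψ) z = -deriv (deriv θ₀) (-z) := by
      rw [hdψfun, deriv_comp_neg]
    have h2 : deriv g (ψ z) = -deriv f (θ₀ (-z)) := by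
      rw [hdg]
      show -deriv f (- -θ₀ (-z)) = _
      rw [neg_neg]
    rw [h1, h2]
    have := hode (-z)
    linarith
  have hψzero : ψ 0 = 0 := by
    show -θ₀ (-0) = 0
    rw [neg_zero, hzero, neg_zero]
  have hψtop : Tendsto ψ atTop (𝓝 1) := by
    have h1 : Tendsto (fun z => θ₀ (-z)) atTop (𝓝 (-1)) := hbot.comp tendsto_neg_atTop_atBot
    simpa using h1.neg
  have hψbot : Tendsto ψ atBot (𝓝 (-1)) := by
    have h1 : Tendsto (fun z => θ₀ (-z)) atBot (𝓝 1) := htop.comp tendsto_neg_atBot_atTop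
    exact h1.neg
  have hψ' : ∀ z, deriv ψ z = Real.sqrt (2 * (g (ψ z) - g (-1))) := by
    intro z
    have e1 : g (ψ z) = f (θ₀ (-z)) := by
      show f (- -θ₀ (-z)) = f (θ₀ (-z))
      rw [neg_neg]
    have e2 : g (-1) = f (-1) := by
      show f (- -1) = f (-1)
      rw [neg_neg, ← hfeq]
    rw [hdψ, hθ' (-z), e1, e2]
  have hψ'pos : ∀ z, 0 < deriv ψ z := fun z => by rw [hdψ]; exact hθ'pos (-z)
  obtain ⟨C₂, hC₂, h₂⟩ := one_side_decay g hg hg'1 hgeq ψ hψsm hodeψ hψzero hψtop hψbot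
    hψ' hψ'pos k β hβ (by rwa [hg''1])
  refine ⟨C₁ + C₂, by positivity, fun z hz => ?_, fun z hz => ?_⟩
  · have := h₁ z hz
    have := Real.exp_pos (-β * z)
    nlinarith
  · have h := h₂ (-z) (by linarith)
    set F : ℝ → ℝ := fun w => θ₀ w + 1 with hFdef
    have hfun : (fun y => ψ y - 1) = fun y => -(F (-y)) := by
      funext y
      show -θ₀ (-y) - 1 = -(θ₀ (-y) + 1)
      ring
    rw [hfun] at h
    have hrw : ∀ w : ℝ, iteratedDeriv k (fun y => -(F (-y))) w
        = -((-1:ℝ) ^ k • iteratedDeriv k F (-w)) := by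
      intro w
      rw [← iteratedDeriv_comp_neg k F w, ← iteratedDeriv_neg k (fun y => F (-y)) w]
      rfl
    rw [hrw (-z), neg_neg] at h
    rw [abs_neg, smul_eq_mul, abs_mul, abs_pow, abs_neg, abs_one, one_pow, one_mul] at h
    have hez : -β * -z = β * z := by ring
    rw [hez] at h
    have := Real.exp_pos (β * z)
    nlinarith
end

section
/- Let A : ℝ → ℝ be continuous and bounded. Then there exists a bounded function w ∈ C²(ℝ) with −w''(z) + f''(θ₀(z)) w(z) = A(z) for all z ∈ ℝ and w(0) = 0 if and only if ∫_ℝ A(z) θ₀'(z) dz = 0. -/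
set_option maxHeartbeats 1000000
open Filter Topology MeasureTheory Set

section prelim
variable (f θ₀ : ℝ → ℝ)

lemma theta_mono (hθ'pos : ∀ z : ℝ, 0 < deriv θ₀ z) : StrictMono θ₀ :=
  strictMono_of_deriv_pos hθ'pos

lemma theta_range (hθ'pos : ∀ z : ℝ, 0 < deriv θ₀ z)
    (htop : Tendsto θ₀ atTop (nhds 1)) (hbot : Tendsto θ₀ atBot (nhds (-1))) :
    ∀ z : ℝ, θ₀ z ∈ Set.Ioo (-1 : ℝ) 1 := by
  have hm := theta_mono θ₀ hθ'pos
  intro z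
  have h1 : θ₀ (z + 1) ≤ 1 := hm.monotone.ge_of_tendsto htop (z + 1)
  have h2 : -1 ≤ θ₀ (z - 1) := hm.monotone.le_of_tendsto hbot (z - 1)
  constructor
  · exact lt_of_le_of_lt h2 (hm (by linarith))
  · exact lt_of_lt_of_le (hm (by linarith)) h1

lemma phi_smooth (hθsm : ContDiff ℝ (⊤ : ℕ∞) θ₀) : ContDiff ℝ (⊤ : ℕ∞) (deriv θ₀) := by
  have h := hθsm
  rw [show (((⊤ : ℕ∞) : WithTop ℕ∞)) = ((⊤ : ℕ∞) : WithTop ℕ∞) + 1 by rfl, contDiff_succ_iff_deriv] at h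
  exact h.2.2

lemma psi_eq (hode : ∀ z : ℝ, -deriv (deriv θ₀) z + deriv f (θ₀ z) = 0) :
    deriv (deriv θ₀) = fun z => deriv f (θ₀ z) := by
  funext z; have := hode z; linarith

lemma chi_eq (hf : ContDiff ℝ (⊤ : ℕ∞) f) (hθsm : ContDiff ℝ (⊤ : ℕ∞) θ₀)
    (hode : ∀ z : ℝ, -deriv (deriv θ₀) z + deriv f (θ₀ z) = 0) (z : ℝ) :
    deriv (deriv (deriv θ₀)) z = deriv (deriv f) (θ₀ z) * deriv θ₀ z := by
  rw [psi_eq f θ₀ hode]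
  have h1 : HasDerivAt (deriv f) (deriv (deriv f) (θ₀ z)) (θ₀ z) :=
    (((phi_smooth f hf).differentiable (by simp)) (θ₀ z)).hasDerivAt
  have h2 : HasDerivAt θ₀ (deriv θ₀ z) z := ((hθsm.differentiable (by simp)) z).hasDerivAt
  exact (h1.comp z h2).deriv

-- limits of φ = deriv θ₀ at ±∞
lemma phi_tendsto_top (hf : ContDiff ℝ (⊤ : ℕ∞) f) (hfeq : f (-1) = f 1)
    (htop : Tendsto θ₀ atTop (nhds 1))
    (hθ' : ∀ z : ℝ, deriv θ₀ z = Real.sqrt (2 * (f (θ₀ z) - f (-1)))) :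
    Tendsto (deriv θ₀) atTop (nhds 0) := by
  have hc : Continuous fun r : ℝ => Real.sqrt (2 * (f r - f (-1))) := by
    exact (continuous_const.mul (hf.continuous.sub continuous_const)).sqrt
  have := (hc.continuousAt (x := 1)).tendsto.comp htop
  simp only [Function.comp_def] at this
  have h0 : Real.sqrt (2 * (f 1 - f (-1))) = 0 := by rw [hfeq]; simp
  rw [h0] at this
  exact this.congr (fun z => (hθ' z).symm)

lemma phi_tendsto_bot (hf : ContDiff ℝ (⊤ : ℕ∞) f)
    (hbot : Tendsto θ₀ atBot (nhds (-1)))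
    (hθ' : ∀ z : ℝ, deriv θ₀ z = Real.sqrt (2 * (f (θ₀ z) - f (-1)))) :
    Tendsto (deriv θ₀) atBot (nhds 0) := by
  have hc : Continuous fun r : ℝ => Real.sqrt (2 * (f r - f (-1))) := by
    exact (continuous_const.mul (hf.continuous.sub continuous_const)).sqrt
  have := (hc.continuousAt (x := -1)).tendsto.comp hbot
  simp only [Function.comp_def] at this
  have h0 : Real.sqrt (2 * (f (-1) - f (-1))) = 0 := by simp
  rw [h0] at this
  exact this.congr (fun z => (hθ' z).symm)

lemma psi_tendsto_top (hf : ContDiff ℝ (⊤ : ℕ∞) f) (hf'p : deriv f 1 = 0)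
    (htop : Tendsto θ₀ atTop (nhds 1))
    (hode : ∀ z : ℝ, -deriv (deriv θ₀) z + deriv f (θ₀ z) = 0) :
    Tendsto (deriv (deriv θ₀)) atTop (nhds 0) := by
  rw [psi_eq f θ₀ hode]
  have hc : Continuous (deriv f) := (phi_smooth f hf).continuous
  have := (hc.continuousAt (x := 1)).tendsto.comp htop
  simp only [Function.comp_def] at this
  rwa [hf'p] at this

lemma psi_tendsto_bot (hf : ContDiff ℝ (⊤ : ℕ∞) f) (hf'm : deriv f (-1) = 0)
    (hbot : Tendsto θ₀ atBot (nhds (-1)))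
    (hode : ∀ z : ℝ, -deriv (deriv θ₀) z + deriv f (θ₀ z) = 0) :
    Tendsto (deriv (deriv θ₀)) atBot (nhds 0) := by
  rw [psi_eq f θ₀ hode]
  have hc : Continuous (deriv f) := (phi_smooth f hf).continuous
  have := (hc.continuousAt (x := -1)).tendsto.comp hbot
  simp only [Function.comp_def] at this
  rwa [hf'm] at this

end prelim

section integr
variable (f θ₀ : ℝ → ℝ)

lemma phi_ftc (hθsm : ContDiff ℝ (⊤ : ℕ∞) θ₀) (a b : ℝ) :
    ∫ t in a..b, deriv θ₀ t = θ₀ b - θ₀ a := by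
  apply intervalIntegral.integral_deriv_eq_sub
  · exact fun x _ => (hθsm.differentiable (by simp)) x
  · exact ((phi_smooth θ₀ hθsm).continuous).intervalIntegrable a b

lemma phi_integrable (hθsm : ContDiff ℝ (⊤ : ℕ∞) θ₀) (hθ'pos : ∀ z : ℝ, 0 < deriv θ₀ z)
    (htop : Tendsto θ₀ atTop (nhds 1)) (hbot : Tendsto θ₀ atBot (nhds (-1))) :
    Integrable (deriv θ₀) := by
  have hrange := theta_range θ₀ hθ'pos htop hbot
  have hcont : Continuous (deriv θ₀) := (phi_smooth θ₀ hθsm).continuous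
  apply integrable_of_intervalIntegral_norm_bounded (a := fun x : ℝ => -x) (b := fun x : ℝ => x)
    (l := atTop) 2
  · exact fun i => hcont.integrableOn_Ioc
  · exact tendsto_neg_atBot_iff.mpr tendsto_id
  · exact tendsto_id
  · filter_upwards [eventually_ge_atTop (0:ℝ)] with x hx
    have : ∀ t, ‖deriv θ₀ t‖ = deriv θ₀ t := fun t => by
      rw [Real.norm_eq_abs, abs_of_pos (hθ'pos t)]
    calc (∫ t in (-x)..x, ‖deriv θ₀ t‖) = ∫ t in (-x)..x, deriv θ₀ t := by
          simp_rw [this]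
      _ = θ₀ x - θ₀ (-x) := phi_ftc θ₀ hθsm _ _
      _ ≤ 2 := by
          have h1 := (hrange x).2
          have h2 := (hrange (-x)).1
          linarith

lemma phi_integral_Iic (hθsm : ContDiff ℝ (⊤ : ℕ∞) θ₀) (hθ'pos : ∀ z : ℝ, 0 < deriv θ₀ z)
    (htop : Tendsto θ₀ atTop (nhds 1)) (hbot : Tendsto θ₀ atBot (nhds (-1))) (z : ℝ) :
    ∫ t in Iic z, deriv θ₀ t = θ₀ z + 1 := by
  rw [integral_Iic_of_hasDerivAt_of_tendsto' (f := θ₀)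
    (fun x _ => ((hθsm.differentiable (by simp)) x).hasDerivAt)
    ((phi_integrable θ₀ hθsm hθ'pos htop hbot).integrableOn) hbot]
  ring

lemma phi_integral_Ioi (hθsm : ContDiff ℝ (⊤ : ℕ∞) θ₀) (hθ'pos : ∀ z : ℝ, 0 < deriv θ₀ z)
    (htop : Tendsto θ₀ atTop (nhds 1)) (hbot : Tendsto θ₀ atBot (nhds (-1))) (z : ℝ) :
    ∫ t in Ioi z, deriv θ₀ t = 1 - θ₀ z := by
  rw [integral_Ioi_of_hasDerivAt_of_tendsto' (f := θ₀)
    (fun x _ => ((hθsm.differentiable (by simp)) x).hasDerivAt)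
    ((phi_integrable θ₀ hθsm hθ'pos htop hbot).integrableOn) htop]

lemma Aphi_integrable (hθsm : ContDiff ℝ (⊤ : ℕ∞) θ₀) (hθ'pos : ∀ z : ℝ, 0 < deriv θ₀ z)
    (htop : Tendsto θ₀ atTop (nhds 1)) (hbot : Tendsto θ₀ atBot (nhds (-1)))
    (A : ℝ → ℝ) (hA : Continuous A) (M : ℝ) (hM : ∀ z : ℝ, |A z| ≤ M) :
    Integrable (fun z => A z * deriv θ₀ z) := by
  have hφi := phi_integrable θ₀ hθsm hθ'pos htop hbot
  refine (hφi.const_mul M).mono' ?_ ?_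
  · exact (hA.mul (phi_smooth θ₀ hθsm).continuous).aestronglyMeasurable
  · filter_upwards with z
    rw [Real.norm_eq_abs, abs_mul, abs_of_pos (hθ'pos z)]
    exact mul_le_mul_of_nonneg_right (hM z) (hθ'pos z).le

end integr

section quad

lemma intaux (r : ℝ) : ∫ s in r..1, (1-s) = (1-r)^2/2 := by
  have h : ∀ s : ℝ, HasDerivAt (fun s : ℝ => -((1-s)^2/2)) (1-s) s := by
    intro s
    have h1 : HasDerivAt (fun s : ℝ => (1-s)) (-1) s := by
      simpa using (hasDerivAt_id s).const_sub 1
    have h2 := ((h1.pow 2).div_const 2).neg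
    refine h2.congr_deriv (Eq.symm ?_)
    ring
  rw [intervalIntegral.integral_eq_sub_of_hasDerivAt (fun s _ => h s)
    ((continuous_const.sub continuous_id).intervalIntegrable r 1)]
  ring

lemma quad_plus (f : ℝ → ℝ) (hf : ContDiff ℝ (⊤ : ℕ∞) f) (hf'p : deriv f 1 = 0)
    (hf''p : 0 < deriv (deriv f) 1) (hfgt : ∀ r ∈ Set.Ioo (-1:ℝ) 1, f 1 < f r) :
    ∃ c C : ℝ, 0 < c ∧ 0 < C ∧ ∀ r : ℝ, 0 ≤ r → r < 1 →
      c * (1-r)^2 ≤ 2*(f r - f 1) ∧ 2*(f r - f 1) ≤ C * (1-r)^2 := by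
  set D1 := deriv f with hD1def
  set D2 := deriv (deriv f) with hD2def
  have hD1sm : ContDiff ℝ (⊤ : ℕ∞) D1 := phi_smooth f hf
  have hD2c : Continuous D2 := (phi_smooth D1 hD1sm).continuous
  have hD1c : Continuous D1 := hD1sm.continuous
  have hftc1 : ∀ a b : ℝ, ∫ s in a..b, D2 s = D1 b - D1 a := fun a b => phi_ftc D1 hD1sm a b
  have hftc0 : ∀ a b : ℝ, ∫ s in a..b, D1 s = f b - f a := fun a b => phi_ftc f hf a b
  -- upper bound
  obtain ⟨K, hK⟩ := (isCompact_Icc (a := (-1:ℝ)) (b := 1)).exists_bound_of_continuousOn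
    hD2c.continuousOn
  have hK0 : 0 ≤ K := le_trans (norm_nonneg _) (hK 1 (by norm_num))
  have hupper : ∀ r : ℝ, 0 ≤ r → r < 1 → 2*(f r - f 1) ≤ (2*K+1) * (1-r)^2 := by
    intro r hr0 hr1
    have hD1b : ∀ s ∈ Set.Icc r 1, |D1 s| ≤ K * (1-r) := by
      intro s hs
      have : D1 s = -(∫ x in s..1, D2 x) := by rw [hftc1 s 1, hf'p]; ring
      rw [this, abs_neg]
      calc |∫ x in s..1, D2 x| ≤ K * |1 - s| := by
            rw [← Real.norm_eq_abs]
            apply intervalIntegral.norm_integral_le_of_norm_le_const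
            intro x hx
            rw [Set.uIoc_of_le hs.2] at hx
            exact hK x ⟨by linarith [hs.1, hx.1], hx.2⟩
        _ ≤ K * (1-r) := by
            rw [abs_of_nonneg (by linarith [hs.2])]
            exact mul_le_mul_of_nonneg_left (by linarith [hs.1]) hK0
    have habs : |f 1 - f r| ≤ (K * (1-r)) * |1-r| := by
      rw [← hftc0 r 1, ← Real.norm_eq_abs]
      apply intervalIntegral.norm_integral_le_of_norm_le_const
      intro x hx
      rw [Set.uIoc_of_le hr1.le] at hx
      rw [Real.norm_eq_abs]
      exact hD1b x ⟨hx.1.le, hx.2⟩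
    rw [abs_of_nonneg (show (0:ℝ) ≤ 1 - r by linarith)] at habs
    have h2 : f r - f 1 ≤ K * (1-r)^2 := by
      nlinarith [neg_abs_le (f 1 - f r)]
    nlinarith [sq_nonneg (1-r)]
  -- lower bound near 1
  set β := D2 1 with hβdef
  obtain ⟨δ, hδ0, hδ⟩ : ∃ δ > 0, ∀ s : ℝ, |s - 1| < δ → β/2 < D2 s := by
    have := Metric.continuousAt_iff.mp (hD2c.continuousAt (x := 1))
    obtain ⟨δ, hδ0, hδ⟩ := this (β/2) (by linarith)
    refine ⟨δ, hδ0, fun s hs => ?_⟩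
    have := hδ (show dist s 1 < δ by rwa [Real.dist_eq])
    rw [Real.dist_eq] at this
    have := abs_lt.mp this
    linarith [this.1]
  set δ₁ := min δ 1 / 2 with hδ₁def
  have hδ₁0 : 0 < δ₁ := by positivity
  have hδ₁le : δ₁ ≤ 1/2 := by
    simp only [hδ₁def]
    have : min δ 1 ≤ 1 := min_le_right _ _
    linarith
  have hδ₁δ : δ₁ < δ := by
    have : min δ 1 ≤ δ := min_le_left _ _
    simp only [hδ₁def]; linarith
  have hD2lb : ∀ s ∈ Set.Icc (1-δ₁) 1, β/2 ≤ D2 s := by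
    intro s hs
    exact (hδ s (by rw [abs_lt]; constructor <;> [linarith [hs.1]; linarith [hs.2]])).le
  have hnear : ∀ r ∈ Set.Icc (1-δ₁) 1, (β/2) * (1-r)^2 ≤ 2*(f r - f 1) := by
    intro r hr
    have hD1ub : ∀ s ∈ Set.Icc r 1, D1 s ≤ -((β/2) * (1-s)) := by
      intro s hs
      have heq : D1 s = -(∫ x in s..1, D2 x) := by rw [hftc1 s 1, hf'p]; ring
      have hmono : ∫ x in s..1, (β/2) ≤ ∫ x in s..1, D2 x := by
        apply intervalIntegral.integral_mono_on hs.2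
          (intervalIntegrable_const) (hD2c.intervalIntegrable s 1)
        intro x hx
        exact hD2lb x ⟨by linarith [hs.1, hx.1, hr.1], hx.2⟩
      rw [intervalIntegral.integral_const, smul_eq_mul] at hmono
      rw [heq]
      nlinarith
    have hmono2 : ∫ s in r..1, D1 s ≤ ∫ s in r..1, -((β/2) * (1-s)) := by
      apply intervalIntegral.integral_mono_on hr.2
        (hD1c.intervalIntegrable r 1)
        (((continuous_const.mul (continuous_const.sub continuous_id)).neg).intervalIntegrable r 1)
      exact hD1ub
    have hval : ∫ s in r..1, -((β/2) * (1-s)) = -((β/2) * ((1-r)^2/2)) := by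
      rw [intervalIntegral.integral_neg, intervalIntegral.integral_const_mul, intaux]
    rw [hftc0 r 1, hval] at hmono2
    nlinarith
  -- middle region
  have hSc : IsCompact (Set.Icc (0:ℝ) (1-δ₁)) := isCompact_Icc
  have hSne : (Set.Icc (0:ℝ) (1-δ₁)).Nonempty := ⟨0, by constructor <;> [rfl; linarith]⟩
  obtain ⟨r₀, hr₀S, hr₀min⟩ := hSc.exists_isMinOn hSne
    ((hf.continuous.sub continuous_const).continuousOn (s := Set.Icc 0 (1-δ₁)) (f := fun r => f r - f 1))
  set ε := f r₀ - f 1 with hεdef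
  have hε0 : 0 < ε := by
    have := hfgt r₀ ⟨by linarith [hr₀S.1], by linarith [hr₀S.2]⟩
    linarith
  have hmid : ∀ r ∈ Set.Icc (0:ℝ) (1-δ₁), 2*ε*(1-r)^2 ≤ 2*(f r - f 1) := by
    intro r hr
    have h1 : ε ≤ f r - f 1 := hr₀min hr
    have h2 : (1-r)^2 ≤ 1 := by nlinarith [hr.1, hr.2, hδ₁0]
    nlinarith
  refine ⟨min (β/2) (2*ε), 2*K+1, lt_min (by linarith) (by linarith), by linarith, ?_⟩
  intro r hr0 hr1
  constructor
  · rcases le_or_gt r (1-δ₁) with h | h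
    · calc min (β/2) (2*ε) * (1-r)^2 ≤ 2*ε*(1-r)^2 :=
          mul_le_mul_of_nonneg_right (min_le_right _ _) (sq_nonneg _)
        _ ≤ 2*(f r - f 1) := hmid r ⟨hr0, h⟩
    · calc min (β/2) (2*ε) * (1-r)^2 ≤ (β/2)*(1-r)^2 :=
          mul_le_mul_of_nonneg_right (min_le_left _ _) (sq_nonneg _)
        _ ≤ 2*(f r - f 1) := hnear r ⟨h.le, hr1.le⟩
  · exact hupper r hr0 hr1

end quad

lemma quad_minus (f : ℝ → ℝ) (hf : ContDiff ℝ (⊤ : ℕ∞) f) (hf'm : deriv f (-1) = 0)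
    (hf''m : 0 < deriv (deriv f) (-1)) (hfeq : f (-1) = f 1)
    (hfgt : ∀ r ∈ Set.Ioo (-1:ℝ) 1, f 1 < f r) :
    ∃ c C : ℝ, 0 < c ∧ 0 < C ∧ ∀ r : ℝ, -1 < r → r ≤ 0 →
      c * (1+r)^2 ≤ 2*(f r - f 1) ∧ 2*(f r - f 1) ≤ C * (1+r)^2 := by
  set g := fun r : ℝ => f (-r) with hgdef
  have hg : ContDiff ℝ (⊤ : ℕ∞) g := hf.comp (contDiff_id.neg)
  have hD1 : deriv g = fun r : ℝ => -deriv f (-r) := by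
    funext r
    have h1 : HasDerivAt f (deriv f (-r)) (-r) := ((hf.differentiable (by simp)) (-r)).hasDerivAt
    have h2 : HasDerivAt (fun x : ℝ => -x) (-1) r := by exact hasDerivAt_neg r
    have := h1.comp r h2
    simpa [hgdef, Function.comp_def] using this.deriv
  have hD2 : ∀ r : ℝ, deriv (deriv g) r = deriv (deriv f) (-r) := by
    intro r
    rw [hD1]
    have h1 : HasDerivAt (deriv f) (deriv (deriv f) (-r)) (-r) :=
      (((phi_smooth f hf).differentiable (by simp)) (-r)).hasDerivAt
    have h2 : HasDerivAt (fun x : ℝ => -x) (-1) r := by exact hasDerivAt_neg r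
    have := (h1.comp r h2).neg
    have hd := this.deriv
    simp only [Function.comp_def, Pi.neg_def] at hd ⊢
    rw [hd]; ring
  have hg1 : g 1 = f 1 := by simp only [hgdef]; rw [← hfeq]
  obtain ⟨c, C, hc, hC, h⟩ := quad_plus g hg
    (by rw [hD1]; simp [hf'm])
    (by rw [hD2]; exact hf''m)
    (by intro r hr; rw [hg1]; exact hfgt (-r) ⟨by linarith [hr.2], by linarith [hr.1]⟩)
  refine ⟨c, C, hc, hC, fun r hr1 hr0 => ?_⟩
  have := h (-r) (by linarith) (by linarith)
  rw [hg1] at this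
  simp only [hgdef, neg_neg] at this
  constructor
  · have := this.1; nlinarith [this]
  · have := this.2; nlinarith [this]

lemma phi_comp (f θ₀ : ℝ → ℝ) (hf : ContDiff ℝ (⊤ : ℕ∞) f)
    (hf'm : deriv f (-1) = 0) (hf'p : deriv f 1 = 0)
    (hf''m : 0 < deriv (deriv f) (-1)) (hf''p : 0 < deriv (deriv f) 1)
    (hfeq : f (-1) = f 1)
    (hfgt : ∀ r ∈ Set.Ioo (-1 : ℝ) 1, f 1 < f r)
    (hzero : θ₀ 0 = 0)
    (htop : Tendsto θ₀ atTop (nhds 1)) (hbot : Tendsto θ₀ atBot (nhds (-1)))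
    (hθ' : ∀ z : ℝ, deriv θ₀ z = Real.sqrt (2 * (f (θ₀ z) - f (-1))))
    (hθ'pos : ∀ z : ℝ, 0 < deriv θ₀ z) :
    ∃ a b : ℝ, 0 < a ∧ 0 < b ∧
      (∀ z : ℝ, 0 ≤ z → a * (1 - θ₀ z) ≤ deriv θ₀ z ∧ deriv θ₀ z ≤ b * (1 - θ₀ z)) ∧
      (∀ z : ℝ, z ≤ 0 → a * (1 + θ₀ z) ≤ deriv θ₀ z ∧ deriv θ₀ z ≤ b * (1 + θ₀ z)) := by
  have hrange := theta_range θ₀ hθ'pos htop hbot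
  have hmono := (theta_mono θ₀ hθ'pos).monotone
  obtain ⟨c₁, C₁, hc₁, hC₁, h₁⟩ := quad_plus f hf hf'p hf''p hfgt
  obtain ⟨c₂, C₂, hc₂, hC₂, h₂⟩ := quad_minus f hf hf'm hf''m hfeq hfgt
  set c := min c₁ c₂ with hc
  set C := max C₁ C₂ with hC
  have hc0 : 0 < c := lt_min hc₁ hc₂
  have hC0 : 0 < C := lt_of_lt_of_le hC₁ (le_max_left _ _)
  refine ⟨Real.sqrt c, Real.sqrt C, Real.sqrt_pos.mpr hc0, Real.sqrt_pos.mpr hC0, ?_, ?_⟩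
  · intro z hz
    have hr0 : 0 ≤ θ₀ z := by rw [← hzero]; exact hmono hz
    have hr1 : θ₀ z < 1 := (hrange z).2
    obtain ⟨hlo, hhi⟩ := h₁ (θ₀ z) hr0 hr1
    have hφ : deriv θ₀ z = Real.sqrt (2 * (f (θ₀ z) - f 1)) := by rw [hθ' z, hfeq]
    have h1r : (0:ℝ) ≤ 1 - θ₀ z := by linarith
    constructor
    · rw [hφ]
      have : Real.sqrt (c * (1 - θ₀ z)^2) ≤ Real.sqrt (2 * (f (θ₀ z) - f 1)) := by
        apply Real.sqrt_le_sqrt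
        calc c * (1 - θ₀ z)^2 ≤ c₁ * (1 - θ₀ z)^2 :=
              mul_le_mul_of_nonneg_right (min_le_left _ _) (sq_nonneg _)
          _ ≤ 2 * (f (θ₀ z) - f 1) := hlo
      rwa [Real.sqrt_mul hc0.le, Real.sqrt_sq h1r] at this
    · rw [hφ]
      have : Real.sqrt (2 * (f (θ₀ z) - f 1)) ≤ Real.sqrt (C * (1 - θ₀ z)^2) := by
        apply Real.sqrt_le_sqrt
        calc 2 * (f (θ₀ z) - f 1) ≤ C₁ * (1 - θ₀ z)^2 := hhi
          _ ≤ C * (1 - θ₀ z)^2 :=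
              mul_le_mul_of_nonneg_right (le_max_left _ _) (sq_nonneg _)
      rwa [Real.sqrt_mul hC0.le, Real.sqrt_sq h1r] at this
  · intro z hz
    have hr0 : θ₀ z ≤ 0 := by rw [← hzero]; exact hmono hz
    have hr1 : -1 < θ₀ z := (hrange z).1
    obtain ⟨hlo, hhi⟩ := h₂ (θ₀ z) hr1 hr0
    have hφ : deriv θ₀ z = Real.sqrt (2 * (f (θ₀ z) - f 1)) := by rw [hθ' z, hfeq]
    have h1r : (0:ℝ) ≤ 1 + θ₀ z := by linarith
    constructor
    · rw [hφ]
      have : Real.sqrt (c * (1 + θ₀ z)^2) ≤ Real.sqrt (2 * (f (θ₀ z) - f 1)) := by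
        apply Real.sqrt_le_sqrt
        calc c * (1 + θ₀ z)^2 ≤ c₂ * (1 + θ₀ z)^2 :=
              mul_le_mul_of_nonneg_right (min_le_right _ _) (sq_nonneg _)
          _ ≤ 2 * (f (θ₀ z) - f 1) := hlo
      rwa [Real.sqrt_mul hc0.le, Real.sqrt_sq h1r] at this
    · rw [hφ]
      have : Real.sqrt (2 * (f (θ₀ z) - f 1)) ≤ Real.sqrt (C * (1 + θ₀ z)^2) := by
        apply Real.sqrt_le_sqrt
        calc 2 * (f (θ₀ z) - f 1) ≤ C₂ * (1 + θ₀ z)^2 := hhi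
          _ ≤ C * (1 + θ₀ z)^2 :=
              mul_le_mul_of_nonneg_right (le_max_right _ _) (sq_nonneg _)
      rwa [Real.sqrt_mul hC0.le, Real.sqrt_sq h1r] at this

section fwd

lemma forward_dir (f θ₀ : ℝ → ℝ) (hf : ContDiff ℝ (⊤ : ℕ∞) f)
    (hf'm : deriv f (-1) = 0) (hf'p : deriv f 1 = 0)
    (hθsm : ContDiff ℝ (⊤ : ℕ∞) θ₀)
    (hode : ∀ z : ℝ, -deriv (deriv θ₀) z + deriv f (θ₀ z) = 0)
    (htop : Tendsto θ₀ atTop (nhds 1)) (hbot : Tendsto θ₀ atBot (nhds (-1)))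
    (hfeq : f (-1) = f 1)
    (hθ' : ∀ z : ℝ, deriv θ₀ z = Real.sqrt (2 * (f (θ₀ z) - f (-1))))
    (hθ'pos : ∀ z : ℝ, 0 < deriv θ₀ z)
    (A : ℝ → ℝ) (hA : Continuous A) (M : ℝ) (hM : ∀ z : ℝ, |A z| ≤ M)
    (w : ℝ → ℝ) (hw : ContDiff ℝ 2 w) (Mw : ℝ) (hMw : ∀ z : ℝ, |w z| ≤ Mw)
    (hwode : ∀ z : ℝ, -deriv (deriv w) z + deriv (deriv f) (θ₀ z) * w z = A z) :
    (∫ z : ℝ, A z * deriv θ₀ z) = 0 := by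
  have hφc : Continuous (deriv θ₀) := (phi_smooth θ₀ hθsm).continuous
  have hψsm : ContDiff ℝ (⊤ : ℕ∞) (deriv (deriv θ₀)) := phi_smooth (deriv θ₀) (phi_smooth θ₀ hθsm)
  have hψc : Continuous (deriv (deriv θ₀)) := hψsm.continuous
  have hMw0 : 0 ≤ Mw := le_trans (abs_nonneg _) (hMw 0)
  -- regularity of w
  have hw2 : ContDiff ℝ (1+1 : ℕ) w := by exact_mod_cast hw
  rw [show ((1+1 : ℕ) : WithTop ℕ∞) = (1 : WithTop ℕ∞) + 1 by norm_num,
    contDiff_succ_iff_deriv] at hw2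
  have hwdiff : Differentiable ℝ w := hw2.1
  have hw1 : ContDiff ℝ 1 (deriv w) := hw2.2.2
  have hw'diff : Differentiable ℝ (deriv w) := hw1.differentiable one_ne_zero
  -- the function F and its derivative
  set F := fun z => w z * deriv (deriv θ₀) z - deriv w z * deriv θ₀ z with hFdef
  have hF : ∀ z : ℝ, HasDerivAt F (A z * deriv θ₀ z) z := by
    intro z
    have h1 : HasDerivAt w (deriv w z) z := (hwdiff z).hasDerivAt
    have h2 : HasDerivAt (deriv (deriv θ₀)) (deriv (deriv (deriv θ₀)) z) z :=
      ((hψsm.differentiable (by simp)) z).hasDerivAt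
    have h3 : HasDerivAt (deriv w) (deriv (deriv w) z) z := (hw'diff z).hasDerivAt
    have h4 : HasDerivAt (deriv θ₀) (deriv (deriv θ₀) z) z :=
      (((phi_smooth θ₀ hθsm).differentiable (by simp)) z).hasDerivAt
    have h5 := (h1.mul h2).sub (h3.mul h4)
    refine h5.congr_deriv (Eq.symm ?_)
    rw [chi_eq f θ₀ hf hθsm hode z]
    linear_combination (deriv θ₀ z) * (hwode z).symm
  have hInt : Integrable (fun z => A z * deriv θ₀ z) :=
    Aphi_integrable θ₀ hθsm hθ'pos htop hbot A hA M hM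
  have hftc : ∀ a b : ℝ, ∫ z in a..b, A z * deriv θ₀ z = F b - F a := by
    intro a b
    exact intervalIntegral.integral_eq_sub_of_hasDerivAt (fun z _ => hF z)
      ((hA.mul hφc).intervalIntegrable a b)
  -- MVT points at +infinity
  have hmvtp : ∀ n : ℕ, ∃ ξ ∈ Set.Ioo ((n:ℝ)) ((n:ℝ)+1),
      deriv w ξ = (w ((n:ℝ)+1) - w n) / (((n:ℝ)+1) - n) := by
    intro n
    exact exists_deriv_eq_slope w (by linarith) (hwdiff.continuous.continuousOn)
      (hwdiff.differentiableOn)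
  choose ξ hξmem hξval using hmvtp
  have hmvtm : ∀ n : ℕ, ∃ η ∈ Set.Ioo (-((n:ℝ)+1)) (-(n:ℝ)),
      deriv w η = (w (-(n:ℝ)) - w (-((n:ℝ)+1))) / ((-(n:ℝ)) - (-((n:ℝ)+1))) := by
    intro n
    exact exists_deriv_eq_slope w (by linarith) (hwdiff.continuous.continuousOn)
      (hwdiff.differentiableOn)
  choose η hηmem hηval using hmvtm
  have hξtop : Tendsto ξ atTop atTop :=
    tendsto_atTop_mono (fun n => (hξmem n).1.le) tendsto_natCast_atTop_atTop
  have hηbot : Tendsto η atTop atBot := by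
    apply tendsto_atBot_mono (fun n => (hηmem n).2.le)
    exact tendsto_neg_atBot_iff.mpr tendsto_natCast_atTop_atTop
  have hξder : ∀ n : ℕ, |deriv w (ξ n)| ≤ 2 * Mw := by
    intro n
    rw [hξval n]
    have : ((n:ℝ)+1) - n = 1 := by ring
    rw [this, div_one]
    calc |w ((n:ℝ)+1) - w n| ≤ |w ((n:ℝ)+1)| + |w (n:ℝ)| := abs_sub _ _
      _ ≤ 2 * Mw := by linarith [hMw ((n:ℝ)+1), hMw (n:ℝ)]
  have hηder : ∀ n : ℕ, |deriv w (η n)| ≤ 2 * Mw := by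
    intro n
    rw [hηval n]
    have : (-(n:ℝ)) - (-((n:ℝ)+1)) = 1 := by ring
    rw [this, div_one]
    calc |w (-(n:ℝ)) - w (-((n:ℝ)+1))| ≤ |w (-(n:ℝ))| + |w (-((n:ℝ)+1))| := abs_sub _ _
      _ ≤ 2 * Mw := by linarith [hMw (-(n:ℝ)), hMw (-((n:ℝ)+1))]
  -- F tends to 0 along ξ and η
  have hbddF : ∀ (u : ℕ → ℝ), (∀ n, |deriv w (u n)| ≤ 2*Mw) →
      Tendsto (deriv θ₀ ∘ u) atTop (nhds 0) → Tendsto (deriv (deriv θ₀) ∘ u) atTop (nhds 0) →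
      Tendsto (F ∘ u) atTop (nhds 0) := by
    intro u hu hφ0 hψ0
    apply squeeze_zero_norm (a := fun n => Mw * |deriv (deriv θ₀) (u n)| + 2*Mw * |deriv θ₀ (u n)|)
    · intro n
      simp only [Function.comp, hFdef, Real.norm_eq_abs]
      calc |w (u n) * deriv (deriv θ₀) (u n) - deriv w (u n) * deriv θ₀ (u n)|
          ≤ |w (u n) * deriv (deriv θ₀) (u n)| + |deriv w (u n) * deriv θ₀ (u n)| := abs_sub _ _
        _ ≤ Mw * |deriv (deriv θ₀) (u n)| + 2*Mw * |deriv θ₀ (u n)| := by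
            rw [abs_mul, abs_mul]
            have := mul_le_mul_of_nonneg_right (hMw (u n)) (abs_nonneg (deriv (deriv θ₀) (u n)))
            have := mul_le_mul_of_nonneg_right (hu n) (abs_nonneg (deriv θ₀ (u n)))
            linarith
    · have h1 : Tendsto (fun n => |deriv (deriv θ₀) (u n)|) atTop (nhds 0) := by
        have := hψ0.abs; simpa using this
      have h2 : Tendsto (fun n => |deriv θ₀ (u n)|) atTop (nhds 0) := by
        have := hφ0.abs; simpa using this
      have := ((h1.const_mul Mw).add (h2.const_mul (2*Mw)))
      simpa using this
  have hFξ : Tendsto (F ∘ ξ) atTop (nhds 0) :=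
    hbddF ξ hξder ((phi_tendsto_top f θ₀ hf hfeq htop hθ').comp hξtop)
      ((psi_tendsto_top f θ₀ hf hf'p htop hode).comp hξtop)
  have hFη : Tendsto (F ∘ η) atTop (nhds 0) :=
    hbddF η hηder ((phi_tendsto_bot f θ₀ hf hbot hθ').comp hηbot)
      ((psi_tendsto_bot f θ₀ hf hf'm hbot hode).comp hηbot)
  -- conclude
  have hlim1 : Tendsto (fun n : ℕ => ∫ z in (η n)..(ξ n), A z * deriv θ₀ z) atTop
      (nhds (∫ z : ℝ, A z * deriv θ₀ z)) :=
    intervalIntegral_tendsto_integral hInt hηbot hξtop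
  have hlim2 : Tendsto (fun n : ℕ => ∫ z in (η n)..(ξ n), A z * deriv θ₀ z) atTop (nhds 0) := by
    have : (fun n : ℕ => ∫ z in (η n)..(ξ n), A z * deriv θ₀ z)
        = fun n => F (ξ n) - F (η n) := by
      funext n; exact hftc (η n) (ξ n)
    rw [this]
    have := hFξ.sub hFη
    simpa using this
  exact tendsto_nhds_unique hlim1 hlim2

end fwd

section bwd

lemma backward_dir (f θ₀ : ℝ → ℝ) (hf : ContDiff ℝ (⊤ : ℕ∞) f)
    (hf'm : deriv f (-1) = 0) (hf'p : deriv f 1 = 0)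
    (hf''m : 0 < deriv (deriv f) (-1)) (hf''p : 0 < deriv (deriv f) 1)
    (hfeq : f (-1) = f 1)
    (hfgt : ∀ r ∈ Set.Ioo (-1 : ℝ) 1, f 1 < f r)
    (hθsm : ContDiff ℝ (⊤ : ℕ∞) θ₀)
    (hode : ∀ z : ℝ, -deriv (deriv θ₀) z + deriv f (θ₀ z) = 0)
    (hzero : θ₀ 0 = 0)
    (htop : Tendsto θ₀ atTop (nhds 1)) (hbot : Tendsto θ₀ atBot (nhds (-1)))
    (hθ' : ∀ z : ℝ, deriv θ₀ z = Real.sqrt (2 * (f (θ₀ z) - f (-1))))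
    (hθ'pos : ∀ z : ℝ, 0 < deriv θ₀ z)
    (A : ℝ → ℝ) (hA : Continuous A) (M : ℝ) (hM : ∀ z : ℝ, |A z| ≤ M)
    (hint0 : (∫ z : ℝ, A z * deriv θ₀ z) = 0) :
    ∃ w : ℝ → ℝ, ContDiff ℝ 2 w ∧ (∃ Mw : ℝ, ∀ z : ℝ, |w z| ≤ Mw) ∧
        (∀ z : ℝ, -deriv (deriv w) z + deriv (deriv f) (θ₀ z) * w z = A z) ∧
        w 0 = 0 := by
  have hM0 : 0 ≤ M := le_trans (abs_nonneg _) (hM 0)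
  have hrange := theta_range θ₀ hθ'pos htop hbot
  have hmono := (theta_mono θ₀ hθ'pos).monotone
  set φ := deriv θ₀ with hφdef
  set ψ := deriv (deriv θ₀) with hψdef
  have hφsm : ContDiff ℝ (⊤ : ℕ∞) φ := phi_smooth θ₀ hθsm
  have hφc : Continuous φ := hφsm.continuous
  have hψsm : ContDiff ℝ (⊤ : ℕ∞) ψ := phi_smooth φ hφsm
  have hψc : Continuous ψ := hψsm.continuous
  have hφpos : ∀ z, 0 < φ z := hθ'pos
  have hφat : ∀ z : ℝ, HasDerivAt φ (ψ z) z := fun z =>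
    ((hφsm.differentiable (by simp)) z).hasDerivAt
  have hψat : ∀ z : ℝ, HasDerivAt ψ (deriv (deriv f) (θ₀ z) * φ z) z := fun z => by
    have := ((hψsm.differentiable (by simp)) z).hasDerivAt
    rwa [show deriv ψ z = deriv (deriv f) (θ₀ z) * φ z from chi_eq f θ₀ hf hθsm hode z] at this
  have hInt : Integrable (fun z => A z * φ z) :=
    Aphi_integrable θ₀ hθsm hθ'pos htop hbot A hA M hM
  -- the primitive g of A φ with g(-∞)=0
  set K := ∫ z in Iic (0:ℝ), A z * φ z with hKdef
  set g := fun z : ℝ => K + ∫ t in (0:ℝ)..z, A t * φ t with hgdef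
  have hgIic : ∀ z : ℝ, g z = ∫ t in Iic z, A t * φ t := by
    intro z
    have := intervalIntegral.integral_Iic_sub_Iic (hInt.integrableOn (s := Iic (0:ℝ)))
      (hInt.integrableOn (s := Iic z))
    simp only [hgdef, hKdef]
    linarith [this]
  have hgat : ∀ z : ℝ, HasDerivAt g (A z * φ z) z := by
    intro z
    apply HasDerivAt.const_add
    exact intervalIntegral.integral_hasDerivAt_right
      ((hA.mul hφc).intervalIntegrable 0 z)
      ((hA.mul hφc).stronglyMeasurableAtFilter _ _)
      ((hA.mul hφc).continuousAt)
  have hgc : Continuous g := by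
    have : Differentiable ℝ g := fun z => (hgat z).differentiableAt
    exact this.continuous
  -- bounds for g
  have hgb1 : ∀ z : ℝ, |g z| ≤ M * (1 + θ₀ z) := by
    intro z
    rw [hgIic z]
    calc |∫ t in Iic z, A t * φ t| ≤ ∫ t in Iic z, |A t * φ t| := by
          simpa only [Real.norm_eq_abs] using
            norm_integral_le_integral_norm (μ := volume.restrict (Iic z)) (fun t => A t * φ t)
      _ ≤ ∫ t in Iic z, M * φ t := by
          apply setIntegral_mono_on
          · exact (hInt.restrict.norm.congr (by
              filter_upwards with t; rw [Real.norm_eq_abs]))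
          · exact ((phi_integrable θ₀ hθsm hθ'pos htop hbot).const_mul M).integrableOn
          · exact measurableSet_Iic
          · intro t _
            rw [abs_mul, abs_of_pos (hφpos t)]
            exact mul_le_mul_of_nonneg_right (hM t) (hφpos t).le
      _ = M * (θ₀ z + 1) := by
          rw [integral_const_mul, phi_integral_Iic θ₀ hθsm hθ'pos htop hbot z]
      _ = M * (1 + θ₀ z) := by ring
  have hgb2 : ∀ z : ℝ, |g z| ≤ M * (1 - θ₀ z) := by
    intro z
    have hsplit : g z = -∫ t in Ioi z, A t * φ t := by
      rw [hgIic z]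
      have := intervalIntegral.integral_Iic_add_Ioi (b := z) (hInt.integrableOn) (hInt.integrableOn)
      rw [hint0] at this
      linarith
    rw [hsplit, abs_neg]
    calc |∫ t in Ioi z, A t * φ t| ≤ ∫ t in Ioi z, |A t * φ t| := by
          simpa only [Real.norm_eq_abs] using
            norm_integral_le_integral_norm (μ := volume.restrict (Ioi z)) (fun t => A t * φ t)
      _ ≤ ∫ t in Ioi z, M * φ t := by
          apply setIntegral_mono_on
          · exact (hInt.restrict.norm.congr (by
              filter_upwards with t; rw [Real.norm_eq_abs]))
          · exact ((phi_integrable θ₀ hθsm hθ'pos htop hbot).const_mul M).integrableOn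
          · exact measurableSet_Ioi
          · intro t _
            rw [abs_mul, abs_of_pos (hφpos t)]
            exact mul_le_mul_of_nonneg_right (hM t) (hφpos t).le
      _ = M * (1 - θ₀ z) := by
          rw [integral_const_mul, phi_integral_Ioi θ₀ hθsm hθ'pos htop hbot z]
  -- the function v' and V
  set vf := fun t : ℝ => -g t / (φ t)^2 with hvfdef
  have hvfc : Continuous vf := by
    apply Continuous.div hgc.neg (hφc.pow 2)
    exact fun t => pow_ne_zero 2 (hφpos t).ne'
  set V := fun z : ℝ => ∫ t in (0:ℝ)..z, vf t with hVdef
  have hVat : ∀ z : ℝ, HasDerivAt V (vf z) z := by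
    intro z
    exact intervalIntegral.integral_hasDerivAt_right
      (hvfc.intervalIntegrable 0 z) (hvfc.stronglyMeasurableAtFilter _ _) hvfc.continuousAt
  have hVdiff : Differentiable ℝ V := fun z => (hVat z).differentiableAt
  have hVc : Continuous V := hVdiff.continuous
  -- the solution w
  set w := fun z : ℝ => φ z * V z with hwdef
  set w1 := fun z : ℝ => ψ z * V z + φ z * vf z with hw1def
  have hwat : ∀ z : ℝ, HasDerivAt w (w1 z) z := fun z => (hφat z).mul (hVat z)
  set vf' := fun z : ℝ => ((-(A z * φ z)) * (φ z)^2 - (-g z) * (2 * φ z ^ 1 * ψ z)) / ((φ z)^2)^2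
    with hvf'def
  have hvfat : ∀ z : ℝ, HasDerivAt vf (vf' z) z := by
    intro z
    exact ((hgat z).neg).div ((hφat z).pow 2) (pow_ne_zero 2 (hφpos z).ne')
  have hvf'c : Continuous vf' := by
    apply Continuous.div
    · fun_prop
    · fun_prop
    · intro t
      exact pow_ne_zero 2 (pow_ne_zero 2 (hφpos t).ne')
  set w2 := fun z : ℝ => deriv (deriv f) (θ₀ z) * φ z * V z - A z with hw2def
  have hw1at : ∀ z : ℝ, HasDerivAt w1 (w2 z) z := by
    intro z
    have h := ((hψat z).mul (hVat z)).add ((hφat z).mul (hvfat z))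
    refine h.congr_deriv (Eq.symm ?_)
    simp only [hw2def, hvfdef, hvf'def]
    have hφne : φ z ≠ 0 := (hφpos z).ne'
    field_simp
    ring
  have hderivw : deriv w = w1 := funext fun z => (hwat z).deriv
  have hderiv2w : ∀ z : ℝ, deriv (deriv w) z = w2 z := by
    intro z; rw [hderivw]; exact (hw1at z).deriv
  refine ⟨w, ?_, ?_, ?_, ?_⟩
  · -- C²
    have hwdiff : Differentiable ℝ w := fun z => (hwat z).differentiableAt
    suffices hcd : ContDiff ℝ ((1+1 : ℕ) : WithTop ℕ∞) w by exact_mod_cast hcd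
    rw [show ((1+1 : ℕ) : WithTop ℕ∞) = (1 : WithTop ℕ∞) + 1 by norm_num,
      contDiff_succ_iff_deriv]
    refine ⟨hwdiff, by simp, ?_⟩
    rw [hderivw, contDiff_one_iff_deriv]
    constructor
    · exact fun z => (hw1at z).differentiableAt
    · have : deriv w1 = w2 := funext fun z => (hw1at z).deriv
      rw [this]
      have hD2c : Continuous (deriv (deriv f)) := (phi_smooth (deriv f) (phi_smooth f hf)).continuous
      exact ((hD2c.comp hθsm.continuous).mul hφc).mul hVc |>.sub hA
  · -- boundedness
    obtain ⟨a, b, ha, hb, hplus, hminus⟩ := phi_comp f θ₀ hf hf'm hf'p hf''m hf''p hfeq hfgt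
      hzero htop hbot hθ' hθ'pos
    refine ⟨b * M / a^3, ?_⟩
    have key : ∀ z : ℝ, |w z| ≤ b * M / a^3 := by
      intro z
      rcases le_or_gt 0 z with hz | hz
      · -- z ≥ 0 : use 1 - θ₀
        have hp : ∀ t : ℝ, 0 ≤ t → 0 < 1 - θ₀ t := fun t _ => by linarith [(hrange t).2]
        have hvfb : ∀ t : ℝ, 0 ≤ t → |vf t| ≤ (M / a^2) * (1 / (1 - θ₀ t)) := by
          intro t ht
          have hpt := hp t ht
          have hφlb := (hplus t ht).1
          have hφt := hφpos t
          rw [hvfdef]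
          rw [abs_div, abs_neg, abs_of_pos (by positivity : (0:ℝ) < (φ t)^2)]
          have h1 : |g t| ≤ M * (1 - θ₀ t) := hgb2 t
          have h2 : a^2 * (1 - θ₀ t)^2 ≤ (φ t)^2 := by
            nlinarith [mul_self_le_mul_self (by positivity : (0:ℝ) ≤ a * (1 - θ₀ t)) hφlb]
          calc |g t| / (φ t)^2 ≤ M * (1 - θ₀ t) / (a^2 * (1 - θ₀ t)^2) :=
                div_le_div₀ (by positivity) h1 (by positivity) h2
            _ = (M / a^2) * (1 / (1 - θ₀ t)) := by field_simp
        -- h = 1/(1-θ₀) has derivative φ/(1-θ₀)^2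
        have hhat : ∀ t : ℝ, HasDerivAt (fun s => (1 - θ₀ s)⁻¹) (φ t / (1 - θ₀ t)^2) t := by
          intro t
          have h1 : HasDerivAt (fun s => 1 - θ₀ s) (-φ t) t := by
            simpa using ((hθsm.differentiable (by simp)) t).hasDerivAt.const_sub 1
          have hne : 1 - θ₀ t ≠ 0 := by
            have := (hrange t).2; intro hc; linarith
          have h2 := h1.inv hne
          refine h2.congr_deriv (Eq.symm ?_)
          field_simp
        have hbnd : Continuous (fun t => (M / a^3) * (φ t / (1 - θ₀ t)^2)) := by
          apply Continuous.mul continuous_const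
          apply Continuous.div hφc ((continuous_const.sub hθsm.continuous).pow 2)
          intro t
          have h1 : (0:ℝ) < 1 - θ₀ t := by linarith [(hrange t).2]
          exact pow_ne_zero 2 h1.ne'
        have hVb : |V z| ≤ (M / a^3) * (1 / (1 - θ₀ z)) := by
          have e1 : |V z| ≤ ∫ t in (0:ℝ)..z, |vf t| :=
            intervalIntegral.abs_integral_le_integral_abs hz
          have e2 : ∫ t in (0:ℝ)..z, |vf t| ≤
              ∫ t in (0:ℝ)..z, (M / a^3) * (φ t / (1 - θ₀ t)^2) := by
            apply intervalIntegral.integral_mono_on hz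
              (hvfc.abs.intervalIntegrable 0 z) (hbnd.intervalIntegrable 0 z)
            intro t htm
            have ht0 : 0 ≤ t := htm.1
            have hpt := hp t ht0
            have hφlb := (hplus t ht0).1
            calc |vf t| ≤ (M / a^2) * (1 / (1 - θ₀ t)) := hvfb t ht0
              _ ≤ (M / a^3) * (φ t / (1 - θ₀ t)^2) := by
                  have hstep : a / (1 - θ₀ t) ≤ φ t / (1 - θ₀ t)^2 := by
                    rw [div_le_div_iff₀ hpt (pow_pos hpt 2)]
                    nlinarith [mul_le_mul_of_nonneg_right hφlb hpt.le]
                  have heq : (M / a^2) * (1 / (1 - θ₀ t)) = (M / a^3) * (a / (1 - θ₀ t)) := by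
                    field_simp
                  rw [heq]
                  exact mul_le_mul_of_nonneg_left hstep (by positivity)
          have e3 : ∫ t in (0:ℝ)..z, (M / a^3) * (φ t / (1 - θ₀ t)^2)
              = (M / a^3) * ((1 - θ₀ z)⁻¹ - (1 - θ₀ 0)⁻¹) := by
            rw [intervalIntegral.integral_const_mul]
            congr 1
            exact intervalIntegral.integral_eq_sub_of_hasDerivAt (fun t _ => hhat t)
              ((Continuous.div hφc ((continuous_const.sub hθsm.continuous).pow 2)
                (fun t => by have h1 : (0:ℝ) < 1 - θ₀ t := by linarith [(hrange t).2]
                             exact pow_ne_zero 2 h1.ne')).intervalIntegrable 0 z)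
          have e4 : (1 - θ₀ (0:ℝ))⁻¹ = 1 := by rw [hzero]; norm_num
          have e5 : (0:ℝ) < (1 - θ₀ z)⁻¹ := by
            have := hp z hz; positivity
          calc |V z| ≤ (M / a^3) * ((1 - θ₀ z)⁻¹ - 1) := by
                rw [e4] at e3; rw [← e3]; exact e1.trans e2
            _ ≤ (M / a^3) * (1 / (1 - θ₀ z)) := by
                rw [one_div]
                apply mul_le_mul_of_nonneg_left _ (by positivity)
                linarith
        have hwz : |w z| = φ z * |V z| := by
          simp only [hwdef, abs_mul, abs_of_pos (hφpos z)]
        rw [hwz]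
        have hφub := (hplus z hz).2
        have hpz := hp z hz
        calc φ z * |V z| ≤ (b * (1 - θ₀ z)) * ((M / a^3) * (1 / (1 - θ₀ z))) :=
              mul_le_mul hφub hVb (abs_nonneg _) (by positivity)
          _ = b * M / a^3 := by field_simp
      · -- z < 0 : use 1 + θ₀
        have hq : ∀ t : ℝ, 0 < 1 + θ₀ t := fun t => by linarith [(hrange t).1]
        have hvfb : ∀ t : ℝ, t ≤ 0 → |vf t| ≤ (M / a^2) * (1 / (1 + θ₀ t)) := by
          intro t ht
          have hqt := hq t
          have hφlb := (hminus t ht).1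
          have hφt := hφpos t
          rw [hvfdef]
          rw [abs_div, abs_neg, abs_of_pos (by positivity : (0:ℝ) < (φ t)^2)]
          have h1 : |g t| ≤ M * (1 + θ₀ t) := hgb1 t
          have h2 : a^2 * (1 + θ₀ t)^2 ≤ (φ t)^2 := by
            nlinarith [mul_self_le_mul_self (by positivity : (0:ℝ) ≤ a * (1 + θ₀ t)) hφlb]
          calc |g t| / (φ t)^2 ≤ M * (1 + θ₀ t) / (a^2 * (1 + θ₀ t)^2) :=
                div_le_div₀ (by positivity) h1 (by positivity) h2
            _ = (M / a^2) * (1 / (1 + θ₀ t)) := by field_simp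
        have hkat : ∀ t : ℝ, HasDerivAt (fun s => -(1 + θ₀ s)⁻¹) (φ t / (1 + θ₀ t)^2) t := by
          intro t
          have h1 : HasDerivAt (fun s => 1 + θ₀ s) (φ t) t := by
            exact ((hθsm.differentiable (by simp)) t).hasDerivAt.const_add 1
          have h2 := (h1.inv (hq t).ne').neg
          refine h2.congr_deriv (Eq.symm ?_)
          ring
        have hbnd : Continuous (fun t => (M / a^3) * (φ t / (1 + θ₀ t)^2)) := by
          apply Continuous.mul continuous_const
          apply Continuous.div hφc ((continuous_const.add hθsm.continuous).pow 2)
          intro t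
          have h1 : (0:ℝ) < 1 + θ₀ t := hq t
          exact pow_ne_zero 2 h1.ne'
        have hVb : |V z| ≤ (M / a^3) * (1 / (1 + θ₀ z)) := by
          have esym : V z = -∫ t in z..(0:ℝ), vf t := by
            simp only [hVdef]
            rw [intervalIntegral.integral_symm]
          have e1 : |V z| ≤ ∫ t in z..(0:ℝ), |vf t| := by
            rw [esym, abs_neg]
            exact intervalIntegral.abs_integral_le_integral_abs hz.le
          have e2 : ∫ t in z..(0:ℝ), |vf t| ≤
              ∫ t in z..(0:ℝ), (M / a^3) * (φ t / (1 + θ₀ t)^2) := by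
            apply intervalIntegral.integral_mono_on hz.le
              (hvfc.abs.intervalIntegrable z 0) (hbnd.intervalIntegrable z 0)
            intro t htm
            have ht0 : t ≤ 0 := htm.2
            have hqt := hq t
            have hφlb := (hminus t ht0).1
            calc |vf t| ≤ (M / a^2) * (1 / (1 + θ₀ t)) := hvfb t ht0
              _ ≤ (M / a^3) * (φ t / (1 + θ₀ t)^2) := by
                  have hstep : a / (1 + θ₀ t) ≤ φ t / (1 + θ₀ t)^2 := by
                    rw [div_le_div_iff₀ hqt (pow_pos hqt 2)]
                    nlinarith [mul_le_mul_of_nonneg_right hφlb hqt.le]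
                  have heq : (M / a^2) * (1 / (1 + θ₀ t)) = (M / a^3) * (a / (1 + θ₀ t)) := by
                    field_simp
                  rw [heq]
                  exact mul_le_mul_of_nonneg_left hstep (by positivity)
          have e3 : ∫ t in z..(0:ℝ), (M / a^3) * (φ t / (1 + θ₀ t)^2)
              = (M / a^3) * ((1 + θ₀ z)⁻¹ - (1 + θ₀ 0)⁻¹) := by
            rw [intervalIntegral.integral_const_mul]
            congr 1
            rw [intervalIntegral.integral_eq_sub_of_hasDerivAt (fun t _ => hkat t)
              ((Continuous.div hφc ((continuous_const.add hθsm.continuous).pow 2)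
                (fun t => (by have h1 : (0:ℝ) < 1 + θ₀ t := hq t; exact pow_ne_zero 2 h1.ne'))).intervalIntegrable z 0)]
            ring
          have e4 : (1 + θ₀ (0:ℝ))⁻¹ = 1 := by rw [hzero]; norm_num
          calc |V z| ≤ (M / a^3) * ((1 + θ₀ z)⁻¹ - 1) := by
                rw [e4] at e3; rw [← e3]; exact e1.trans e2
            _ ≤ (M / a^3) * (1 / (1 + θ₀ z)) := by
                rw [one_div]
                apply mul_le_mul_of_nonneg_left _ (by positivity)
                linarith
        have hwz : |w z| = φ z * |V z| := by
          simp only [hwdef, abs_mul, abs_of_pos (hφpos z)]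
        rw [hwz]
        have hφub := (hminus z hz.le).2
        have hqz := hq z
        calc φ z * |V z| ≤ (b * (1 + θ₀ z)) * ((M / a^3) * (1 / (1 + θ₀ z))) :=
              mul_le_mul hφub hVb (abs_nonneg _) (by positivity)
          _ = b * M / a^3 := by field_simp
    exact key
  · -- the ODE
    intro z
    rw [hderiv2w z]
    simp only [hw2def, hwdef]
    ring
  · -- w 0 = 0
    simp only [hwdef, hVdef]
    rw [intervalIntegral.integral_same]
    ring


end bwd

/-- For `A : ℝ → ℝ` continuous and bounded, the linearized ODE
`−w'' + f''(θ₀) w = A` on `ℝ` with `w 0 = 0` has a bounded `C²` solution if and only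
if `∫_ℝ A θ₀' dz = 0`. -/
theorem linearized_ODE_solvability
    (f : ℝ → ℝ) (hf : ContDiff ℝ (⊤ : ℕ∞) f)
    (hf'm : deriv f (-1) = 0) (hf'p : deriv f 1 = 0)
    (hf''m : 0 < deriv (deriv f) (-1)) (hf''p : 0 < deriv (deriv f) 1)
    (hfeq : f (-1) = f 1)
    (hfgt : ∀ r ∈ Set.Ioo (-1 : ℝ) 1, f 1 < f r)
    (θ₀ : ℝ → ℝ) (hθsm : ContDiff ℝ (⊤ : ℕ∞) θ₀)
    (hode : ∀ z : ℝ, -deriv (deriv θ₀) z + deriv f (θ₀ z) = 0)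
    (hzero : θ₀ 0 = 0)
    (htop : Tendsto θ₀ atTop (nhds 1)) (hbot : Tendsto θ₀ atBot (nhds (-1)))
    (hθ' : ∀ z : ℝ, deriv θ₀ z = Real.sqrt (2 * (f (θ₀ z) - f (-1))))
    (hθ'pos : ∀ z : ℝ, 0 < deriv θ₀ z)
    (A : ℝ → ℝ) (hA : Continuous A) (hAbdd : ∃ M : ℝ, ∀ z : ℝ, |A z| ≤ M) :
    (∃ w : ℝ → ℝ, ContDiff ℝ 2 w ∧ (∃ M : ℝ, ∀ z : ℝ, |w z| ≤ M) ∧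
        (∀ z : ℝ, -deriv (deriv w) z + deriv (deriv f) (θ₀ z) * w z = A z) ∧
        w 0 = 0) ↔
      (∫ z : ℝ, A z * deriv θ₀ z) = 0 := by
  obtain ⟨M, hM⟩ := hAbdd
  constructor
  · rintro ⟨w, hw, ⟨Mw, hMw⟩, hwode, -⟩
    exact forward_dir f θ₀ hf hf'm hf'p hθsm hode htop hbot hfeq hθ' hθ'pos
      A hA M hM w hw Mw hMw hwode
  · intro hint0
    exact backward_dir f θ₀ hf hf'm hf'p hf''m hf''p hfeq hfgt hθsm hode hzero
      htop hbot hθ' hθ'pos A hA M hM hint0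
end

section
/- Let A : ℝ → ℝ be continuous and bounded. If w₁, w₂ ∈ C²(ℝ) are both bounded on ℝ and satisfy −wᵢ''(z) + f''(θ₀(z)) wᵢ(z) = A(z) for all z ∈ ℝ and wᵢ(0) = 0 for i = 1,2, then w₁ = w₂. -/
open Filter Topology
open scoped ContDiff

/-- Uniqueness of bounded `C²` solutions of the linearized ODE
`−w'' + f''(θ₀) w = A` on `ℝ` with `w 0 = 0`. -/
theorem linearized_ODE_uniqueness
    (f : ℝ → ℝ) (hf : ContDiff ℝ (⊤ : ℕ∞) f)
    (hf'm : deriv f (-1) = 0) (hf'p : deriv f 1 = 0)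
    (hf''m : 0 < deriv (deriv f) (-1)) (hf''p : 0 < deriv (deriv f) 1)
    (hfeq : f (-1) = f 1)
    (hfgt : ∀ r ∈ Set.Ioo (-1 : ℝ) 1, f 1 < f r)
    (θ₀ : ℝ → ℝ) (hθsm : ContDiff ℝ (⊤ : ℕ∞) θ₀)
    (hode : ∀ z : ℝ, -deriv (deriv θ₀) z + deriv f (θ₀ z) = 0)
    (hzero : θ₀ 0 = 0)
    (htop : Tendsto θ₀ atTop (nhds 1)) (hbot : Tendsto θ₀ atBot (nhds (-1)))
    (hθ' : ∀ z : ℝ, deriv θ₀ z = Real.sqrt (2 * (f (θ₀ z) - f (-1))))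
    (hθ'pos : ∀ z : ℝ, 0 < deriv θ₀ z)
    (A : ℝ → ℝ) (hA : Continuous A) (hAbdd : ∃ M : ℝ, ∀ z : ℝ, |A z| ≤ M)
    (w₁ w₂ : ℝ → ℝ)
    (hw₁ : ContDiff ℝ 2 w₁) (hw₂ : ContDiff ℝ 2 w₂)
    (hb₁ : ∃ M : ℝ, ∀ z : ℝ, |w₁ z| ≤ M) (hb₂ : ∃ M : ℝ, ∀ z : ℝ, |w₂ z| ≤ M)
    (heq₁ : ∀ z : ℝ, -deriv (deriv w₁) z + deriv (deriv f) (θ₀ z) * w₁ z = A z)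
    (heq₂ : ∀ z : ℝ, -deriv (deriv w₂) z + deriv (deriv f) (θ₀ z) * w₂ z = A z)
    (h0₁ : w₁ 0 = 0) (h0₂ : w₂ 0 = 0) :
    w₁ = w₂ := by
  obtain ⟨M₁, hM₁⟩ := hb₁
  obtain ⟨M₂, hM₂⟩ := hb₂
  set φ : ℝ → ℝ := deriv θ₀ with hφdef
  set q : ℝ → ℝ := fun z => deriv (deriv f) (θ₀ z) with hqdef
  set w : ℝ → ℝ := fun z => w₁ z - w₂ z with hwdef
  -- smoothness bookkeeping
  have hθsm' : ContDiff ℝ ∞ θ₀ := hθsm.of_le (by simp)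
  have hfsm' : ContDiff ℝ ∞ f := hf.of_le (by simp)
  have hθd : Differentiable ℝ θ₀ := hθsm'.differentiable (by norm_num)
  have hφsm : ContDiff ℝ ∞ φ := (contDiff_infty_iff_deriv.mp hθsm').2
  have hφd : Differentiable ℝ φ := hφsm.differentiable (by norm_num)
  have hφ'd : Differentiable ℝ (deriv φ) :=
    ((contDiff_infty_iff_deriv.mp hφsm).2).differentiable (by norm_num)
  have hf1 : ContDiff ℝ ∞ (deriv f) := (contDiff_infty_iff_deriv.mp hfsm').2
  have hf2 : ContDiff ℝ ∞ (deriv (deriv f)) := (contDiff_infty_iff_deriv.mp hf1).2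
  have hw₁' : ContDiff ℝ (1 + 1) w₁ := by norm_num at hw₁ ⊢; exact hw₁
  have hw₂' : ContDiff ℝ (1 + 1) w₂ := by norm_num at hw₂ ⊢; exact hw₂
  have hw₁d : Differentiable ℝ w₁ := (contDiff_succ_iff_deriv.mp hw₁').1
  have hw₂d : Differentiable ℝ w₂ := (contDiff_succ_iff_deriv.mp hw₂').1
  have hw₁'d : Differentiable ℝ (deriv w₁) :=
    (contDiff_succ_iff_deriv.mp hw₁').2.2.differentiable one_ne_zero
  have hw₂'d : Differentiable ℝ (deriv w₂) :=
    (contDiff_succ_iff_deriv.mp hw₂').2.2.differentiable one_ne_zero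
  have hwd : Differentiable ℝ w := hw₁d.sub hw₂d
  have hdw : deriv w = fun z => deriv w₁ z - deriv w₂ z := by
    funext z
    exact deriv_sub (hw₁d z) (hw₂d z)
  have hdwd : Differentiable ℝ (deriv w) := by
    rw [hdw]; exact hw₁'d.sub hw₂'d
  -- second derivative of w
  have hw'' : ∀ z, deriv (deriv w) z = q z * w z := by
    intro z
    rw [hdw, deriv_fun_sub (hw₁'d z) (hw₂'d z)]
    have e1 := heq₁ z
    have e2 := heq₂ z
    simp only [hwdef, hqdef]
    linear_combination e2 - e1
  -- second derivative of φ
  have hode' : ∀ z, deriv φ z = deriv f (θ₀ z) := by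
    intro z; have := hode z; linarith
  have hφ'' : ∀ z, deriv (deriv φ) z = q z * φ z := by
    intro z
    have h1 : deriv φ = (deriv f) ∘ θ₀ := funext hode'
    rw [h1, deriv_comp z ((hf1.differentiable (by norm_num)) (θ₀ z)) (hθd z)]
  -- the Wronskian is constant
  set W : ℝ → ℝ := fun z => deriv w z * φ z - w z * deriv φ z with hWdef
  have hWd : Differentiable ℝ W := (hdwd.mul hφd).sub (hwd.mul hφ'd)
  have hW' : ∀ z, deriv W z = 0 := by
    intro z
    rw [hWdef]
    rw [deriv_fun_sub (f := fun y => deriv w y * φ y) (g := fun y => w y * deriv φ y) ((hdwd z).mul (hφd z)) ((hwd z).mul (hφ'd z)),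
      deriv_fun_mul (hdwd z) (hφd z), deriv_fun_mul (hwd z) (hφ'd z), hw'' z, hφ'' z]
    ring
  have hWconst : ∀ z, W z = W 0 := fun z => is_const_of_deriv_eq_zero hWd hW' z 0
  -- bound on w
  set M : ℝ := M₁ + M₂ with hMdef
  have hwbdd : ∀ z, |w z| ≤ M := by
    intro z
    have : |w₁ z - w₂ z| ≤ |w₁ z| + |w₂ z| := abs_sub _ _
    have h1 := hM₁ z
    have h2 := hM₂ z
    simp only [hwdef]
    linarith
  -- φ and φ' tend to 0 at +∞
  have hφ0 : Tendsto φ atTop (nhds 0) := by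
    have h1 : Tendsto (fun z => f (θ₀ z)) atTop (nhds (f 1)) :=
      (hf.continuous.tendsto 1).comp htop
    have h2 : Tendsto (fun z => 2 * (f (θ₀ z) - f (-1))) atTop
        (nhds (2 * (f 1 - f (-1)))) := (h1.sub tendsto_const_nhds).const_mul 2
    have h3 : (2 : ℝ) * (f 1 - f (-1)) = 0 := by rw [hfeq]; ring
    rw [h3] at h2
    have h4 : Tendsto (fun z => Real.sqrt (2 * (f (θ₀ z) - f (-1)))) atTop
        (nhds (Real.sqrt 0)) := (Real.continuous_sqrt.tendsto 0).comp h2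
    rw [Real.sqrt_zero] at h4
    exact h4.congr fun z => (hθ' z).symm
  have hφ'0 : Tendsto (deriv φ) atTop (nhds 0) := by
    have h1 : Tendsto (fun z => deriv f (θ₀ z)) atTop (nhds (deriv f 1)) :=
      (hf1.continuous.tendsto 1).comp htop
    rw [hf'p] at h1
    exact h1.congr fun z => (hode' z).symm
  -- mean value points
  have hMVT : ∀ n : ℕ, ∃ z ∈ Set.Ioo (n : ℝ) (n + 1),
      deriv w z = (w (n + 1) - w n) / ((n + 1) - n) := by
    intro n
    exact exists_deriv_eq_slope w (by linarith : (n : ℝ) < n + 1)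
      (hwd.continuous.continuousOn) (hwd.differentiableOn)
  choose z hz hz' using hMVT
  have hzT : Tendsto z atTop atTop :=
    tendsto_atTop_mono (fun n => (hz n).1.le) tendsto_natCast_atTop_atTop
  have hdwz : ∀ n, |deriv w (z n)| ≤ 2 * M := by
    intro n
    rw [hz' n]
    have : ((n : ℝ) + 1) - n = 1 := by ring
    rw [this, div_one]
    have h1 := hwbdd ((n : ℝ) + 1)
    have h2 := hwbdd (n : ℝ)
    have := abs_sub (w ((n : ℝ) + 1)) (w (n : ℝ))
    linarith
  -- the Wronskian constant is zero
  have hWz0 : Tendsto (fun n => W (z n)) atTop (nhds 0) := by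
    have hb : ∀ n, ‖W (z n)‖ ≤ 2 * M * |φ (z n)| + M * |deriv φ (z n)| := by
      intro n
      have h1 : |deriv w (z n) * φ (z n)| ≤ 2 * M * |φ (z n)| := by
        rw [abs_mul]
        exact mul_le_mul_of_nonneg_right (hdwz n) (abs_nonneg _)
      have h2 : |w (z n) * deriv φ (z n)| ≤ M * |deriv φ (z n)| := by
        rw [abs_mul]
        exact mul_le_mul_of_nonneg_right (hwbdd (z n)) (abs_nonneg _)
      have := abs_sub (deriv w (z n) * φ (z n)) (w (z n) * deriv φ (z n))
      simp only [hWdef, Real.norm_eq_abs]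
      linarith
    have hlim : Tendsto (fun n => 2 * M * |φ (z n)| + M * |deriv φ (z n)|) atTop
        (nhds 0) := by
      have l1 : Tendsto (fun n => |φ (z n)|) atTop (nhds 0) := by
        simpa using (hφ0.comp hzT).abs
      have l2 : Tendsto (fun n => |deriv φ (z n)|) atTop (nhds 0) := by
        simpa using (hφ'0.comp hzT).abs
      have := (l1.const_mul (2 * M)).add (l2.const_mul M)
      simpa using this
    exact squeeze_zero_norm hb hlim
  have hc0 : W 0 = 0 := by
    have : Tendsto (fun _ : ℕ => W 0) atTop (nhds 0) :=
      hWz0.congr fun n => hWconst (z n)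
    exact tendsto_nhds_unique tendsto_const_nhds this
  have hW0 : ∀ t, W t = 0 := fun t => (hWconst t).trans hc0
  -- conclude via w / φ
  have hφne : ∀ t, φ t ≠ 0 := fun t => (hθ'pos t).ne'
  set g : ℝ → ℝ := fun t => w t / φ t with hgdef
  have hgd : Differentiable ℝ g := hwd.div hφd hφne
  have hg' : ∀ t, deriv g t = 0 := by
    intro t
    rw [hgdef]
    rw [deriv_fun_div (hwd t) (hφd t) (hφne t)]
    have := hW0 t
    simp only [hWdef] at this
    rw [show deriv w t * φ t - w t * deriv φ t = 0 from this, zero_div]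
  have hgconst : ∀ t, g t = g 0 := fun t => is_const_of_deriv_eq_zero hgd hg' t 0
  have hg0 : g 0 = 0 := by
    simp only [hgdef, hwdef, h0₁, h0₂, sub_self, zero_div]
  funext t
  have := (hgconst t).trans hg0
  simp only [hgdef, div_eq_zero_iff] at this
  have hwt : w t = 0 := this.resolve_right (hφne t)
  have : w₁ t - w₂ t = 0 := hwt
  linarith
end

section
/- Let A : ℝ → ℝ be continuous and bounded with ∫_ℝ A θ₀' dz = 0, let A⁺, A⁻ ∈ ℝ and β ∈ (0, √(min{f''(−1), f''(1)})), and suppose there is C > 0 with |A(z) − A⁺| ≤ C e^{−βz} for all z ≥ 0 and |A(z) − A⁻| ≤ C e^{βz} for all z ≤ 0. Then the unique bounded C² solution w of −w'' + f''(θ₀) w = A on ℝ with w(0) = 0 satisfies: for each l ∈ {0,1,2} there is C' > 0 such that |(d/dz)^l(w(z) − A⁺/f''(1))| ≤ C' e^{−βz} for all z ≥ 0 and |(d/dz)^l(w(z) − A⁻/f''(−1))| ≤ C' e^{βz} for all z ≤ 0. -/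
open Filter Topology MeasureTheory

set_option maxHeartbeats 1600000

section Helpers

lemma cd2_diff {f : ℝ → ℝ} (hf : ContDiff ℝ 2 f) : Differentiable ℝ f :=
  hf.differentiable (by norm_num)

lemma cd2_deriv {f : ℝ → ℝ} (hf : ContDiff ℝ 2 f) : ContDiff ℝ 1 (deriv f) := by
  have h2 : ContDiff ℝ ((1:WithTop ℕ∞)+1) f := by exact_mod_cast hf
  exact (contDiff_succ_iff_deriv.mp h2).2.2

lemma cd2_deriv_diff {f : ℝ → ℝ} (hf : ContDiff ℝ 2 f) : Differentiable ℝ (deriv f) :=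
  (cd2_deriv hf).differentiable (by norm_num)

lemma cd2_deriv2_cont {f : ℝ → ℝ} (hf : ContDiff ℝ 2 f) : Continuous (deriv (deriv f)) := by
  have h1 : ContDiff ℝ ((0:WithTop ℕ∞)+1) (deriv f) := by exact_mod_cast cd2_deriv hf
  exact ((contDiff_succ_iff_deriv.mp h1).2.2).continuous

lemma hasDerivAt_cexp (c k x : ℝ) :
    HasDerivAt (fun z => c * Real.exp (k * z)) (k * (c * Real.exp (k * x))) x := by
  have h : HasDerivAt (fun z : ℝ => k * z) k x := by
    simpa using (hasDerivAt_id x).const_mul k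
  have := (Real.hasDerivAt_exp (k*x)).comp x h
  have h2 := this.const_mul c
  refine h2.congr_deriv ?_; ring

lemma contDiff_cexp (c k : ℝ) : ContDiff ℝ 2 (fun z => c * Real.exp (k * z)) := by
  have : ContDiff ℝ 2 (fun z : ℝ => Real.exp (k * z)) :=
    (Real.contDiff_exp.of_le le_rfl).comp ((contDiff_const.mul contDiff_id).of_le le_rfl)
  exact contDiff_const.mul this

lemma deriv2_sub_cexp {u : ℝ → ℝ} (hu : ContDiff ℝ 2 u) (c k : ℝ) (x : ℝ) :
    deriv (deriv (fun z => u z - c * Real.exp (k * z))) x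
      = deriv (deriv u) x - k^2 * (c * Real.exp (k * x)) := by
  have hdh : deriv (fun z => u z - c * Real.exp (k*z))
      = fun x => deriv u x - (k*c) * Real.exp (k*x) := by
    funext y
    rw [deriv_fun_sub (cd2_diff hu y) (hasDerivAt_cexp c k y).differentiableAt,
      (hasDerivAt_cexp c k y).deriv]
    ring
  rw [hdh, deriv_fun_sub (cd2_deriv_diff hu x) (hasDerivAt_cexp (k*c) k x).differentiableAt,
    (hasDerivAt_cexp (k*c) k x).deriv]
  ring

lemma deriv2_sub_cexp' {u G : ℝ → ℝ} (hu : ContDiff ℝ 2 u) (c k : ℝ)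
    (hG : G = fun z => u z - c * Real.exp (k * z)) (x : ℝ) :
    deriv (deriv G) x = deriv (deriv u) x - k^2 * (c * Real.exp (k * x)) := by
  rw [hG]; exact deriv2_sub_cexp hu c k x

lemma deriv_comp_neg_fn {u : ℝ → ℝ} (hu : Differentiable ℝ u) :
    deriv (fun z => u (-z)) = fun z => -(deriv u (-z)) := by
  funext z
  have h : HasDerivAt (fun z => u (-z)) (deriv u (-z) * (-1)) z :=
    ((hu (-z)).hasDerivAt).comp z (hasDerivAt_neg z)
  rw [h.deriv]; ring

lemma deriv2_comp_neg {u : ℝ → ℝ} (hu : ContDiff ℝ 2 u) (z : ℝ) :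
    deriv (deriv (fun z => u (-z))) z = deriv (deriv u) (-z) := by
  rw [deriv_comp_neg_fn (cd2_diff hu)]
  have h1 : deriv (fun z => deriv u (-z)) z = -(deriv (deriv u) (-z)) := by
    rw [deriv_comp_neg_fn (cd2_deriv_diff hu)]
  calc deriv (fun z => -(deriv u (-z))) z = -(deriv (fun z => deriv u (-z)) z) := deriv.fun_neg
    _ = deriv (deriv u) (-z) := by rw [h1]; ring

/-- Maximum principle on a half line. -/
lemma halfline_mp {g : ℝ → ℝ} (hg : ContDiff ℝ 2 g) (a M q β : ℝ) (hβ : 0 ≤ β) (hq : β^2 < q)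
    (hbd : ∀ z, a ≤ z → g z ≤ M) (hga : g a ≤ 0)
    (hineq : ∀ z, a ≤ z → 0 < g z → q * g z ≤ deriv (deriv g) z) :
    ∀ z, a ≤ z → g z ≤ 0 := by
  have hqpos : 0 < (β^2 + q)/2 := by nlinarith [sq_nonneg β]
  set β' : ℝ := Real.sqrt ((β^2+q)/2) with hβ'def
  have hβ'pos : 0 < β' := Real.sqrt_pos.mpr hqpos
  have hβ'sq : β'^2 = (β^2+q)/2 := Real.sq_sqrt hqpos.le
  have hβ'ltq : β'^2 < q := by rw [hβ'sq]; linarith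
  have claim : ∀ ε : ℝ, 0 < ε → ∀ z, a ≤ z →
      g z ≤ (ε * Real.exp (-(β'*a))) * Real.exp (β' * z) := by
    intro ε hε
    set c : ℝ := ε * Real.exp (-(β'*a)) with hcdef
    have hcpos : 0 < c := mul_pos hε (Real.exp_pos _)
    set F : ℝ → ℝ := fun z => c * Real.exp (β' * z) with hFdef
    set h : ℝ → ℝ := fun z => g z - F z with hhdef
    have hFpos : ∀ z, 0 < F z := fun z => mul_pos hcpos (Real.exp_pos _)
    have hh : ContDiff ℝ 2 h := hg.sub (contDiff_cexp c β')
    have hha : h a < 0 := by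
      have : F a = ε := by
        simp only [hFdef, hcdef]
        rw [mul_assoc, ← Real.exp_add]; simp
      simp only [hhdef]; rw [this]; linarith
    have hFtop : Tendsto F atTop atTop := by
      apply Tendsto.const_mul_atTop hcpos
      exact Real.tendsto_exp_atTop.comp (Tendsto.const_mul_atTop hβ'pos tendsto_id)
    obtain ⟨b₀, hb₀⟩ := (hFtop.eventually_gt_atTop M).exists_forall_of_atTop
    set b : ℝ := max b₀ (a+1) with hbdef
    have hab : a < b := lt_of_lt_of_le (by linarith) (le_max_right _ _)
    have hhb : ∀ z, b ≤ z → h z < 0 := by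
      intro z hz
      have h1 : M < F z := hb₀ z (le_trans (le_max_left _ _) hz)
      have h2 : g z ≤ M := hbd z (by linarith)
      simp only [hhdef]; linarith
    suffices hle : ∀ z, a ≤ z → h z ≤ 0 by
      intro z hz; have := hle z hz; simp only [hhdef, hFdef] at this; linarith
    by_contra hcon
    push_neg at hcon
    obtain ⟨z₁, hz₁a, hz₁⟩ := hcon
    have hz₁b : z₁ < b := by
      by_contra hc; push_neg at hc; exact absurd (hhb z₁ hc) (by linarith)
    have hcont : Continuous h := hh.continuous
    obtain ⟨m, hm_mem, hm_max⟩ := isCompact_Icc.exists_isMaxOn (Set.nonempty_Icc.mpr hab.le)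
      hcont.continuousOn
    have hm_pos : 0 < h m := lt_of_lt_of_le hz₁ (hm_max ⟨hz₁a, hz₁b.le⟩)
    have ham : a < m := by
      rcases lt_or_eq_of_le hm_mem.1 with h1 | h1
      · exact h1
      · exfalso; rw [← h1] at hm_pos; linarith
    have hmb : m < b := by
      rcases lt_or_eq_of_le hm_mem.2 with h1 | h1
      · exact h1
      · exfalso; rw [h1] at hm_pos; linarith [hhb b le_rfl]
    have hloc : IsLocalMax h m := hm_max.isLocalMax (Icc_mem_nhds ham hmb)
    have hd0 : deriv h m = 0 := hloc.deriv_eq_zero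
    have hdh : deriv h = fun x => deriv g x - (β'*c) * Real.exp (β'*x) := by
      funext x
      rw [hhdef, deriv_fun_sub (cd2_diff hg x)
        (hasDerivAt_cexp c β' x).differentiableAt, (hasDerivAt_cexp c β' x).deriv]
      ring_nf
    have hdd : ∀ x, deriv (deriv h) x = deriv (deriv g) x - β'^2 * F x := by
      intro x
      rw [hdh, deriv_fun_sub ((cd2_deriv_diff hg) x) (hasDerivAt_cexp (β'*c) β' x).differentiableAt,
        (hasDerivAt_cexp (β'*c) β' x).deriv]
      simp only [hFdef]; ring
    have hgm_pos : 0 < g m := by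
      have := hFpos m; simp only [hhdef] at hm_pos; linarith
    have hddm : 0 < deriv (deriv h) m := by
      have h1 := hineq m ham.le hgm_pos
      have h2 : h m = g m - F m := rfl
      rw [hdd]
      have : q * h m + (q - β'^2) * F m ≤ deriv (deriv g) m - β'^2 * F m := by
        rw [h2]; linarith
      nlinarith [hFpos m, hm_pos]
    have hcont2 : Continuous (deriv (deriv h)) := cd2_deriv2_cont hh
    have hev : ∀ᶠ x in 𝓝 m, 0 < deriv (deriv h) x :=
      hcont2.continuousAt.preimage_mem_nhds (Ioi_mem_nhds hddm)
    obtain ⟨δ, hδpos, hδ⟩ := Metric.eventually_nhds_iff.mp hev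
    set δ' : ℝ := min (δ/2) ((b - m)/2) with hδ'def
    have hδ'pos : 0 < δ' := lt_min (by linarith) (by linarith)
    have hsub : ∀ x ∈ Set.Icc m (m+δ'), dist x m < δ := by
      intro x hx
      rw [Real.dist_eq, abs_lt]
      constructor
      · linarith [hx.1]
      · have := hx.2
        have : x - m ≤ δ' := by linarith
        have h3 : δ' ≤ δ/2 := min_le_left _ _
        linarith
    have hdmono : StrictMonoOn (deriv h) (Set.Icc m (m+δ')) := by
      apply strictMonoOn_of_deriv_pos (convex_Icc _ _)
        (cd2_deriv_diff hh).continuous.continuousOn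
      intro x hx
      rw [interior_Icc] at hx
      exact hδ (hsub x ⟨hx.1.le, hx.2.le⟩)
    have hd_pos : ∀ x ∈ Set.Ioc m (m+δ'), 0 < deriv h x := by
      intro x hx
      have := hdmono (Set.left_mem_Icc.mpr (by linarith)) ⟨hx.1.le, hx.2⟩ hx.1
      rw [hd0] at this; exact this
    have hhmono : StrictMonoOn h (Set.Icc m (m+δ')) := by
      apply strictMonoOn_of_deriv_pos (convex_Icc _ _) hcont.continuousOn
      intro x hx
      rw [interior_Icc] at hx
      exact hd_pos x ⟨hx.1, hx.2.le⟩
    have hlt : h m < h (m+δ') :=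
      hhmono (Set.left_mem_Icc.mpr (by linarith)) ⟨by linarith, le_rfl⟩ (by linarith)
    have hmem : m + δ' ∈ Set.Icc a b := by
      constructor
      · linarith
      · have : δ' ≤ (b-m)/2 := min_le_right _ _
        linarith
    exact absurd (hm_max hmem) (by simpa using hlt)
  intro z hz
  by_contra hcon
  push_neg at hcon
  set X : ℝ := Real.exp (-(β'*a)) * Real.exp (β'*z) with hXdef
  have hXpos : 0 < X := mul_pos (Real.exp_pos _) (Real.exp_pos _)
  have := claim (g z / (2*X)) (by positivity) z hz
  rw [mul_assoc, ← hXdef] at this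
  have h3 : g z / (2*X) * X = g z / 2 := by field_simp
  rw [h3] at this
  linarith

/-- Core decay lemma. -/
lemma core_decay {p g v : ℝ → ℝ} (hv : ContDiff ℝ 2 v) {Mv : ℝ} (hMv : ∀ z, |v z| ≤ Mv)
    (heq : ∀ z, 0 ≤ z → deriv (deriv v) z = p z * v z - g z)
    {β q C₂ R P : ℝ} (hβ : 0 < β) (hq : β^2 < q) (hR : 0 ≤ R)
    (hp : ∀ z, R ≤ z → q ≤ p z) (hgb : ∀ z, 0 ≤ z → |g z| ≤ C₂ * Real.exp (-β * z))
    (hP : ∀ z, 0 ≤ z → |p z| ≤ P) :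
    ∃ C' > (0:ℝ), ∀ z, 0 ≤ z → |v z| ≤ C' * Real.exp (-β*z) ∧
      |deriv v z| ≤ C' * Real.exp (-β*z) ∧ |deriv (deriv v) z| ≤ C' * Real.exp (-β*z) := by
  have hMv0 : 0 ≤ Mv := le_trans (abs_nonneg _) (hMv 0)
  have hC₂0 : 0 ≤ C₂ := by
    have := hgb 0 le_rfl
    have h2 : Real.exp (-β * 0) = 1 := by norm_num
    rw [h2, mul_one] at this
    exact le_trans (abs_nonneg _) this
  have hP0 : 0 ≤ P := le_trans (abs_nonneg _) (hP 0 le_rfl)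
  have hqβ : 0 < q - β^2 := by linarith
  set K : ℝ := Mv * Real.exp (β*R) + C₂/(q-β^2) with hKdef
  clear_value K
  have hK0 : 0 ≤ K := by rw [hKdef]; positivity
  have hKC : C₂ ≤ (q - β^2) * K := by
    have h7 : (q-β^2) * K = (q-β^2)*(Mv*Real.exp (β*R)) + C₂ := by
      rw [hKdef]; field_simp
    have h8 : 0 ≤ (q-β^2)*(Mv*Real.exp (β*R)) := by positivity
    linarith
  have key : ∀ u : ℝ → ℝ, ContDiff ℝ 2 u → (∀ z, |u z| ≤ Mv) →
      (∀ z, 0 ≤ z → ∃ gz : ℝ, |gz| ≤ C₂ * Real.exp (-β*z) ∧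
        deriv (deriv u) z = p z * u z - gz) →
      ∀ z, R ≤ z → u z ≤ K * Real.exp (-β*z) := by
    intro u hu hMu hequ
    set G : ℝ → ℝ := fun z => u z - K * Real.exp (-β*z) with hGdef
    clear_value G
    have hGcd : ContDiff ℝ 2 G := by rw [hGdef]; exact hu.sub (contDiff_cexp K (-β))
    have hmp := halfline_mp hGcd R Mv q β hβ.le hq
      (fun z _ => by
        have h1 := (abs_le.mp (hMu z)).2
        have h2 : 0 ≤ K * Real.exp (-β*z) := mul_nonneg hK0 (Real.exp_pos _).le
        simp only [hGdef]; linarith)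
      (by
        simp only [hGdef]
        have hexp : Real.exp (β*R) * Real.exp (-β*R) = 1 := by
          rw [← Real.exp_add]; norm_num
        have hKe : K * Real.exp (-β*R)
            = Mv * (Real.exp (β*R) * Real.exp (-β*R)) + C₂/(q-β^2) * Real.exp (-β*R) := by
          rw [hKdef]; ring
        rw [hexp, mul_one] at hKe
        have h1 := (abs_le.mp (hMu R)).2
        have h3 : 0 ≤ C₂/(q-β^2) * Real.exp (-β*R) :=
          mul_nonneg (div_nonneg hC₂0 hqβ.le) (Real.exp_pos _).le
        nlinarith [h1, h3, hKe])
      (by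
        intro z hz hGz
        obtain ⟨gz, hgz, hequz⟩ := hequ z (le_trans hR hz)
        set E : ℝ := Real.exp (-β*z) with hEdef
        have hE : 0 < E := Real.exp_pos _
        have hd2 : deriv (deriv G) z = deriv (deriv u) z - β^2 * (K * E) := by
          simp only [hGdef, hEdef]
          simpa using deriv2_sub_cexp hu K (-β) z
        have hGz' : G z = u z - K * E := by rw [hGdef, hEdef]
        have huz : K * E < u z := by
          rw [hGz'] at hGz; linarith
        have hupos : 0 < u z := lt_of_le_of_lt (mul_nonneg hK0 hE.le) huz
        have hpq := hp z hz
        have h5 : q * u z ≤ p z * u z := by nlinarith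
        have h6 : -(C₂ * E) ≤ -gz := by linarith [(abs_le.mp hgz).2]
        have step1 : q * u z - C₂ * E ≤ p z * u z - gz := by linarith
        have step2 : q * G z ≤ q * u z - C₂ * E - β^2 * (K*E) := by
          have e1 : q * G z = q * u z - q * (K * E) := by rw [hGz']; ring
          have e2 : C₂ * E ≤ ((q - β^2) * K) * E := mul_le_mul_of_nonneg_right hKC hE.le
          nlinarith [e1, e2]
        rw [hd2, hequz]
        linarith)
    intro z hz
    have := hmp z hz
    simp only [hGdef] at this
    linarith
  have hvR : ∀ z, R ≤ z → |v z| ≤ K * Real.exp (-β*z) := by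
    intro z hz
    have h1 := key v hv hMv (fun z hz => ⟨g z, hgb z hz, heq z hz⟩) z hz
    have h2 := key (fun z => -(v z)) hv.neg (fun z => by simpa using hMv z)
      (fun z hz => ⟨-(g z), by simpa using hgb z hz, by
        have e1 : deriv (fun z => -(v z)) = fun z => -(deriv v z) := funext fun y => deriv.fun_neg
        have hd : deriv (deriv (fun z => -(v z))) z = -(deriv (deriv v) z) := by
          rw [e1, deriv.fun_neg]
        rw [hd, heq z hz]; ring⟩) z hz
    have h2' : -(v z) ≤ K * Real.exp (-β*z) := h2
    rw [abs_le]; constructor <;> linarith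
  set C₀ : ℝ := (K + Mv) * Real.exp (β*R) + 1 with hC₀def
  clear_value C₀
  have hexpR1 : 1 ≤ Real.exp (β*R) := Real.one_le_exp (by positivity)
  have hKM0 : 0 ≤ K + Mv := by linarith
  have hC₀pos : 0 < C₀ := by nlinarith
  have hv0 : ∀ z, 0 ≤ z → |v z| ≤ C₀ * Real.exp (-β*z) := by
    intro z hz
    set E : ℝ := Real.exp (-β*z) with hEdef
    have hE : 0 < E := Real.exp_pos _
    rcases le_or_gt R z with h | h
    · have h1 := hvR z h
      have hKC₀ : K ≤ C₀ := by nlinarith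
      calc |v z| ≤ K * E := h1
        _ ≤ C₀ * E := mul_le_mul_of_nonneg_right hKC₀ hE.le
    · have h1 := hMv z
      have h2 : Real.exp (β*z) ≤ Real.exp (β*R) := Real.exp_le_exp.mpr (by nlinarith)
      have h3 : Real.exp (β*z) * E = 1 := by rw [hEdef, ← Real.exp_add]; norm_num
      have hMvb : Mv * Real.exp (β*z) ≤ C₀ := by
        have e1 : Mv * Real.exp (β*z) ≤ Mv * Real.exp (β*R) :=
          mul_le_mul_of_nonneg_left h2 hMv0
        have e2 : Mv * Real.exp (β*R) ≤ (K+Mv) * Real.exp (β*R) :=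
          mul_le_mul_of_nonneg_right (by linarith) (Real.exp_pos _).le
        linarith
      calc |v z| ≤ Mv := h1
        _ = Mv * Real.exp (β*z) * E := by rw [mul_assoc, h3, mul_one]
        _ ≤ C₀ * E := mul_le_mul_of_nonneg_right hMvb hE.le
  set C₃ : ℝ := P * C₀ + C₂ with hC₃def
  clear_value C₃
  have hC₃nn : 0 ≤ C₃ := by
    have : 0 ≤ P * C₀ := mul_nonneg hP0 hC₀pos.le
    simp only [hC₃def]; linarith
  have hv2 : ∀ z, 0 ≤ z → |deriv (deriv v) z| ≤ C₃ * Real.exp (-β*z) := by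
    intro z hz
    rw [heq z hz]
    have h1 : |p z * v z - g z| ≤ |p z| * |v z| + |g z| := by
      calc |p z * v z - g z| ≤ |p z * v z| + |g z| := abs_sub _ _
      _ = |p z| * |v z| + |g z| := by rw [abs_mul]
    have h2 : |p z| * |v z| ≤ P * (C₀ * Real.exp (-β*z)) :=
      mul_le_mul (hP z hz) (hv0 z hz) (abs_nonneg _) hP0
    have h3 := hgb z hz
    simp only [hC₃def]
    nlinarith
  set C₁ : ℝ := 2*C₀ + C₃ with hC₁def
  clear_value C₁
  have hv1 : ∀ z, 0 ≤ z → |deriv v z| ≤ C₁ * Real.exp (-β*z) := by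
    intro z hz
    obtain ⟨ξ, hξ, hξs⟩ := exists_hasDerivAt_eq_slope v (deriv v) (by linarith : z < z+1)
      hv.continuous.continuousOn (fun x _ => (cd2_diff hv x).hasDerivAt)
    obtain ⟨η, hη, hηs⟩ := exists_hasDerivAt_eq_slope (deriv v) (deriv (deriv v)) hξ.1
      (cd2_deriv_diff hv).continuous.continuousOn
      (fun x _ => (cd2_deriv_diff hv x).hasDerivAt)
    have hξz : 0 < ξ - z := by linarith [hξ.1]
    have hmul : deriv v ξ - deriv v z = deriv (deriv v) η * (ξ - z) := by
      rw [hηs]; field_simp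
    have hξval : deriv v ξ = v (z+1) - v z := by
      have e0 : z+1-z = (1:ℝ) := by ring
      rw [hξs, e0, div_one]
    have hE : 0 < Real.exp (-β*z) := Real.exp_pos _
    have e1 : |v (z+1)| ≤ C₀ * Real.exp (-β*(z+1)) := hv0 _ (by linarith)
    have e1' : Real.exp (-β*(z+1)) ≤ Real.exp (-β*z) := Real.exp_le_exp.mpr (by nlinarith)
    have e1'' : |v (z+1)| ≤ C₀ * Real.exp (-β*z) :=
      le_trans e1 (mul_le_mul_of_nonneg_left e1' hC₀pos.le)
    have e2 : |v z| ≤ C₀ * Real.exp (-β*z) := hv0 z hz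
    have e3 : |deriv (deriv v) η| ≤ C₃ * Real.exp (-β*η) := hv2 η (by linarith [hη.1])
    have e3' : Real.exp (-β*η) ≤ Real.exp (-β*z) := Real.exp_le_exp.mpr (by nlinarith [hη.1])
    have e4 : ξ - z ≤ 1 := by linarith [hξ.2]
    have e5a : |deriv (deriv v) η| * (ξ-z) ≤ (C₃ * Real.exp (-β*η)) * (ξ-z) :=
      mul_le_mul_of_nonneg_right e3 hξz.le
    have e5b : (C₃ * Real.exp (-β*η)) * (ξ-z) ≤ C₃ * Real.exp (-β*η) * 1 :=
      mul_le_mul_of_nonneg_left e4 (mul_nonneg hC₃nn (Real.exp_pos _).le)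
    have e5c : C₃ * Real.exp (-β*η) ≤ C₃ * Real.exp (-β*z) := mul_le_mul_of_nonneg_left e3' hC₃nn
    have e5 : |deriv (deriv v) η| * (ξ-z) ≤ C₃ * Real.exp (-β*z) := by linarith
    have habs : |deriv v z| ≤ |v (z+1) - v z| + |deriv (deriv v) η| * (ξ - z) := by
      have hder : deriv v z = (v (z+1) - v z) - deriv (deriv v) η * (ξ - z) := by
        rw [← hξval]; linarith
      rw [hder]
      have := abs_sub (v (z+1) - v z) (deriv (deriv v) η * (ξ - z))
      have h7 : |deriv (deriv v) η * (ξ - z)| = |deriv (deriv v) η| * (ξ - z) := by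
        rw [abs_mul, abs_of_pos hξz]
      linarith
    have htri : |v (z+1) - v z| ≤ |v (z+1)| + |v z| := abs_sub _ _
    simp only [hC₁def]
    linarith
  have hC₁nn : 0 ≤ C₁ := by simp only [hC₁def]; linarith
  refine ⟨C₀ + C₁ + C₃ + 1, by linarith, fun z hz => ?_⟩
  have hE : 0 < Real.exp (-β*z) := Real.exp_pos _
  refine ⟨le_trans (hv0 z hz) (mul_le_mul_of_nonneg_right (by linarith) hE.le),
    le_trans (hv1 z hz) (mul_le_mul_of_nonneg_right (by linarith) hE.le),
    le_trans (hv2 z hz) (mul_le_mul_of_nonneg_right (by linarith) hE.le)⟩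

end Helpers

/-- Exponential decay (with the asymptotic values `A⁺/f''(1)`, `A⁻/f''(−1)`)
of the bounded `C²` solution of the linearized ODE `−w'' + f''(θ₀) w = A`, `w 0 = 0`,
for data `A` decaying exponentially to `A⁺` (resp. `A⁻`) at `±∞`. -/
theorem linearized_ODE_decay
    (f : ℝ → ℝ) (hf : ContDiff ℝ (⊤ : ℕ∞) f)
    (hf'm : deriv f (-1) = 0) (hf'p : deriv f 1 = 0)
    (hf''m : 0 < deriv (deriv f) (-1)) (hf''p : 0 < deriv (deriv f) 1)
    (hfeq : f (-1) = f 1)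
    (hfgt : ∀ r ∈ Set.Ioo (-1 : ℝ) 1, f 1 < f r)
    (θ₀ : ℝ → ℝ) (hθsm : ContDiff ℝ (⊤ : ℕ∞) θ₀)
    (hode : ∀ z : ℝ, -deriv (deriv θ₀) z + deriv f (θ₀ z) = 0)
    (hzero : θ₀ 0 = 0)
    (htop : Tendsto θ₀ atTop (nhds 1)) (hbot : Tendsto θ₀ atBot (nhds (-1)))
    (hθ' : ∀ z : ℝ, deriv θ₀ z = Real.sqrt (2 * (f (θ₀ z) - f (-1))))
    (hθ'pos : ∀ z : ℝ, 0 < deriv θ₀ z)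
    (A : ℝ → ℝ) (hA : Continuous A) (hAbdd : ∃ M : ℝ, ∀ z : ℝ, |A z| ≤ M)
    (hAint : (∫ z : ℝ, A z * deriv θ₀ z) = 0)
    (Ap Am : ℝ) (β : ℝ) (hβ : 0 < β)
    (hβ' : β < Real.sqrt (min (deriv (deriv f) (-1)) (deriv (deriv f) 1)))
    (C : ℝ) (hC : 0 < C)
    (hAp : ∀ z : ℝ, 0 ≤ z → |A z - Ap| ≤ C * Real.exp (-β * z))
    (hAm : ∀ z : ℝ, z ≤ 0 → |A z - Am| ≤ C * Real.exp (β * z))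
    (w : ℝ → ℝ) (hw : ContDiff ℝ 2 w)
    (hwbdd : ∃ M : ℝ, ∀ z : ℝ, |w z| ≤ M)
    (hweq : ∀ z : ℝ, -deriv (deriv w) z + deriv (deriv f) (θ₀ z) * w z = A z)
    (hw0 : w 0 = 0) :
    ∀ l : ℕ, l ≤ 2 →
      ∃ C' > (0:ℝ),
        (∀ z : ℝ, 0 ≤ z →
          |iteratedDeriv l (fun y => w y - Ap / deriv (deriv f) 1) z|
            ≤ C' * Real.exp (-β * z)) ∧
        (∀ z : ℝ, z ≤ 0 →
          |iteratedDeriv l (fun y => w y - Am / deriv (deriv f) (-1)) z|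
            ≤ C' * Real.exp (β * z)) := by
  -- smoothness bookkeeping
  have hf3 : ContDiff ℝ 3 f := hf.of_le (WithTop.coe_le_coe.mpr le_top)
  have hf'2 : ContDiff ℝ 2 (deriv f) := by
    have h3 : ContDiff ℝ ((2:WithTop ℕ∞)+1) f := by exact_mod_cast hf3
    exact (contDiff_succ_iff_deriv.mp h3).2.2
  have hf'd : Differentiable ℝ (deriv f) := cd2_diff hf'2
  have hDd : Differentiable ℝ (deriv (deriv f)) := cd2_deriv_diff hf'2
  have hDc : Continuous (deriv (deriv f)) := hDd.continuous
  have hD'c : Continuous (deriv (deriv (deriv f))) := cd2_deriv2_cont hf'2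
  have hθ2 : ContDiff ℝ 2 θ₀ := hθsm.of_le (WithTop.coe_le_coe.mpr le_top)
  have hθode : ∀ z, deriv (deriv θ₀) z = deriv f (θ₀ z) := fun z => by linarith [hode z]
  have hwode : ∀ z, deriv (deriv w) z = deriv (deriv f) (θ₀ z) * w z - A z := fun z => by
    linarith [hweq z]
  -- range of θ₀
  have hmono : StrictMono θ₀ := strictMono_of_deriv_pos hθ'pos
  have hlt1 : ∀ z, θ₀ z < 1 := fun z =>
    lt_of_lt_of_le (hmono (lt_add_one z)) (hmono.monotone.ge_of_tendsto htop (z+1))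
  have hgt : ∀ z, -1 < θ₀ z := fun z =>
    lt_of_le_of_lt (hmono.monotone.le_of_tendsto hbot (z-1)) (hmono (by linarith))
  have hmem : ∀ x, θ₀ x ∈ Set.Icc (-1:ℝ) 1 := fun x => ⟨(hgt x).le, (hlt1 x).le⟩
  -- the spectral gap constant q
  have hmpos : 0 < min (deriv (deriv f) (-1)) (deriv (deriv f) 1) := lt_min hf''m hf''p
  have hβ2m : β^2 < min (deriv (deriv f) (-1)) (deriv (deriv f) 1) :=
    (Real.lt_sqrt hβ.le).mp hβ'
  set q : ℝ := (β^2 + min (deriv (deriv f) (-1)) (deriv (deriv f) 1))/2 with hqdef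
  have hq1 : β^2 < q := by rw [hqdef]; linarith
  have hqm : q < min (deriv (deriv f) (-1)) (deriv (deriv f) 1) := by rw [hqdef]; linarith
  clear_value q
  have hqm1 : q < deriv (deriv f) (-1) := lt_of_lt_of_le hqm (min_le_left _ _)
  have hqp1 : q < deriv (deriv f) 1 := lt_of_lt_of_le hqm (min_le_right _ _)
  have hqpos : 0 < q := lt_of_le_of_lt (sq_nonneg β) hq1
  -- δ such that f'' ≥ q near ±1
  obtain ⟨δ₁, hδ₁pos, hδ₁⟩ := Metric.continuousAt_iff.mp (hDc.continuousAt (x := 1))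
    (deriv (deriv f) 1 - q) (by linarith)
  obtain ⟨δ₂, hδ₂pos, hδ₂⟩ := Metric.continuousAt_iff.mp (hDc.continuousAt (x := -1))
    (deriv (deriv f) (-1) - q) (by linarith)
  set δ : ℝ := min δ₁ δ₂ / 2 with hδdef
  have hδpos : 0 < δ := by
    have := lt_min hδ₁pos hδ₂pos; rw [hδdef]; linarith
  have hδδ₁ : δ < δ₁ := by
    have h1 : min δ₁ δ₂ ≤ δ₁ := min_le_left _ _
    rw [hδdef]; linarith
  have hδδ₂ : δ < δ₂ := by
    have h1 : min δ₁ δ₂ ≤ δ₂ := min_le_right _ _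
    rw [hδdef]; linarith
  clear_value δ
  have hDq1 : ∀ r : ℝ, |r - 1| ≤ δ → q ≤ deriv (deriv f) r := by
    intro r hr
    have h := hδ₁ (show dist r 1 < δ₁ by rw [Real.dist_eq]; linarith)
    rw [Real.dist_eq] at h
    have := (abs_lt.mp h).1
    linarith
  have hDqm : ∀ r : ℝ, |r + 1| ≤ δ → q ≤ deriv (deriv f) r := by
    intro r hr
    have h := hδ₂ (show dist r (-1) < δ₂ by rw [Real.dist_eq, sub_neg_eq_add]; linarith)
    rw [Real.dist_eq] at h
    have := (abs_lt.mp h).1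
    linarith
  -- R beyond which θ₀ is δ-close to ±1
  obtain ⟨R₁, hR₁⟩ := eventually_atTop.mp (htop.eventually (Metric.ball_mem_nhds (1:ℝ) hδpos))
  obtain ⟨R₂, hR₂⟩ := eventually_atBot.mp (hbot.eventually (Metric.ball_mem_nhds (-1:ℝ) hδpos))
  set R : ℝ := max (max R₁ (-R₂)) 0 with hRdef
  have hR0 : 0 ≤ R := le_max_right _ _
  have hRtop : ∀ z, R ≤ z → |θ₀ z - 1| ≤ δ := by
    intro z hz
    have h1 : R₁ ≤ z := le_trans (le_trans (le_max_left _ _) (le_max_left _ _)) hz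
    have := hR₁ z h1
    rw [Real.dist_eq] at this
    linarith
  have hRbot : ∀ z, R ≤ z → |θ₀ (-z) + 1| ≤ δ := by
    intro z hz
    have h1 : -z ≤ R₂ := by
      have : -R₂ ≤ R := le_trans (le_max_right _ _) (le_max_left _ _)
      linarith
    have := hR₂ (-z) h1
    rw [Real.dist_eq, sub_neg_eq_add] at this
    linarith
  clear_value R
  -- monotone inequalities for f' near ±1
  have key1 : ∀ r : ℝ, 1-δ ≤ r → r ≤ 1 → q*(1-r) ≤ deriv f 1 - deriv f r := by
    intro r h1 h2
    set φ : ℝ → ℝ := fun s => deriv f 1 - deriv f s - q + q*s with hφ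
    have hφd : ∀ x, HasDerivAt φ (q - deriv (deriv f) x) x := by
      intro x
      have h3 : HasDerivAt (deriv f) (deriv (deriv f) x) x := (hf'd x).hasDerivAt
      have h4 : HasDerivAt (fun s : ℝ => q * s) q x := by
        simpa using (hasDerivAt_id x).const_mul q
      have h5 := (((hasDerivAt_const x (deriv f 1)).sub h3).sub (hasDerivAt_const x q)).add h4
      refine h5.congr_deriv ?_
      ring
    have hanti : AntitoneOn φ (Set.Icc (1-δ) 1) := by
      apply antitoneOn_of_deriv_nonpos (convex_Icc _ _)
      · exact (Differentiable.continuous (fun x => (hφd x).differentiableAt)).continuousOn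
      · intro x _
        exact ((hφd x).differentiableAt).differentiableWithinAt
      · intro x hx
        rw [interior_Icc] at hx
        rw [(hφd x).deriv]
        have h6 : q ≤ deriv (deriv f) x := by
          apply hDq1
          rw [abs_le]
          constructor
          · linarith [hx.1]
          · linarith [hx.2]
        linarith
    have h5 := hanti ⟨h1, h2⟩ (Set.right_mem_Icc.mpr (by linarith)) h2
    simp only [hφ] at h5
    linarith
  have key2 : ∀ r : ℝ, -1 ≤ r → r ≤ -1+δ → q*(r+1) ≤ deriv f r - deriv f (-1) := by
    intro r h1 h2
    set ψ : ℝ → ℝ := fun s => deriv f s - deriv f (-1) - q*s - q with hψ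
    have hψd : ∀ x, HasDerivAt ψ (deriv (deriv f) x - q) x := by
      intro x
      have h3 : HasDerivAt (deriv f) (deriv (deriv f) x) x := (hf'd x).hasDerivAt
      have h4 : HasDerivAt (fun s : ℝ => q * s) q x := by
        simpa using (hasDerivAt_id x).const_mul q
      have h5 := ((h3.sub (hasDerivAt_const x (deriv f (-1)))).sub h4).sub
        (hasDerivAt_const x q)
      refine h5.congr_deriv ?_
      ring
    have hmon : MonotoneOn ψ (Set.Icc (-1:ℝ) (-1+δ)) := by
      apply monotoneOn_of_deriv_nonneg (convex_Icc _ _)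
      · exact (Differentiable.continuous (fun x => (hψd x).differentiableAt)).continuousOn
      · intro x _
        exact ((hψd x).differentiableAt).differentiableWithinAt
      · intro x hx
        rw [interior_Icc] at hx
        rw [(hψd x).deriv]
        have h6 : q ≤ deriv (deriv f) x := by
          apply hDqm
          rw [abs_le]
          constructor
          · linarith [hx.1]
          · linarith [hx.2]
        linarith
    have h5 := hmon (Set.left_mem_Icc.mpr (by linarith)) ⟨h1, h2⟩ h1
    simp only [hψ] at h5
    linarith
  -- exponential decay of θ₀ toward ±1
  have hθdecR : ∀ z, R ≤ z → 1 - θ₀ z ≤ (2*Real.exp (β*R)) * Real.exp (-β*z) := by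
    set Gθ : ℝ → ℝ := fun z => (1 - θ₀ z) - (2*Real.exp (β*R)) * Real.exp (-β*z) with hGθ
    clear_value Gθ
    have hu2 : ContDiff ℝ 2 (fun z => 1 - θ₀ z) := contDiff_const.sub hθ2
    have hGc : ContDiff ℝ 2 Gθ := by
      rw [hGθ]; exact hu2.sub (contDiff_cexp _ (-β))
    have hdd : ∀ x, deriv (deriv Gθ) x
        = -(deriv (deriv θ₀) x) - β^2*((2*Real.exp (β*R))*Real.exp (-β*x)) := by
      intro x
      have h1 := deriv2_sub_cexp' (u := fun z => 1 - θ₀ z) hu2 (2*Real.exp (β*R)) (-β) hGθ x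
      have e1 : deriv (fun z => (1:ℝ) - θ₀ z) = fun z => -(deriv θ₀ z) :=
        funext fun y => deriv_const_sub _
      have e2 : deriv (deriv (fun z => (1:ℝ) - θ₀ z)) x = -(deriv (deriv θ₀) x) := by
        rw [e1, deriv.fun_neg]
      rw [h1, e2]
      ring_nf
    have hmp := halfline_mp hGc R 2 q β hβ.le hq1
      (fun z _ => by
        have h1 := hgt z
        have h2 : 0 ≤ (2*Real.exp (β*R)) * Real.exp (-β*z) := by positivity
        simp only [hGθ]; linarith)
      (by
        simp only [hGθ]
        have hexp : Real.exp (β*R) * Real.exp (-β*R) = 1 := by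
          rw [← Real.exp_add]; norm_num
        have h1 := hlt1 R
        have h2 := hgt R
        nlinarith [hexp])
      (by
        intro z hz hGz
        have hθz : |θ₀ z - 1| ≤ δ := hRtop z hz
        have h1 : 1 - δ ≤ θ₀ z := by
          have := (abs_le.mp hθz).1; linarith
        have hkey := key1 (θ₀ z) h1 (hlt1 z).le
        rw [hf'p] at hkey
        have hE : 0 < Real.exp (-β*z) := Real.exp_pos _
        have hGval : Gθ z = (1 - θ₀ z) - (2*Real.exp (β*R)) * Real.exp (-β*z) := by
          rw [hGθ]
        rw [hdd z, hθode z]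
        have hc0 : 0 < 2*Real.exp (β*R) := by positivity
        have hce : 0 < (2*Real.exp (β*R)) * Real.exp (-β*z) := by positivity
        nlinarith [hGz, hGval, hkey])
    intro z hz
    have := hmp z hz
    simp only [hGθ] at this
    linarith
  have hθR : ∀ z, 0 ≤ z → 1 - θ₀ z ≤ (2*Real.exp (β*R)) * Real.exp (-β*z) := by
    intro z hz
    rcases le_or_gt R z with h | h
    · exact hθdecR z h
    · have h1 := hgt z
      have h2 : Real.exp (β*z) ≤ Real.exp (β*R) := Real.exp_le_exp.mpr (by nlinarith)
      have h3 : Real.exp (β*z) * Real.exp (-β*z) = 1 := by rw [← Real.exp_add]; norm_num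
      have h4 : 1 ≤ Real.exp (β*R) * Real.exp (-β*z) := by
        calc (1:ℝ) = Real.exp (β*z) * Real.exp (-β*z) := h3.symm
          _ ≤ Real.exp (β*R) * Real.exp (-β*z) :=
            mul_le_mul_of_nonneg_right h2 (Real.exp_pos _).le
      nlinarith [hlt1 z]
  -- exponential decay of θ₀ toward -1 (left side, reflected)
  have hθdecL : ∀ z, R ≤ z → θ₀ (-z) + 1 ≤ (2*Real.exp (β*R)) * Real.exp (-β*z) := by
    set Gm : ℝ → ℝ := fun z => (θ₀ (-z) + 1) - (2*Real.exp (β*R)) * Real.exp (-β*z) with hGm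
    clear_value Gm
    have hu2 : ContDiff ℝ 2 (fun z => θ₀ (-z) + 1) :=
      (hθ2.comp (contDiff_id.neg)).add contDiff_const
    have hGc : ContDiff ℝ 2 Gm := by
      rw [hGm]; exact hu2.sub (contDiff_cexp _ (-β))
    have hu2d : ∀ x, deriv (deriv (fun z => θ₀ (-z) + 1)) x = deriv f (θ₀ (-x)) := by
      intro x
      have e1 : deriv (fun z => θ₀ (-z) + 1) = deriv (fun z => θ₀ (-z)) :=
        funext fun y => deriv_add_const _
      rw [e1, deriv2_comp_neg hθ2 x, hθode (-x)]
    have hdd : ∀ x, deriv (deriv Gm) x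
        = deriv f (θ₀ (-x)) - β^2*((2*Real.exp (β*R))*Real.exp (-β*x)) := by
      intro x
      have h1 := deriv2_sub_cexp' (u := fun z => θ₀ (-z) + 1) hu2 (2*Real.exp (β*R)) (-β) hGm x
      rw [h1, hu2d x]
      ring_nf
    have hmp := halfline_mp hGc R 2 q β hβ.le hq1
      (fun z _ => by
        have h1 := hlt1 (-z)
        have h2 : 0 ≤ (2*Real.exp (β*R)) * Real.exp (-β*z) := by positivity
        simp only [hGm]; linarith)
      (by
        simp only [hGm]
        have hexp : Real.exp (β*R) * Real.exp (-β*R) = 1 := by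
          rw [← Real.exp_add]; norm_num
        have h1 := hlt1 (-R)
        have h2 := hgt (-R)
        nlinarith [hexp])
      (by
        intro z hz hGz
        have hθz : |θ₀ (-z) + 1| ≤ δ := hRbot z hz
        have h1 : θ₀ (-z) ≤ -1 + δ := by
          have := (abs_le.mp hθz).2; linarith
        have hkey := key2 (θ₀ (-z)) (hgt _).le h1
        rw [hf'm] at hkey
        have hE : 0 < Real.exp (-β*z) := Real.exp_pos _
        have hGval : Gm z = (θ₀ (-z) + 1) - (2*Real.exp (β*R)) * Real.exp (-β*z) := by
          rw [hGm]
        rw [hdd z]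
        have hce : 0 < (2*Real.exp (β*R)) * Real.exp (-β*z) := by positivity
        nlinarith [hGz, hGval, hkey])
    intro z hz
    have := hmp z hz
    simp only [hGm] at this
    linarith
  have hθL : ∀ z, 0 ≤ z → θ₀ (-z) + 1 ≤ (2*Real.exp (β*R)) * Real.exp (-β*z) := by
    intro z hz
    rcases le_or_gt R z with h | h
    · exact hθdecL z h
    · have h2 : Real.exp (β*z) ≤ Real.exp (β*R) := Real.exp_le_exp.mpr (by nlinarith)
      have h3 : Real.exp (β*z) * Real.exp (-β*z) = 1 := by rw [← Real.exp_add]; norm_num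
      have h4 : 1 ≤ Real.exp (β*R) * Real.exp (-β*z) := by
        calc (1:ℝ) = Real.exp (β*z) * Real.exp (-β*z) := h3.symm
          _ ≤ Real.exp (β*R) * Real.exp (-β*z) :=
            mul_le_mul_of_nonneg_right h2 (Real.exp_pos _).le
      nlinarith [hlt1 (-z)]
  -- Lipschitz bound for f'' on [-1,1] and sup bound
  obtain ⟨L₀, hL₀⟩ := (isCompact_Icc (a := (-1:ℝ)) (b := 1)).exists_bound_of_continuousOn
    hD'c.continuousOn
  have hL0 : (0:ℝ) ≤ max L₀ 0 := le_max_right _ _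
  have hLip : ∀ x ∈ Set.Icc (-1:ℝ) 1, ∀ y ∈ Set.Icc (-1:ℝ) 1,
      |deriv (deriv f) y - deriv (deriv f) x| ≤ (max L₀ 0) * |y - x| := by
    intro x hx y hy
    have h1 := Convex.norm_image_sub_le_of_norm_deriv_le (f := deriv (deriv f)) (C := max L₀ 0)
      (fun u _ => hDd u)
      (fun u hu => le_trans (hL₀ u hu) (le_max_left _ _)) (convex_Icc _ _) hx hy
    simpa [Real.norm_eq_abs] using h1
  obtain ⟨P₀, hP₀⟩ := (isCompact_Icc (a := (-1:ℝ)) (b := 1)).exists_bound_of_continuousOn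
    hDc.continuousOn
  obtain ⟨Mw, hMw⟩ := hwbdd
  have hD1ne : deriv (deriv f) 1 ≠ 0 := ne_of_gt hf''p
  have hDmne : deriv (deriv f) (-1) ≠ 0 := ne_of_gt hf''m
  have hc1 : deriv (deriv f) 1 * (Ap / deriv (deriv f) 1) = Ap := mul_div_cancel₀ Ap hD1ne
  have hcm : deriv (deriv f) (-1) * (Am / deriv (deriv f) (-1)) = Am := mul_div_cancel₀ Am hDmne
  -- right-hand application of the core lemma
  have hinR : deriv (fun y => w y - Ap / deriv (deriv f) 1) = deriv w :=
    funext fun x => deriv_sub_const _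
  have heqR : ∀ z : ℝ, 0 ≤ z → deriv (deriv (fun y => w y - Ap / deriv (deriv f) 1)) z
      = deriv (deriv f) (θ₀ z) * (w z - Ap / deriv (deriv f) 1)
        - ((A z - Ap) + (deriv (deriv f) 1 - deriv (deriv f) (θ₀ z)) * (Ap / deriv (deriv f) 1)) := by
    intro z _
    rw [hinR, hwode z]
    linear_combination hc1
  have hgR : ∀ z : ℝ, 0 ≤ z →
      |(A z - Ap) + (deriv (deriv f) 1 - deriv (deriv f) (θ₀ z)) * (Ap / deriv (deriv f) 1)|
        ≤ (C + (max L₀ 0)*(2*Real.exp (β*R))*|Ap / deriv (deriv f) 1|) * Real.exp (-β*z) := by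
    intro z hz
    have h1 := hAp z hz
    have h2 : |deriv (deriv f) 1 - deriv (deriv f) (θ₀ z)| ≤ (max L₀ 0) * (1 - θ₀ z) := by
      have h3 := hLip (θ₀ z) (hmem z) 1 ⟨by norm_num, le_rfl⟩
      have h4 : |1 - θ₀ z| = 1 - θ₀ z := abs_of_nonneg (by linarith [hlt1 z])
      rw [h4] at h3; exact h3
    have h3 := hθR z hz
    have h5 : |(deriv (deriv f) 1 - deriv (deriv f) (θ₀ z)) * (Ap / deriv (deriv f) 1)|
        ≤ ((max L₀ 0) * (1 - θ₀ z)) * |Ap / deriv (deriv f) 1| := by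
      rw [abs_mul]; exact mul_le_mul_of_nonneg_right h2 (abs_nonneg _)
    have h6 : ((max L₀ 0) * (1 - θ₀ z)) * |Ap / deriv (deriv f) 1|
        ≤ ((max L₀ 0) * ((2*Real.exp (β*R)) * Real.exp (-β*z))) * |Ap / deriv (deriv f) 1| :=
      mul_le_mul_of_nonneg_right (mul_le_mul_of_nonneg_left h3 hL0) (abs_nonneg _)
    have h7 := abs_add_le (A z - Ap)
      ((deriv (deriv f) 1 - deriv (deriv f) (θ₀ z)) * (Ap / deriv (deriv f) 1))
    have h8 : ((max L₀ 0) * ((2*Real.exp (β*R)) * Real.exp (-β*z))) * |Ap / deriv (deriv f) 1|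
        = ((max L₀ 0)*(2*Real.exp (β*R))*|Ap / deriv (deriv f) 1|) * Real.exp (-β*z) := by ring
    have h9 : (C + (max L₀ 0)*(2*Real.exp (β*R))*|Ap / deriv (deriv f) 1|) * Real.exp (-β*z)
        = C * Real.exp (-β*z)
          + ((max L₀ 0)*(2*Real.exp (β*R))*|Ap / deriv (deriv f) 1|) * Real.exp (-β*z) := by ring
    linarith
  obtain ⟨CR, hCRpos, hCR⟩ := core_decay
    (p := fun z => deriv (deriv f) (θ₀ z))
    (g := fun z => (A z - Ap) + (deriv (deriv f) 1 - deriv (deriv f) (θ₀ z)) * (Ap / deriv (deriv f) 1))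
    (v := fun y => w y - Ap / deriv (deriv f) 1)
    (hw.sub contDiff_const)
    (Mv := Mw + |Ap / deriv (deriv f) 1|)
    (fun z => le_trans (abs_sub _ _) (by linarith [hMw z]))
    heqR hβ hq1 hR0
    (fun z hz => hDq1 _ (hRtop z hz))
    hgR
    (P := P₀)
    (fun z _ => by simpa [Real.norm_eq_abs] using hP₀ _ (hmem z))
  -- left-hand application of the core lemma
  have hinL : deriv (fun y => w y - Am / deriv (deriv f) (-1)) = deriv w :=
    funext fun x => deriv_sub_const _
  have hd2L : ∀ x : ℝ, deriv (deriv (fun z => w (-z) - Am / deriv (deriv f) (-1))) x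
      = deriv (deriv w) (-x) := by
    intro x
    have h := deriv2_comp_neg (u := fun y => w y - Am / deriv (deriv f) (-1))
      (hw.sub contDiff_const) x
    have h2 : deriv (deriv (fun y => w y - Am / deriv (deriv f) (-1))) (-x)
        = deriv (deriv w) (-x) := by rw [hinL]
    exact h.trans h2
  have heqL : ∀ z : ℝ, 0 ≤ z → deriv (deriv (fun z => w (-z) - Am / deriv (deriv f) (-1))) z
      = deriv (deriv f) (θ₀ (-z)) * (w (-z) - Am / deriv (deriv f) (-1))
        - ((A (-z) - Am) + (deriv (deriv f) (-1) - deriv (deriv f) (θ₀ (-z))) * (Am / deriv (deriv f) (-1))) := by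
    intro z _
    rw [hd2L z, hwode (-z)]
    linear_combination hcm
  have hgL : ∀ z : ℝ, 0 ≤ z →
      |(A (-z) - Am) + (deriv (deriv f) (-1) - deriv (deriv f) (θ₀ (-z))) * (Am / deriv (deriv f) (-1))|
        ≤ (C + (max L₀ 0)*(2*Real.exp (β*R))*|Am / deriv (deriv f) (-1)|) * Real.exp (-β*z) := by
    intro z hz
    have h1 := hAm (-z) (by linarith)
    rw [show β * -z = -β*z by ring] at h1
    have h2 : |deriv (deriv f) (-1) - deriv (deriv f) (θ₀ (-z))| ≤ (max L₀ 0) * (θ₀ (-z) + 1) := by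
      have h3 := hLip (θ₀ (-z)) (hmem _) (-1) ⟨le_rfl, by norm_num⟩
      have h4 : |(-1:ℝ) - θ₀ (-z)| = θ₀ (-z) + 1 := by
        rw [abs_sub_comm, sub_neg_eq_add]
        exact abs_of_nonneg (by linarith [hgt (-z)])
      rw [h4] at h3; exact h3
    have h3 := hθL z hz
    have h5 : |(deriv (deriv f) (-1) - deriv (deriv f) (θ₀ (-z))) * (Am / deriv (deriv f) (-1))|
        ≤ ((max L₀ 0) * (θ₀ (-z) + 1)) * |Am / deriv (deriv f) (-1)| := by
      rw [abs_mul]; exact mul_le_mul_of_nonneg_right h2 (abs_nonneg _)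
    have h6 : ((max L₀ 0) * (θ₀ (-z) + 1)) * |Am / deriv (deriv f) (-1)|
        ≤ ((max L₀ 0) * ((2*Real.exp (β*R)) * Real.exp (-β*z))) * |Am / deriv (deriv f) (-1)| :=
      mul_le_mul_of_nonneg_right (mul_le_mul_of_nonneg_left h3 hL0) (abs_nonneg _)
    have h7 := abs_add_le (A (-z) - Am)
      ((deriv (deriv f) (-1) - deriv (deriv f) (θ₀ (-z))) * (Am / deriv (deriv f) (-1)))
    have h8 : ((max L₀ 0) * ((2*Real.exp (β*R)) * Real.exp (-β*z))) * |Am / deriv (deriv f) (-1)|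
        = ((max L₀ 0)*(2*Real.exp (β*R))*|Am / deriv (deriv f) (-1)|) * Real.exp (-β*z) := by ring
    have h9 : (C + (max L₀ 0)*(2*Real.exp (β*R))*|Am / deriv (deriv f) (-1)|) * Real.exp (-β*z)
        = C * Real.exp (-β*z)
          + ((max L₀ 0)*(2*Real.exp (β*R))*|Am / deriv (deriv f) (-1)|) * Real.exp (-β*z) := by ring
    linarith
  obtain ⟨CL, hCLpos, hCL⟩ := core_decay
    (p := fun z => deriv (deriv f) (θ₀ (-z)))
    (g := fun z => (A (-z) - Am) + (deriv (deriv f) (-1) - deriv (deriv f) (θ₀ (-z))) * (Am / deriv (deriv f) (-1)))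
    (v := fun z => w (-z) - Am / deriv (deriv f) (-1))
    ((hw.comp (contDiff_id.neg)).sub contDiff_const)
    (Mv := Mw + |Am / deriv (deriv f) (-1)|)
    (fun z => le_trans (abs_sub _ _) (by linarith [hMw (-z)]))
    heqL hβ hq1 hR0
    (fun z hz => hDqm _ (hRbot z hz))
    hgL
    (P := P₀)
    (fun z _ => by simpa [Real.norm_eq_abs] using hP₀ _ (hmem (-z)))
  -- conclusion
  intro l hl
  refine ⟨max CR CL, lt_of_lt_of_le hCRpos (le_max_left _ _), ?_⟩
  have hmaxR : CR ≤ max CR CL := le_max_left _ _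
  have hmaxL : CL ≤ max CR CL := le_max_right _ _
  interval_cases l
  · constructor
    · intro z hz
      rw [iteratedDeriv_zero]
      exact le_trans (hCR z hz).1
        (mul_le_mul_of_nonneg_right hmaxR (Real.exp_pos _).le)
    · intro z hz
      rw [iteratedDeriv_zero]
      have h := (hCL (-z) (by linarith)).1
      rw [neg_neg, show -β * -z = β*z by ring] at h
      exact le_trans h (mul_le_mul_of_nonneg_right hmaxL (Real.exp_pos _).le)
  · constructor
    · intro z hz
      rw [iteratedDeriv_one]
      exact le_trans (hCR z hz).2.1
        (mul_le_mul_of_nonneg_right hmaxR (Real.exp_pos _).le)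
    · intro z hz
      rw [iteratedDeriv_one]
      have h := (hCL (-z) (by linarith)).2.1
      have hdL : deriv (fun z => w (-z) - Am / deriv (deriv f) (-1))
          = fun x => -(deriv (fun y => w y - Am / deriv (deriv f) (-1)) (-x)) :=
        deriv_comp_neg_fn (cd2_diff (hw.sub contDiff_const))
      rw [hdL] at h
      simp only [neg_neg, abs_neg] at h
      rw [show -β * -z = β*z by ring] at h
      exact le_trans h (mul_le_mul_of_nonneg_right hmaxL (Real.exp_pos _).le)
  · constructor
    · intro z hz
      rw [iteratedDeriv_succ, iteratedDeriv_one]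
      exact le_trans (hCR z hz).2.2
        (mul_le_mul_of_nonneg_right hmaxR (Real.exp_pos _).le)
    · intro z hz
      rw [iteratedDeriv_succ, iteratedDeriv_one]
      have h := (hCL (-z) (by linarith)).2.2
      have h9 : deriv (deriv (fun z => w (-z) - Am / deriv (deriv f) (-1))) (-z)
          = deriv (deriv (fun y => w y - Am / deriv (deriv f) (-1))) z := by
        rw [deriv2_comp_neg (u := fun y => w y - Am / deriv (deriv f) (-1))
          (hw.sub contDiff_const) (-z), neg_neg]
      rw [h9, show -β * -z = β*z by ring] at h
      exact le_trans h (mul_le_mul_of_nonneg_right hmaxL (Real.exp_pos _).le)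
end
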